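/- arXiv:2101.08644 — 12 statements merged into one kernel-verified Lean document; each statement's English description precedes it below -/
import Mathlib

section
/- Let H be a permutation group on {1,…,n}, let Δ = {δ₁,…,δ_d} be a set of nonempty subsets of {1,…,n}, let Λ ⊇ Δ be a set of nonempty subsets of {1,…,n} with Λ \ Δ = {λ_{d+1},…,λ_e}. Suppose the chain of pointwise stabilizers H > H_{δ₁} > H_{δ₁,δ₂} > ⋯ > H_{δ₁,…,δ_d} > H_{δ₁,…,δ_d,λ_{d+1}} > ⋯ > H_{(Λ)} is strictly decreasing. If the partition P_Δ associated to Δ has r parts and the partition P_Λ associated to Λ has s parts, then |Λ| = e ≤ d + s − r. -/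
open Pointwise

/-- The parts of the partition of `Fin n` associated with a finite family `Δ` of subsets:
the equivalence classes of `x ∼ y ↔ ∀ δ ∈ Δ, (x ∈ δ ↔ y ∈ δ)`. -/
def parts {n : ℕ} (Δ : Finset (Finset (Fin n))) : Finset (Finset (Fin n)) :=
  Finset.univ.image (fun x : Fin n =>
    Finset.univ.filter (fun y : Fin n => ∀ δ ∈ Δ, (x ∈ δ ↔ y ∈ δ)))

/-- The pointwise stabilizer, inside the permutation group `H`, of the first `i` sets of
the sequence `f`. -/
def chainStab {n e : ℕ} (H : Subgroup (Equiv.Perm (Fin n))) (f : Fin e → Finset (Fin n))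
    (i : ℕ) : Subgroup (Equiv.Perm (Fin n)) :=
  H ⊓ ⨅ j : Fin e, ⨅ _ : (j : ℕ) < i, MulAction.stabilizer (Equiv.Perm (Fin n)) (f j)

namespace IrredAux

variable {n : ℕ}

/-- The class of `x` under the relation associated with `Δ`. -/
def cls (Δ : Finset (Finset (Fin n))) (x : Fin n) : Finset (Fin n) :=
  Finset.univ.filter (fun y : Fin n => ∀ δ ∈ Δ, (x ∈ δ ↔ y ∈ δ))

lemma mem_cls {Δ : Finset (Finset (Fin n))} {x y : Fin n} :
    y ∈ cls Δ x ↔ ∀ δ ∈ Δ, (x ∈ δ ↔ y ∈ δ) := by simp [cls]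

lemma self_mem_cls {Δ : Finset (Finset (Fin n))} (x : Fin n) : x ∈ cls Δ x :=
  mem_cls.2 fun _ _ => Iff.rfl

lemma parts_eq_image (Δ : Finset (Finset (Fin n))) :
    parts Δ = Finset.univ.image (cls Δ) := rfl

lemma cls_eq_of_mem {Δ : Finset (Finset (Fin n))} {x y : Fin n} (h : y ∈ cls Δ x) :
    cls Δ x = cls Δ y := by
  ext z
  simp only [mem_cls] at h ⊢
  constructor <;> intro hz δ hδ
  · exact (h δ hδ).symm.trans (hz δ hδ)
  · exact (h δ hδ).trans (hz δ hδ)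

lemma cls_subset_of_subset {Δ Δ' : Finset (Finset (Fin n))} (hsub : Δ ⊆ Δ') (x : Fin n) :
    cls Δ' x ⊆ cls Δ x := fun y hy => mem_cls.2 fun δ hδ => mem_cls.1 hy δ (hsub hδ)

lemma cls_eq_mono {Δ Δ' : Finset (Finset (Fin n))} (hsub : Δ ⊆ Δ') {x y : Fin n}
    (h : cls Δ' x = cls Δ' y) : cls Δ x = cls Δ y := by
  have hy : y ∈ cls Δ' x := h ▸ self_mem_cls y
  exact cls_eq_of_mem (cls_subset_of_subset hsub x hy)

noncomputable def pushPart (Δ : Finset (Finset (Fin n))) (b : Finset (Fin n)) :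
    Finset (Fin n) :=
  if h : b.Nonempty then cls Δ h.choose else ∅

lemma pushPart_cls {Δ Δ' : Finset (Finset (Fin n))} (hsub : Δ ⊆ Δ') (x : Fin n) :
    pushPart Δ (cls Δ' x) = cls Δ x := by
  have hne : (cls Δ' x).Nonempty := ⟨x, self_mem_cls x⟩
  rw [pushPart, dif_pos hne]
  exact (cls_eq_mono hsub (cls_eq_of_mem hne.choose_spec)).symm

lemma parts_image_pushPart {Δ Δ' : Finset (Finset (Fin n))} (hsub : Δ ⊆ Δ') :
    (parts Δ').image (pushPart Δ) = parts Δ := by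
  rw [parts_eq_image, parts_eq_image, Finset.image_image]
  apply Finset.image_congr
  intro x _
  exact pushPart_cls hsub x

lemma parts_card_mono {Δ Δ' : Finset (Finset (Fin n))} (hsub : Δ ⊆ Δ') :
    (parts Δ).card ≤ (parts Δ').card := by
  rw [← parts_image_pushPart hsub]
  exact Finset.card_image_le

lemma cls_eq_of_card_eq {Δ Δ' : Finset (Finset (Fin n))} (hsub : Δ ⊆ Δ')
    (hcard : (parts Δ).card = (parts Δ').card) (x : Fin n) :
    cls Δ x = cls Δ' x := by
  have hinj : Set.InjOn (pushPart Δ) (parts Δ') :=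
    Finset.injOn_of_card_image_eq (by rw [parts_image_pushPart hsub, hcard])
  apply Finset.Subset.antisymm
  · intro y hy
    have h1 : pushPart Δ (cls Δ' x) = pushPart Δ (cls Δ' y) := by
      rw [pushPart_cls hsub, pushPart_cls hsub]
      exact cls_eq_of_mem hy
    have hx' : cls Δ' x ∈ (parts Δ' : Set (Finset (Fin n))) := by
      rw [parts_eq_image]
      exact_mod_cast Finset.mem_image_of_mem (cls Δ') (Finset.mem_univ x)
    have hy' : cls Δ' y ∈ (parts Δ' : Set (Finset (Fin n))) := by
      rw [parts_eq_image]
      exact_mod_cast Finset.mem_image_of_mem (cls Δ') (Finset.mem_univ y)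
    have := hinj hx' hy' h1
    rw [this]
    exact self_mem_cls y
  · exact cls_subset_of_subset hsub x

lemma smul_eq_of_cls_eq {Δ Δ' : Finset (Finset (Fin n))}
    (hcls : ∀ x, cls Δ x = cls Δ' x) (g : Equiv.Perm (Fin n))
    (hg : ∀ δ ∈ Δ, g • δ = δ) {lam : Finset (Fin n)} (hlam : lam ∈ Δ') :
    g • lam = lam := by
  have key : ∀ x : Fin n, x ∈ lam ↔ g x ∈ lam := by
    intro x
    have hx : g x ∈ cls Δ x := by
      apply mem_cls.2
      intro δ hδ
      have h2 : x ∈ δ ↔ g • x ∈ g • δ := (Finset.smul_mem_smul_finset_iff g).symm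
      rw [hg δ hδ, Equiv.Perm.smul_def] at h2
      exact h2
    rw [hcls x] at hx
    exact mem_cls.1 hx lam hlam
  ext a
  rw [Finset.mem_smul_finset]
  constructor
  · rintro ⟨y, hy, rfl⟩
    rw [Equiv.Perm.smul_def]
    exact (key y).1 hy
  · intro ha
    refine ⟨g⁻¹ a, (key (g⁻¹ a)).2 (by simpa using ha), by simp [Equiv.Perm.smul_def]⟩

lemma mem_chainStab {e : ℕ} {H : Subgroup (Equiv.Perm (Fin n))} {f : Fin e → Finset (Fin n)}
    {i : ℕ} {g : Equiv.Perm (Fin n)} :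
    g ∈ chainStab H f i ↔ g ∈ H ∧ ∀ j : Fin e, (j : ℕ) < i → g • f j = f j := by
  simp [chainStab, Subgroup.mem_inf, Subgroup.mem_iInf, MulAction.mem_stabilizer_iff]

end IrredAux

open IrredAux in
/-- Lemma 2.1: if the chain of pointwise stabilizers along the sequence
`δ₁,…,δ_d,λ_{d+1},…,λ_e` (the first `d` terms forming `Δ`, the whole sequence forming `Λ`)
is strictly decreasing, `P_Δ` has `r` parts and `P_Λ` has `s` parts, then `e ≤ d + s - r`. -/
theorem irredundant_chain_length_le {n d e : ℕ} (H : Subgroup (Equiv.Perm (Fin n)))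
    (hde : d ≤ e) (f : Fin e → Finset (Fin n)) (hinj : Function.Injective f)
    (hne : ∀ j, (f j).Nonempty)
    (hchain : ∀ i < e, chainStab H f (i + 1) < chainStab H f i)
    (r s : ℕ)
    (hr : r = (parts ((Finset.univ.filter (fun j : Fin e => (j : ℕ) < d)).image f)).card)
    (hs : s = (parts (Finset.univ.image f)).card) :
    e ≤ d + s - r := by
  classical
  set D : ℕ → Finset (Finset (Fin n)) :=
    fun i => (Finset.univ.filter (fun j : Fin e => (j : ℕ) < i)).image f with hD
  have hsubD : ∀ i, D i ⊆ D (i + 1) := by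
    intro i
    apply Finset.image_subset_image
    intro j hj
    simp only [Finset.mem_filter] at hj ⊢
    exact ⟨hj.1, by omega⟩
  have hrD : r = (parts (D d)).card := hr
  have hsD : s = (parts (D e)).card := by
    have huniv : (Finset.univ.filter (fun j : Fin e => (j : ℕ) < e))
        = (Finset.univ : Finset (Fin e)) :=
      Finset.filter_true_of_mem (fun j _ => j.isLt)
    rw [hs]
    simp only [hD, huniv]
  have hstep : ∀ i < e, (parts (D i)).card < (parts (D (i + 1))).card := by
    intro i hie
    rcases lt_or_eq_of_le (parts_card_mono (hsubD i)) with h | h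
    · exact h
    · exfalso
      have hcls := fun x => cls_eq_of_card_eq (hsubD i) h x
      have hle : chainStab H f i ≤ chainStab H f (i + 1) := by
        intro g hg
        rw [mem_chainStab] at hg ⊢
        refine ⟨hg.1, fun j hj => ?_⟩
        apply smul_eq_of_cls_eq hcls g
        · intro δ hδ
          obtain ⟨j', hj', rfl⟩ := Finset.mem_image.mp hδ
          exact hg.2 j' (Finset.mem_filter.mp hj').2
        · exact Finset.mem_image_of_mem f (Finset.mem_filter.mpr ⟨Finset.mem_univ _, hj⟩)
      exact (hchain i hie).not_ge hle
  have key : ∀ k, d + k ≤ e → r + k ≤ (parts (D (d + k))).card := by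
    intro k
    induction k with
    | zero => intro _; simpa using hrD.le
    | succ k ih =>
      intro hk
      have h1 := ih (by omega)
      have h2 := hstep (d + k) (by omega)
      have h3 : d + (k + 1) = (d + k) + 1 := by omega
      rw [h3]
      omega
  have hfin := key (e - d) (by omega)
  rw [show d + (e - d) = e by omega] at hfin
  omega
end

section
/- Fix positive integers n, k with k ≤ n, let g = gcd(n,k), and let ω₁,…,ω_ℓ be k-subsets of {1,…,n}. For each i let P_i denote the partition of {1,…,n} associated with {ω₁,…,ω_i}. If P_{i+1} has exactly one more part than P_i for all i = 1,…,ℓ−1, then every part of P_ℓ has size divisible by g. -/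
open Pointwise

namespace PartsAux

variable {n : ℕ}

def cls (Δ : Finset (Finset (Fin n))) (x : Fin n) : Finset (Fin n) :=
  Finset.univ.filter (fun y : Fin n => ∀ δ ∈ Δ, (x ∈ δ ↔ y ∈ δ))

lemma mem_cls {Δ : Finset (Finset (Fin n))} {x y : Fin n} :
    y ∈ cls Δ x ↔ ∀ δ ∈ Δ, (x ∈ δ ↔ y ∈ δ) := by simp [cls]

lemma mem_cls_self (Δ : Finset (Finset (Fin n))) (x : Fin n) : x ∈ cls Δ x :=
  mem_cls.2 fun δ _ => Iff.rfl

lemma cls_eq_of_mem {Δ : Finset (Finset (Fin n))} {x y : Fin n} (h : y ∈ cls Δ x) :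
    cls Δ x = cls Δ y := by
  ext z
  simp only [mem_cls] at *
  constructor <;> intro hz δ hδ
  · exact ((h δ hδ).symm).trans (hz δ hδ)
  · exact (h δ hδ).trans (hz δ hδ)

lemma parts_def (Δ : Finset (Finset (Fin n))) : parts Δ = Finset.univ.image (cls Δ) := rfl

lemma mem_parts {Δ : Finset (Finset (Fin n))} {P : Finset (Fin n)} :
    P ∈ parts Δ ↔ ∃ x, cls Δ x = P := by
  simp [parts_def]

lemma cls_mem_parts (Δ : Finset (Finset (Fin n))) (x : Fin n) : cls Δ x ∈ parts Δ :=
  mem_parts.2 ⟨x, rfl⟩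

lemma parts_nonempty {Δ : Finset (Finset (Fin n))} {P : Finset (Fin n)} (h : P ∈ parts Δ) :
    P.Nonempty := by
  obtain ⟨x, rfl⟩ := mem_parts.1 h
  exact ⟨x, mem_cls_self Δ x⟩

lemma parts_disjoint {Δ : Finset (Finset (Fin n))} {P Q : Finset (Fin n)}
    (hP : P ∈ parts Δ) (hQ : Q ∈ parts Δ) (hne : P ≠ Q) : Disjoint P Q := by
  obtain ⟨x, rfl⟩ := mem_parts.1 hP
  obtain ⟨y, rfl⟩ := mem_parts.1 hQ
  rw [Finset.disjoint_left]
  intro z hzx hzy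
  exact hne ((cls_eq_of_mem hzx).trans (cls_eq_of_mem hzy).symm)

lemma cls_insert (Δ : Finset (Finset (Fin n))) (ω : Finset (Fin n)) (x : Fin n) :
    cls (insert ω Δ) x = if x ∈ ω then cls Δ x ∩ ω else cls Δ x \ ω := by
  by_cases hx : x ∈ ω <;> ext y <;>
    simp [mem_cls, Finset.mem_insert, hx, Finset.mem_inter, Finset.mem_sdiff] <;>
    aesop

lemma mem_parts_insert {Δ : Finset (Finset (Fin n))} {ω P : Finset (Fin n)} :
    P ∈ parts (insert ω Δ) ↔
      ∃ Q ∈ parts Δ, P.Nonempty ∧ (P = Q ∩ ω ∨ P = Q \ ω) := by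
  constructor
  · rintro hP
    obtain ⟨x, rfl⟩ := mem_parts.1 hP
    refine ⟨cls Δ x, cls_mem_parts Δ x, parts_nonempty hP, ?_⟩
    rw [cls_insert]
    by_cases hx : x ∈ ω <;> simp [hx]
  · rintro ⟨Q, hQ, hne, hPQ⟩
    obtain ⟨x0, rfl⟩ := mem_parts.1 hQ
    rcases hPQ with h | h
    · obtain ⟨z, hz⟩ := hne
      rw [h] at hz ⊢
      obtain ⟨hz1, hz2⟩ := Finset.mem_inter.1 hz
      refine mem_parts.2 ⟨z, ?_⟩
      rw [cls_insert, if_pos hz2, cls_eq_of_mem hz1]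
    · obtain ⟨z, hz⟩ := hne
      rw [h] at hz ⊢
      obtain ⟨hz1, hz2⟩ := Finset.mem_sdiff.1 hz
      refine mem_parts.2 ⟨z, ?_⟩
      rw [cls_insert, if_neg hz2, cls_eq_of_mem hz1]

def splits (Δ : Finset (Finset (Fin n))) (ω : Finset (Fin n)) : Finset (Finset (Fin n)) :=
  (parts Δ).filter (fun Q => (Q ∩ ω).Nonempty ∧ (Q \ ω).Nonempty)

lemma parts_insert_eq (Δ : Finset (Finset (Fin n))) (ω : Finset (Fin n)) :
    parts (insert ω Δ) =
      (parts Δ).biUnion (fun Q => ({Q ∩ ω, Q \ ω} : Finset (Finset (Fin n))).filter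
        (fun s => s.Nonempty)) := by
  ext P
  rw [mem_parts_insert]
  simp only [Finset.mem_biUnion, Finset.mem_filter, Finset.mem_insert, Finset.mem_singleton]
  aesop

lemma card_parts_insert (Δ : Finset (Finset (Fin n))) (ω : Finset (Fin n)) :
    (parts (insert ω Δ)).card = (parts Δ).card + (splits Δ ω).card := by
  rw [parts_insert_eq, Finset.card_biUnion]
  · have key : ∀ Q ∈ parts Δ,
        (({Q ∩ ω, Q \ ω} : Finset (Finset (Fin n))).filter (fun s => s.Nonempty)).card
          = 1 + (if (Q ∩ ω).Nonempty ∧ (Q \ ω).Nonempty then 1 else 0) := by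
      intro Q hQ
      have hQne := parts_nonempty hQ
      by_cases h1 : (Q ∩ ω).Nonempty <;> by_cases h2 : (Q \ ω).Nonempty
      · have hne : Q ∩ ω ≠ Q \ ω := by
          intro h
          obtain ⟨z, hz⟩ := h1
          rw [h] at hz
          exact (Finset.mem_sdiff.1 hz).2 (Finset.mem_inter.1 (h ▸ hz)).2
        rw [Finset.filter_true_of_mem ?_, if_pos ⟨h1, h2⟩, Finset.card_insert_of_notMem (by simp [hne]), Finset.card_singleton]
        · intro s hs
          rcases Finset.mem_insert.1 hs with rfl | hs
          · exact h1
          · rw [Finset.mem_singleton.1 hs]; exact h2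
      · rw [if_neg (by tauto)]
        rw [Finset.not_nonempty_iff_eq_empty] at h2
        rw [Finset.filter_insert, if_pos h1, Finset.filter_singleton, if_neg (by simp [h2])]
        simp
      · rw [if_neg (by tauto)]
        rw [Finset.not_nonempty_iff_eq_empty] at h1
        rw [Finset.filter_insert, if_neg (by simp [h1]), Finset.filter_singleton, if_pos h2]
        simp
      · exfalso
        rw [Finset.not_nonempty_iff_eq_empty] at h1 h2
        obtain ⟨z, hz⟩ := hQne
        by_cases hzω : z ∈ ω
        · exact absurd (Finset.mem_inter.2 ⟨hz, hzω⟩) (by simp [h1])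
        · exact absurd (Finset.mem_sdiff.2 ⟨hz, hzω⟩) (by simp [h2])
    rw [Finset.sum_congr rfl key, Finset.sum_add_distrib, Finset.sum_const, smul_eq_mul, mul_one]
    congr 1
    rw [splits, Finset.card_filter]
  · intro Q hQ Q' hQ' hne
    simp only [Finset.disjoint_left, Finset.mem_filter]
    rintro s ⟨hs, hsne⟩ ⟨hs', -⟩
    have hsub : s ⊆ Q := by
      rcases Finset.mem_insert.1 hs with rfl | hs
      · exact Finset.inter_subset_left
      · rw [Finset.mem_singleton.1 hs]; exact Finset.sdiff_subset
    have hsub' : s ⊆ Q' := by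
      rcases Finset.mem_insert.1 hs' with rfl | hs'
      · exact Finset.inter_subset_left
      · rw [Finset.mem_singleton.1 hs']; exact Finset.sdiff_subset
    obtain ⟨z, hz⟩ := hsne
    exact (Finset.disjoint_left.1 (parts_disjoint hQ hQ' hne)) (hsub hz) (hsub' hz)

lemma card_eq_sum_inter (Δ : Finset (Finset (Fin n))) (ω : Finset (Fin n)) :
    ω.card = ∑ Q ∈ parts Δ, (Q ∩ ω).card := by
  rw [← Finset.card_biUnion]
  · congr 1
    ext z
    simp only [Finset.mem_biUnion, Finset.mem_inter]
    constructor
    · intro hz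
      exact ⟨cls Δ z, cls_mem_parts Δ z, mem_cls_self Δ z, hz⟩
    · rintro ⟨Q, -, -, hz⟩; exact hz
  · intro Q hQ Q' hQ' hne
    exact (parts_disjoint hQ hQ' hne).mono Finset.inter_subset_left Finset.inter_subset_left

lemma step (g : ℕ) (Δ : Finset (Finset (Fin n))) (ω : Finset (Fin n))
    (hω : g ∣ ω.card)
    (hsplit : (splits Δ ω).card ≤ 1)
    (IH : ∀ Q ∈ parts Δ, g ∣ Q.card) :
    ∀ P ∈ parts (insert ω Δ), g ∣ P.card := by
  -- every non-split part contributes a multiple of g to the sum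
  have hnonsplit : ∀ Q ∈ parts Δ, Q ∉ splits Δ ω → g ∣ (Q ∩ ω).card := by
    intro Q hQ hns
    rw [splits, Finset.mem_filter, not_and, not_and] at hns
    by_cases h1 : (Q ∩ ω).Nonempty
    · have h2 := hns hQ h1
      rw [Finset.not_nonempty_iff_eq_empty, Finset.sdiff_eq_empty_iff_subset] at h2
      rw [Finset.inter_eq_left.2 h2]
      exact IH Q hQ
    · rw [Finset.not_nonempty_iff_eq_empty.1 h1]; simp
  have hsplitdvd : ∀ Q ∈ parts Δ, g ∣ (Q ∩ ω).card := by
    intro Q hQ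
    by_cases hQs : Q ∈ splits Δ ω
    · -- splits = {Q}
      have hsingle : splits Δ ω = {Q} := by
        apply Finset.eq_singleton_iff_unique_mem.2
        refine ⟨hQs, fun R hR => ?_⟩
        by_contra hne
        have : 2 ≤ (splits Δ ω).card := by
          have := Finset.one_lt_card.2 ⟨R, hR, Q, hQs, hne⟩
          omega
        omega
      have hsum := card_eq_sum_inter Δ ω
      rw [← Finset.sum_filter_add_sum_filter_not (parts Δ)
        (fun R => R ∈ splits Δ ω)] at hsum
      have hfilter : (parts Δ).filter (fun R => R ∈ splits Δ ω) = {Q} := by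
        rw [← hsingle]
        ext R
        simp only [Finset.mem_filter, splits]
        tauto
      rw [hfilter, Finset.sum_singleton] at hsum
      have hrest : g ∣ ∑ R ∈ (parts Δ).filter (fun R => R ∉ splits Δ ω), (R ∩ ω).card := by
        apply Finset.dvd_sum
        intro R hR
        rw [Finset.mem_filter] at hR
        exact hnonsplit R hR.1 hR.2
      have : g ∣ (Q ∩ ω).card + ∑ R ∈ (parts Δ).filter (fun R => R ∉ splits Δ ω), (R ∩ ω).card := hsum ▸ hω
      exact (Nat.dvd_add_right hrest).1 (by rwa [Nat.add_comm] at this)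
    · exact hnonsplit Q hQ hQs
  intro P hP
  obtain ⟨Q, hQ, hPne, hPQ⟩ := mem_parts_insert.1 hP
  have hdvdQ := IH Q hQ
  have hdvdI := hsplitdvd Q hQ
  have hdvdD : g ∣ (Q \ ω).card := by
    have hsum : (Q ∩ ω).card + (Q \ ω).card = Q.card := by
      rw [Finset.card_inter_add_card_sdiff]
    exact (Nat.dvd_add_right hdvdI).1 (hsum ▸ hdvdQ)
  rcases hPQ with rfl | rfl
  · exact hdvdI
  · exact hdvdD

lemma parts_empty (hn : 0 < n) : parts (∅ : Finset (Finset (Fin n))) = {Finset.univ} := by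
  have : cls (∅ : Finset (Finset (Fin n))) = fun _ => Finset.univ := by
    funext x
    ext y
    simp [mem_cls]
  rw [parts_def, this]
  have : (Finset.univ : Finset (Fin n)).Nonempty := ⟨⟨0, hn⟩, Finset.mem_univ _⟩
  rw [Finset.image_const this]

end PartsAux

/-- Lemma 2.2: if `ω₁,…,ω_ℓ` are `k`-subsets of `{1,…,n}` and, for `i = 1,…,ℓ-1`, the
partition associated with the first `i+1` sets has exactly one more part than the
partition associated with the first `i` sets, then every part of the final partition
has size divisible by `gcd(n,k)`. -/
theorem parts_size_dvd_gcd {n k ℓ : ℕ} (hn : 0 < n) (hk : 0 < k) (hkn : k ≤ n) (hl : 0 < ℓ)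
    (f : Fin ℓ → Finset (Fin n)) (hcard : ∀ i, (f i).card = k)
    (hstep : ∀ i, 1 ≤ i → i < ℓ →
      (parts ((Finset.univ.filter (fun j : Fin ℓ => (j : ℕ) < i + 1)).image f)).card =
        (parts ((Finset.univ.filter (fun j : Fin ℓ => (j : ℕ) < i)).image f)).card + 1) :
    ∀ P ∈ parts (Finset.univ.image f), Nat.gcd n k ∣ P.card := by
  classical
  have hgn : Nat.gcd n k ∣ n := Nat.gcd_dvd_left n k
  have hgk : Nat.gcd n k ∣ k := Nat.gcd_dvd_right n k
  have hDsucc : ∀ m (hm : m < ℓ),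
      (Finset.univ.filter (fun j : Fin ℓ => (j : ℕ) < m + 1)).image f
        = insert (f ⟨m, hm⟩)
          ((Finset.univ.filter (fun j : Fin ℓ => (j : ℕ) < m)).image f) := by
    intro m hm
    rw [← Finset.image_insert]
    congr 1
    ext j
    simp only [Finset.mem_insert, Finset.mem_filter, Finset.mem_univ, true_and, Fin.ext_iff]
    omega
  have key : ∀ m, m ≤ ℓ →
      ∀ P ∈ parts ((Finset.univ.filter (fun j : Fin ℓ => (j : ℕ) < m)).image f),
        Nat.gcd n k ∣ P.card := by
    intro m
    induction m with
    | zero =>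
      intro _ P hP
      have h0 : (Finset.univ.filter (fun j : Fin ℓ => (j : ℕ) < 0)).image f = ∅ := by
        simp
      rw [h0, PartsAux.parts_empty hn, Finset.mem_singleton] at hP
      subst hP
      simpa [Finset.card_univ] using hgn
    | succ m ih =>
      intro hm P hP
      have hm' : m < ℓ := by omega
      rw [hDsucc m hm'] at hP
      refine PartsAux.step (Nat.gcd n k) _ _ (by rw [hcard]; exact hgk) ?_ (ih hm'.le) P hP
      rcases Nat.eq_zero_or_pos m with rfl | hm1
      · calc (PartsAux.splits _ _).card
            ≤ (parts ((Finset.univ.filter (fun j : Fin ℓ => (j : ℕ) < 0)).image f)).card :=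
              Finset.card_filter_le _ _
          _ = 1 := by
              have h0 : (Finset.univ.filter (fun j : Fin ℓ => (j : ℕ) < 0)).image f = ∅ := by
                simp
              rw [h0, PartsAux.parts_empty hn, Finset.card_singleton]
      · have hs := hstep m hm1 hm'
        rw [hDsucc m hm', PartsAux.card_parts_insert] at hs
        omega
  have hDl : (Finset.univ.filter (fun j : Fin ℓ => (j : ℕ) < ℓ)).image f
      = Finset.univ.image f := by
    congr 1
    ext j
    simp [j.isLt]
  intro P hP
  exact key ℓ le_rfl P (by rwa [hDl])
end

section
/- Let n, k be positive integers with gcd(n,k) = 1 and 1 ≤ k ≤ n/2. Then there exist k-subsets ω₁,…,ω_{n−1} of {1,…,n} such that the chain of pointwise stabilizers S_n > G_{ω₁} > G_{ω₁,ω₂} > ⋯ > G_{ω₁,…,ω_{n−1}} is strictly decreasing and the final group is trivial; i.e. I(S_n, Ω_k) = n − 1, where Ω_k is the set of k-subsets of {1,…,n}. -/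
open Pointwise

lemma swap_smul_finset_aux {α : Type*} [DecidableEq α] {a b : α} {s : Finset α}
    (h : a ∈ s ↔ b ∈ s) : Equiv.swap a b • s = s := by
  ext x
  rw [← Finset.inv_smul_mem_iff, Equiv.swap_inv, Equiv.Perm.smul_def]
  rcases eq_or_ne x a with rfl | hxa
  · rw [Equiv.swap_apply_left]; exact h.symm
  rcases eq_or_ne x b with rfl | hxb
  · rw [Equiv.swap_apply_right]; exact h
  · rw [Equiv.swap_apply_of_ne_of_ne hxa hxb]

lemma card_filter_comp_aux {n : ℕ} (φ : Fin n → Fin n) (hφ : Function.Injective φ)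
    (p : Fin n → Prop) [DecidablePred p] :
    (Finset.univ.filter fun x => p (φ x)).card = (Finset.univ.filter p).card := by
  rw [← Finset.card_image_of_injective _ hφ, ← Finset.filter_image,
    Finset.image_univ_of_surjective (Finite.injective_iff_surjective.mp hφ)]

/-- If `gcd(n,k) = 1` and `1 ≤ k ≤ n/2`, then there is a sequence of `n-1` `k`-subsets
of `{1,…,n}` whose chain of successive pointwise stabilizers in `Sₙ` is strictly
decreasing and terminates in the trivial group; i.e. `I(Sₙ, Ω_k) = n - 1`. -/
theorem exists_irredundant_base_of_coprime {n k : ℕ} (hk : 1 ≤ k) (hkn : 2 * k ≤ n)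
    (hg : Nat.gcd n k = 1) :
    ∃ f : Fin (n - 1) → Finset (Fin n),
      (∀ i, (f i).card = k) ∧
      (∀ i < n - 1, chainStab (⊤ : Subgroup (Equiv.Perm (Fin n))) f (i + 1) <
        chainStab ⊤ f i) ∧
      chainStab (⊤ : Subgroup (Equiv.Perm (Fin n))) f (n - 1) = ⊥ := by
  classical
  have hn0 : 0 < n := by omega
  have hkltn : k < n := by omega
  set c : ℕ := n - k with hc
  have hkc : k + c = n := by omega
  have hck : Nat.Coprime c k := (Nat.coprime_sub_self_left (le_of_lt hkltn)).2 hg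
  have hcn : Nat.Coprime c n := by rw [← hkc]; exact Nat.coprime_add_self_right.2 hck
  have hnc : Nat.gcd n c = 1 := hcn.symm
  -- the base sets : B i = the cyclic interval [i*k, i*k + k) mod n, described by membership
  set B : Fin (n - 1) → Finset (Fin n) :=
    fun i => Finset.univ.filter (fun x : Fin n => ((x : ℕ) + (i : ℕ) * c) % n < k) with hB
  have hmemB : ∀ (i : Fin (n - 1)) (x : Fin n),
      x ∈ B i ↔ ((x : ℕ) + (i : ℕ) * c) % n < k := by
    intro i x; simp [hB]
  -- card of the set of `t : Fin n` with `t.val < k`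
  have hbase : (Finset.univ.filter fun t : Fin n => (t : ℕ) < k).card = k := by
    have : (Finset.univ.filter fun t : Fin n => (t : ℕ) < k)
        = Finset.Iio (⟨k, hkltn⟩ : Fin n) := by
      ext t
      simp [Fin.lt_def]
    rw [this, Fin.card_Iio]
  -- cardinalities
  have hcardB : ∀ i, (B i).card = k := by
    intro i
    let φ : Fin n → Fin n := fun x => ⟨((x : ℕ) + (i : ℕ) * c) % n, Nat.mod_lt _ hn0⟩
    have hφ : Function.Injective φ := by
      intro x y hxy
      have h1 : ((x : ℕ) + (i : ℕ) * c) % n = ((y : ℕ) + (i : ℕ) * c) % n :=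
        congrArg Fin.val hxy
      have h2 : (x : ℕ) ≡ (y : ℕ) [MOD n] := Nat.ModEq.add_right_cancel' _ h1
      exact Fin.ext ((Nat.mod_eq_of_lt x.isLt) ▸ (Nat.mod_eq_of_lt y.isLt) ▸ h2)
    have := card_filter_comp_aux φ hφ (fun t => (t : ℕ) < k)
    rw [hbase] at this
    exact this
  -- injectivity of the index map (uses coprimality)
  have hψinj : ∀ x : Fin n, Function.Injective
      (fun i : Fin n => (⟨((x : ℕ) + (i : ℕ) * c) % n, Nat.mod_lt _ hn0⟩ : Fin n)) := by
    intro x i j hij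
    have h1 : ((x : ℕ) + (i : ℕ) * c) % n = ((x : ℕ) + (j : ℕ) * c) % n :=
      congrArg Fin.val hij
    have h2 : (i : ℕ) * c ≡ (j : ℕ) * c [MOD n] := Nat.ModEq.add_left_cancel' _ h1
    have h3 : (i : ℕ) ≡ (j : ℕ) [MOD n] := Nat.ModEq.cancel_right_of_coprime hnc h2
    exact Fin.ext ((Nat.mod_eq_of_lt i.isLt) ▸ (Nat.mod_eq_of_lt j.isLt) ▸ h3)
  -- each point lies in exactly k of the n cyclic intervals
  have hcardS : ∀ x : Fin n,
      (Finset.univ.filter fun i : Fin n => ((x : ℕ) + (i : ℕ) * c) % n < k).card = k := by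
    intro x
    have := card_filter_comp_aux _ (hψinj x) (fun t => (t : ℕ) < k)
    rw [hbase] at this
    exact this
  -- key: from the full membership vector we can locate y in a window of x
  have hkey : ∀ x y : Fin n,
      (∀ i : Fin n, (((x : ℕ) + (i : ℕ) * c) % n < k ↔ ((y : ℕ) + (i : ℕ) * c) % n < k)) →
      ∃ d, d < k ∧ (y : ℕ) ≡ (x : ℕ) + d [MOD n] := by
    intro x y hxy
    have hsurj : Function.Surjective
        (fun i : Fin n => (⟨((x : ℕ) + (i : ℕ) * c) % n, Nat.mod_lt _ hn0⟩ : Fin n)) :=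
      Finite.injective_iff_surjective.mp (hψinj x)
    obtain ⟨i₀, hi₀⟩ := hsurj ⟨0, hn0⟩
    have hx0 : ((x : ℕ) + (i₀ : ℕ) * c) % n = 0 := congrArg Fin.val hi₀
    have hd : ((y : ℕ) + (i₀ : ℕ) * c) % n < k := (hxy i₀).mp (by rw [hx0]; exact hk)
    refine ⟨((y : ℕ) + (i₀ : ℕ) * c) % n, hd, ?_⟩
    have h1 : (x : ℕ) + (i₀ : ℕ) * c ≡ 0 [MOD n] := by
      unfold Nat.ModEq; simpa using hx0
    calc (y : ℕ) = (y : ℕ) + 0 := (add_zero _).symm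
      _ ≡ (y : ℕ) + ((x : ℕ) + (i₀ : ℕ) * c) [MOD n] := Nat.ModEq.add_left _ h1.symm
      _ = (x : ℕ) + ((y : ℕ) + (i₀ : ℕ) * c) := by ring
      _ ≡ (x : ℕ) + ((y : ℕ) + (i₀ : ℕ) * c) % n [MOD n] :=
          Nat.ModEq.add_left _ (Nat.mod_modEq _ _).symm
  -- separation: the membership vectors over the first n-1 sets separate points
  have hsep : ∀ x y : Fin n, (∀ j : Fin (n - 1), (x ∈ B j ↔ y ∈ B j)) → x = y := by
    intro x y hxy
    -- first extend to all n indices by a counting argument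
    have hall : ∀ i : Fin n,
        (((x : ℕ) + (i : ℕ) * c) % n < k ↔ ((y : ℕ) + (i : ℕ) * c) % n < k) := by
      set Sx := Finset.univ.filter fun i : Fin n => ((x : ℕ) + (i : ℕ) * c) % n < k with hSx
      set Sy := Finset.univ.filter fun i : Fin n => ((y : ℕ) + (i : ℕ) * c) % n < k with hSy
      have hmemx : ∀ i : Fin n, i ∈ Sx ↔ ((x : ℕ) + (i : ℕ) * c) % n < k := by
        intro i; simp [hSx]
      have hmemy : ∀ i : Fin n, i ∈ Sy ↔ ((y : ℕ) + (i : ℕ) * c) % n < k := by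
        intro i; simp [hSy]
      set L : Fin n := ⟨n - 1, by omega⟩ with hL
      have hlow : ∀ i : Fin n, i ≠ L →
          (((x : ℕ) + (i : ℕ) * c) % n < k ↔ ((y : ℕ) + (i : ℕ) * c) % n < k) := by
        intro i hiL
        have hi : (i : ℕ) < n - 1 := by
          have := i.isLt
          have : (i : ℕ) ≠ n - 1 := fun h => hiL (Fin.ext h)
          omega
        have := hxy ⟨(i : ℕ), hi⟩
        rw [hmemB, hmemB] at this
        exact this
      have herase : Sx.erase L = Sy.erase L := by
        ext i
        simp only [Finset.mem_erase]
        constructor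
        · rintro ⟨hiL, hi⟩
          exact ⟨hiL, (hmemy i).2 ((hlow i hiL).1 ((hmemx i).1 hi))⟩
        · rintro ⟨hiL, hi⟩
          exact ⟨hiL, (hmemx i).2 ((hlow i hiL).2 ((hmemy i).1 hi))⟩
      have hcx : Sx.card = k := hcardS x
      have hcy : Sy.card = k := hcardS y
      have hLmem : L ∈ Sx ↔ L ∈ Sy := by
        constructor
        · intro hLx
          by_contra hLy
          have e1 : (Sx.erase L).card = k - 1 := by rw [Finset.card_erase_of_mem hLx, hcx]
          have e2 : (Sy.erase L).card = k := by rw [Finset.erase_eq_of_notMem hLy, hcy]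
          rw [herase, e2] at e1
          omega
        · intro hLy
          by_contra hLx
          have e1 : (Sy.erase L).card = k - 1 := by rw [Finset.card_erase_of_mem hLy, hcy]
          have e2 : (Sx.erase L).card = k := by rw [Finset.erase_eq_of_notMem hLx, hcx]
          rw [← herase, e2] at e1
          omega
      intro i
      by_cases hiL : i = L
      · subst hiL
        rw [← hmemx, ← hmemy]
        exact hLmem
      · exact hlow i hiL
    obtain ⟨d, hd, hyd⟩ := hkey x y hall
    obtain ⟨d', hd', hxd⟩ := hkey y x (fun i => (hall i).symm)
    have h1 : (x : ℕ) + 0 ≡ (x : ℕ) + (d + d') [MOD n] := by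
      calc (x : ℕ) + 0 = (x : ℕ) := add_zero _
        _ ≡ (y : ℕ) + d' [MOD n] := hxd
        _ ≡ ((x : ℕ) + d) + d' [MOD n] := hyd.add_right _
        _ = (x : ℕ) + (d + d') := by ring
    have h2 : (0 : ℕ) ≡ d + d' [MOD n] := Nat.ModEq.add_left_cancel' _ h1
    have h3 : (d + d') % n = 0 := by
      have := h2.symm
      unfold Nat.ModEq at this
      simpa using this
    have hdd : d + d' = 0 := by
      rcases Nat.lt_or_ge (d + d') n with h | h
      · rw [Nat.mod_eq_of_lt h] at h3; exact h3
      · omega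
    have : (y : ℕ) ≡ (x : ℕ) [MOD n] := by
      have := hyd
      rw [show d = 0 by omega, add_zero] at this
      exact this
    exact (Fin.ext ((Nat.mod_eq_of_lt y.isLt) ▸ (Nat.mod_eq_of_lt x.isLt) ▸ this)).symm
  refine ⟨B, hcardB, ?_, ?_⟩
  · -- strictness
    intro i hi
    -- the two witness points
    set a : Fin n := ⟨(i * k + (k - 1)) % n, Nat.mod_lt _ hn0⟩ with ha
    set b : Fin n := ⟨(i * k + k) % n, Nat.mod_lt _ hn0⟩ with hb
    have hmem_a : a ∈ B ⟨i, hi⟩ := by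
      rw [hmemB]
      show ((a : ℕ) + i * c) % n < k
      calc ((a : ℕ) + i * c) % n = ((i * k + (k - 1)) % n + i * c) % n := rfl
        _ = (i * k + (k - 1) + i * c) % n := Nat.mod_add_mod _ _ _
        _ = ((k - 1) + i * (k + c)) % n := by
            rw [show i * k + (k - 1) + i * c = (k - 1) + i * (k + c) from by ring]
        _ = ((k - 1) + i * n) % n := by rw [hkc]
        _ = (k - 1) % n := Nat.add_mul_mod_self_right _ _ _
        _ = k - 1 := Nat.mod_eq_of_lt (by omega)
        _ < k := by omega
    have hmem_b : b ∉ B ⟨i, hi⟩ := by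
      rw [hmemB]
      show ¬ ((b : ℕ) + i * c) % n < k
      have : ((b : ℕ) + i * c) % n = k := by
        calc ((b : ℕ) + i * c) % n = ((i * k + k) % n + i * c) % n := rfl
          _ = (i * k + k + i * c) % n := Nat.mod_add_mod _ _ _
          _ = (k + i * (k + c)) % n := by
              rw [show i * k + k + i * c = k + i * (k + c) from by ring]
          _ = (k + i * n) % n := by rw [hkc]
          _ = k % n := Nat.add_mul_mod_self_right _ _ _
          _ = k := Nat.mod_eq_of_lt hkltn
      omega
    have hab : a ≠ b := by
      intro h
      rw [h] at hmem_a
      exact hmem_b hmem_a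
    -- earlier sets contain a and b alike
    have hearlier : ∀ j : Fin (n - 1), (j : ℕ) < i → (a ∈ B j ↔ b ∈ B j) := by
      intro j hj
      rw [hmemB, hmemB]
      set d : ℕ := i - (j : ℕ) with hd
      have hd1 : 1 ≤ d := by omega
      have hdn : d ≤ n - 2 := by omega
      have hij : i = (j : ℕ) + d := by omega
      set m : ℕ := ((d + 1) * k) % n with hm
      have hmltn : m < n := Nat.mod_lt _ hn0
      have hm0 : m ≠ 0 := by
        intro h0
        have hdvd : n ∣ (d + 1) * k := Nat.dvd_of_mod_eq_zero (hm ▸ h0)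
        have hnd : n ∣ d + 1 := (Nat.Coprime.dvd_of_dvd_mul_right hg) hdvd
        have := Nat.le_of_dvd (by omega) hnd
        omega
      have hmk : m ≠ k := by
        intro hkm
        have hmeq : (d + 1) * k ≡ k [MOD n] := by
          unfold Nat.ModEq
          rw [← hm, hkm, Nat.mod_eq_of_lt hkltn]
        have h2 : d * k + k ≡ 0 + k [MOD n] := by
          rw [zero_add, show d * k + k = (d + 1) * k from by ring]
          exact hmeq
        have h3 : d * k ≡ 0 [MOD n] := Nat.ModEq.add_right_cancel' _ h2
        have hdvd : n ∣ d * k := (Nat.modEq_zero_iff_dvd).1 h3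
        have hnd : n ∣ d := Nat.Coprime.dvd_of_dvd_mul_right hg hdvd
        have := Nat.le_of_dvd (by omega) hnd
        omega
      have hbval : ((b : ℕ) + (j : ℕ) * c) % n = m := by
        calc ((b : ℕ) + (j : ℕ) * c) % n = ((i * k + k) % n + (j : ℕ) * c) % n := rfl
          _ = (i * k + k + (j : ℕ) * c) % n := Nat.mod_add_mod _ _ _
          _ = ((d + 1) * k + (j : ℕ) * (k + c)) % n := by
              rw [show i * k + k + (j : ℕ) * c = (d + 1) * k + (j : ℕ) * (k + c) from by
                rw [hij]; ring]
          _ = ((d + 1) * k + (j : ℕ) * n) % n := by rw [hkc]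
          _ = ((d + 1) * k) % n := Nat.add_mul_mod_self_right _ _ _
      have haval : ((a : ℕ) + (j : ℕ) * c) % n = m - 1 := by
        obtain ⟨q, hq⟩ : ∃ q, n * q + m = (d + 1) * k := ⟨_, Nat.div_add_mod _ _⟩
        rw [show (d + 1) * k = d * k + k from by ring] at hq
        have e1 : d * k + (k - 1) = (m - 1) + n * q := by omega
        calc ((a : ℕ) + (j : ℕ) * c) % n = ((i * k + (k - 1)) % n + (j : ℕ) * c) % n := rfl
          _ = (i * k + (k - 1) + (j : ℕ) * c) % n := Nat.mod_add_mod _ _ _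
          _ = (d * k + (k - 1) + (j : ℕ) * (k + c)) % n := by
              rw [show i * k + (k - 1) + (j : ℕ) * c
                  = d * k + (k - 1) + (j : ℕ) * (k + c) from by rw [hij]; ring]
          _ = (d * k + (k - 1) + (j : ℕ) * n) % n := by rw [hkc]
          _ = (d * k + (k - 1)) % n := Nat.add_mul_mod_self_right _ _ _
          _ = ((m - 1) + q * n) % n := by rw [e1, mul_comm]
          _ = (m - 1) % n := Nat.add_mul_mod_self_right _ _ _
          _ = m - 1 := Nat.mod_eq_of_lt (by omega)
      rw [haval, hbval]
      omega
    -- assemble strictness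
    have hle : chainStab ⊤ B (i + 1) ≤ chainStab ⊤ B i := by
      refine inf_le_inf_left _ ?_
      refine le_iInf fun j => le_iInf fun hj => ?_
      exact iInf_le_of_le j (iInf_le_of_le (Nat.lt_succ_of_lt hj) le_rfl)
    rw [SetLike.lt_iff_le_and_exists]
    refine ⟨hle, Equiv.swap a b, ?_, ?_⟩
    · refine Subgroup.mem_inf.2 ⟨Subgroup.mem_top _, ?_⟩
      refine Subgroup.mem_iInf.2 fun j => Subgroup.mem_iInf.2 fun hj => ?_
      exact MulAction.mem_stabilizer_iff.2 (swap_smul_finset_aux (hearlier j hj))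
    · intro hmem
      have h2 := (Subgroup.mem_inf.1 hmem).2
      have h3 := Subgroup.mem_iInf.1 h2 ⟨i, hi⟩
      have h4 : Equiv.swap a b ∈ MulAction.stabilizer (Equiv.Perm (Fin n)) (B ⟨i, hi⟩) :=
        Subgroup.mem_iInf.1 h3 (Nat.lt_succ_self i)
      have h5 : Equiv.swap a b • B ⟨i, hi⟩ = B ⟨i, hi⟩ := h4
      have hb' : b ∈ Equiv.swap a b • B ⟨i, hi⟩ := by
        have := Finset.smul_mem_smul_finset (a := Equiv.swap a b) hmem_a
        rwa [Equiv.Perm.smul_def, Equiv.swap_apply_left] at this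
      rw [h5] at hb'
      exact hmem_b hb'
  · -- bottom
    rw [Subgroup.eq_bot_iff_forall]
    intro g hgmem
    have h2 := (Subgroup.mem_inf.1 hgmem).2
    have hstab : ∀ j : Fin (n - 1), g • B j = B j := fun j =>
      Subgroup.mem_iInf.1 (Subgroup.mem_iInf.1 h2 j) j.isLt
    have hx : ∀ x : Fin n, g x = x := by
      intro x
      refine (hsep x (g x) fun j => ?_).symm
      have h := Finset.smul_mem_smul_finset_iff (a := g) (s := B j) (b := x)
      rw [hstab j, Equiv.Perm.smul_def] at h
      exact h.symm
    exact Equiv.ext fun x => (hx x).trans (Equiv.Perm.one_apply x).symm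
end

section
/- Let n, k be positive integers with 1 ≤ k ≤ n/2 and gcd(n,k) > 1. Then every irredundant base for the action of S_n on the set Ω_k of k-subsets of {1,…,n} has length at most n − 2, i.e. I(S_n, Ω_k) ≤ n − 2. -/
/-!
The pointwise stabilizer of the first `i` sets of a sequence is the group of permutations
preserving the partition of the points according to which of these sets contain them. In an
irredundant base every new set splits at least one block, so the number of blocks grows by
at least one per step, from `1` to `n`; hence `ℓ ≤ n - 1`. If `ℓ = n - 1`, every set splits
exactly one block and leaves all other blocks inside or outside it. Then `d = gcd(n, k)` divides
the size of every block by induction: the part of the split block inside the new `k`-set is `k`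
minus a sum of whole blocks. This contradicts the final blocks being singletons.
-/

open Pointwise

open Finset

section Refinement

variable {α β γ : Type*} [DecidableEq β] [DecidableEq γ]

lemma card_image_eq_card_image_pair {s : Finset α} {p : α → β} {q : α → γ}
    (h : ∀ x ∈ s, ∀ y ∈ s, p x = p y → q x = q y) :
    #(s.image p) = #(s.image fun x ↦ (p x, q x)) := by
  rw [← card_image_of_injOn (f := Prod.fst), image_image]
  · rfl
  rw [coe_image]
  rintro _ ⟨x, hx, rfl⟩ _ ⟨y, hy, rfl⟩ hxy
  exact Prod.ext hxy (h x hx y hy hxy)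

lemma card_image_eq_card_image_of_eq_iff {s : Finset α} {p : α → β} {q : α → γ}
    (h : ∀ x ∈ s, ∀ y ∈ s, p x = p y ↔ q x = q y) : #(s.image p) = #(s.image q) :=
  calc #(s.image p) = #(s.image fun x ↦ (p x, q x)) :=
        card_image_eq_card_image_pair fun x hx y hy ↦ (h x hx y hy).1
    _ = #(s.image fun x ↦ (q x, p x)) := by
        rw [← card_image_of_injective _ Prod.swap_injective, image_image]; rfl
    _ = #(s.image q) :=
        (card_image_eq_card_image_pair fun x hx y hy ↦ (h x hx y hy).2).symm

variable [Fintype α] [DecidableEq α] {p : α → β} {q : α → γ} {F : Finset α}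

lemma dvd_card_filter_of_card_image_inter_le_one {d : ℕ} (hF : d ∣ #F)
    (hp : ∀ v, d ∣ #{x | p x = v}) (hsplit : #(F.image p ∩ Fᶜ.image p) ≤ 1) (v : β) :
    d ∣ #{x ∈ F | p x = v} := by
  have unsplit : ∀ w ∉ F.image p ∩ Fᶜ.image p, d ∣ #{x ∈ F | p x = w} := by
    intro w hw
    by_cases hwF : w ∈ F.image p
    · convert hp w using 2
      ext x
      simp only [mem_filter, mem_univ, true_and, and_iff_right_iff_imp]
      intro hx
      by_contra hxF
      exact hw (mem_inter.2 ⟨hwF, mem_image.2 ⟨x, by simpa using hxF, hx⟩⟩)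
    · rw [filter_eq_empty_iff.2 fun x hx hxw ↦ hwF (mem_image.2 ⟨x, hx, hxw⟩), card_empty]
      exact dvd_zero d
  by_cases hv : v ∈ F.image p ∩ Fᶜ.image p
  · have hsum := card_eq_sum_card_image p F
    rw [← add_sum_erase _ _ (mem_inter.1 hv).1] at hsum
    rw [hsum] at hF
    refine (Nat.dvd_add_left (dvd_sum fun w hw ↦ unsplit w fun hw' ↦ ?_)).1 hF
    exact ne_of_mem_erase hw (card_le_one.1 hsplit w hw' v hv)
  · exact unsplit v hv

variable (hq : ∀ x y, q x = q y ↔ p x = p y ∧ (x ∈ F ↔ y ∈ F))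
include hq

/-- `F.image p ∩ Fᶜ.image p` is the set of blocks of `p` that `F` splits. -/
lemma card_image_eq_card_image_add_card_inter :
    #(univ.image q) = #(univ.image p) + #(F.image p ∩ Fᶜ.image p) := by
  have hdisj : Disjoint (F.image q) (Fᶜ.image q) := by
    simp only [disjoint_left, mem_image, mem_compl]
    rintro _ ⟨x, hx, rfl⟩ ⟨y, hy, hxy⟩
    exact hy (((hq y x).1 hxy).2.2 hx)
  have hkernel (s : Finset α) (hs : ∀ x ∈ s, ∀ y ∈ s, x ∈ F ↔ y ∈ F) :
      #(s.image q) = #(s.image p) :=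
    card_image_eq_card_image_of_eq_iff fun x hx y hy ↦ by
      rw [hq]; exact and_iff_left (hs x hx y hy)
  rw [← union_compl F, image_union, image_union, card_union_of_disjoint hdisj,
    card_union_add_card_inter, hkernel F (fun x hx y hy ↦ by simp [hx, hy]),
    hkernel Fᶜ (fun x hx y hy ↦ by simp_all)]

lemma card_image_lt_card_image_of_split {x y : α} (hxy : p x = p y) (hx : x ∈ F) (hy : y ∉ F) :
    #(univ.image p) < #(univ.image q) := by
  rw [card_image_eq_card_image_add_card_inter hq, Nat.lt_add_right_iff_pos, card_pos]
  exact ⟨p x, mem_inter.2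
    ⟨mem_image_of_mem p hx, mem_image.2 ⟨y, by simpa using hy, hxy.symm⟩⟩⟩

lemma dvd_card_fiber_of_card_image_le_add_one {d : ℕ} (hF : d ∣ #F)
    (hp : ∀ v, d ∣ #{x | p x = v}) (hstep : #(univ.image q) ≤ #(univ.image p) + 1) (w : γ) :
    d ∣ #{x | q x = w} := by
  have hsplit : #(F.image p ∩ Fᶜ.image p) ≤ 1 := by
    have := card_image_eq_card_image_add_card_inter hq; omega
  have hdvd := dvd_card_filter_of_card_image_inter_le_one hF hp hsplit
  by_cases hw : ∃ x, q x = w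
  · obtain ⟨x, rfl⟩ := hw
    by_cases hx : x ∈ F
    · convert hdvd (p x) using 2
      ext y; simp [hq, hx, and_comm]
    · have hfib : ({y | q y = q x} : Finset α) =
          ({y | p y = p x} : Finset α) \ {y ∈ F | p y = p x} := by
        ext y; simp [hq, hx]; tauto
      rw [hfib, card_sdiff_of_subset (fun y ↦ by simp +contextual)]
      exact Nat.dvd_sub (hp _) (hdvd _)
  · push Not at hw
    simp [filter_false_of_mem fun x _ ↦ hw x]

end Refinement

lemma injective_of_forall_perm {α β : Type*} [DecidableEq α] {p : α → β}
    (h : ∀ σ : Equiv.Perm α, (∀ x, p (σ x) = p x) → σ = 1) : Function.Injective p := by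
  intro x y hxy
  refine Equiv.swap_eq_one_iff.1 (h _ fun z ↦ ?_)
  rcases eq_or_ne z x with rfl | hzx
  · simpa using hxy.symm
  rcases eq_or_ne z y with rfl | hzy
  · simpa using hxy
  · rw [Equiv.swap_apply_of_ne_of_ne hzx hzy]

lemma add_sub_le_of_forall_lt_succ {a : ℕ → ℕ} {ℓ : ℕ} (h : ∀ i < ℓ, a i < a (i + 1))
    {i j : ℕ} (hij : i ≤ j) (hj : j ≤ ℓ) : a i + (j - i) ≤ a j := by
  induction j, hij using Nat.le_induction with
  | base => simp
  | succ j hij ih => have := h j (by omega); have := ih (by omega); omega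

lemma le_add_one_of_forall_lt_succ {a : ℕ → ℕ} {ℓ : ℕ} (h : ∀ i < ℓ, a i < a (i + 1))
    (htop : a ℓ ≤ a 0 + ℓ) {i : ℕ} (hi : i < ℓ) : a (i + 1) ≤ a i + 1 := by
  have := add_sub_le_of_forall_lt_succ h (Nat.zero_le i) hi.le
  have := add_sub_le_of_forall_lt_succ h (show i + 1 ≤ ℓ from hi) le_rfl
  omega

section MembershipPattern

variable {α : Type*} [DecidableEq α] {ℓ : ℕ} (f : Fin ℓ → Finset α)

def membershipPattern (i : ℕ) (x : α) : Finset (Fin ℓ) := {j | (j : ℕ) < i ∧ x ∈ f j}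

variable {f}

lemma membershipPattern_eq_iff {i : ℕ} {x y : α} :
    membershipPattern f i x = membershipPattern f i y ↔
      ∀ j : Fin ℓ, (j : ℕ) < i → (x ∈ f j ↔ y ∈ f j) := by
  simp only [membershipPattern, Finset.ext_iff, mem_filter, mem_univ, true_and]
  exact forall_congr' fun j ↦ ⟨fun h hj ↦ by simpa [hj] using h, fun h ↦ by
    by_cases hj : (j : ℕ) < i <;> simp [hj, h]⟩

lemma membershipPattern_succ_eq_iff {i : ℕ} (hi : i < ℓ) {x y : α} :
    membershipPattern f (i + 1) x = membershipPattern f (i + 1) y ↔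
      membershipPattern f i x = membershipPattern f i y ∧
        (x ∈ f ⟨i, hi⟩ ↔ y ∈ f ⟨i, hi⟩) := by
  simp only [membershipPattern_eq_iff, Nat.lt_succ_iff_lt_or_eq, or_imp, forall_and]
  refine and_congr_right' ⟨fun h ↦ h _ rfl, fun h j hj ↦ ?_⟩
  rwa [show j = ⟨i, hi⟩ from Fin.ext hj]

lemma membershipPattern_zero (x : α) : membershipPattern f 0 x = ∅ := by
  simp [membershipPattern]

variable [Fintype α]

lemma card_image_membershipPattern_zero [Nonempty α] :
    #(univ.image (membershipPattern f 0)) = 1 := by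
  rw [funext membershipPattern_zero, image_const univ_nonempty, card_singleton]

lemma dvd_card_fiber_membershipPattern {d k : ℕ} (hdk : d ∣ k) (hdα : d ∣ Fintype.card α)
    (hcard : ∀ j, #(f j) = k)
    (hsteps : ∀ i < ℓ, #(univ.image (membershipPattern f (i + 1))) ≤
      #(univ.image (membershipPattern f i)) + 1) :
    ∀ i ≤ ℓ, ∀ v, d ∣ #{x | membershipPattern f i x = v} := by
  intro i
  induction i with
  | zero =>
    intro _ v
    by_cases hv : v = ∅ <;> simp [membershipPattern_zero, hv, eq_comm, hdα]
  | succ i ih =>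
    intro hi
    exact dvd_card_fiber_of_card_image_le_add_one (fun x y ↦ membershipPattern_succ_eq_iff hi)
      ((hcard _).symm ▸ hdk) (ih (by omega)) (hsteps i hi)

end MembershipPattern

section Stabilizer

variable {n ℓ : ℕ} {f : Fin ℓ → Finset (Fin n)}

lemma mem_chainStab_top_iff {i : ℕ} {σ : Equiv.Perm (Fin n)} :
    σ ∈ chainStab ⊤ f i ↔ ∀ x, membershipPattern f i (σ x) = membershipPattern f i x := by
  simp only [chainStab, Subgroup.mem_inf, Subgroup.mem_top, true_and, Subgroup.mem_iInf,
    MulAction.mem_stabilizer_finset, Equiv.Perm.smul_def, membershipPattern_eq_iff]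
  exact ⟨fun h x j hj ↦ h j hj x, fun h j hj x ↦ h x j hj⟩

lemma card_image_membershipPattern_lt {i : ℕ} (hi : i < ℓ)
    (h : chainStab ⊤ f (i + 1) < chainStab ⊤ f i) :
    #(univ.image (membershipPattern f i)) < #(univ.image (membershipPattern f (i + 1))) := by
  obtain ⟨σ, hσi, hσ⟩ := SetLike.exists_of_lt h
  simp only [mem_chainStab_top_iff, membershipPattern_succ_eq_iff hi, not_forall] at hσi hσ
  obtain ⟨x, hx⟩ := hσ
  have hsplit : ¬(σ x ∈ f ⟨i, hi⟩ ↔ x ∈ f ⟨i, hi⟩) := fun h ↦ hx ⟨hσi x, h⟩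
  have hq (x y : Fin n) := membershipPattern_succ_eq_iff (f := f) hi (x := x) (y := y)
  by_cases hxF : x ∈ f ⟨i, hi⟩
  · exact card_image_lt_card_image_of_split hq (hσi x).symm hxF (by tauto)
  · exact card_image_lt_card_image_of_split hq (hσi x) (by tauto) hxF

lemma membershipPattern_injective (h : chainStab ⊤ f ℓ = ⊥) :
    Function.Injective (membershipPattern f ℓ) :=
  injective_of_forall_perm fun σ hσ ↦ by
    rw [← Subgroup.mem_bot, ← h, mem_chainStab_top_iff]; exact hσ

end Stabilizer

theorem irredundant_base_le_of_not_coprime_general {n k : ℕ} (hg : 1 < Nat.gcd n k) :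
    ∀ (ℓ : ℕ) (f : Fin ℓ → Finset (Fin n)),
      (∀ i, (f i).card = k) →
      (∀ i < ℓ, chainStab (⊤ : Subgroup (Equiv.Perm (Fin n))) f (i + 1) <
        chainStab ⊤ f i) →
      chainStab (⊤ : Subgroup (Equiv.Perm (Fin n))) f ℓ = ⊥ →
      ℓ ≤ n - 2 := by
  intro ℓ f hcard hstrict hbot
  set a : ℕ → ℕ := fun i ↦ #(univ.image (membershipPattern f i))
  have hgrow : ∀ i < ℓ, a i < a (i + 1) := fun i hi ↦
    card_image_membershipPattern_lt hi (hstrict i hi)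
  have hinj := membershipPattern_injective hbot
  have htop : a ℓ = n := by simp [a, card_image_of_injective _ hinj]
  have hlen := add_sub_le_of_forall_lt_succ hgrow (Nat.zero_le ℓ) le_rfl
  obtain rfl | hn := n.eq_zero_or_pos
  · omega
  have : Nonempty (Fin n) := ⟨⟨0, hn⟩⟩
  have h0 : a 0 = 1 := card_image_membershipPattern_zero
  by_contra! hlong
  have hdvd := dvd_card_fiber_membershipPattern (Nat.gcd_dvd_right n k)
    (by simpa using Nat.gcd_dvd_left n k) hcard
    (fun i hi ↦ le_add_one_of_forall_lt_succ hgrow (by omega) hi) ℓ le_rfl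
    (membershipPattern f ℓ ⟨0, hn⟩)
  simp only [hinj.eq_iff, filter_eq', mem_univ, if_true, card_singleton,
    Nat.dvd_one] at hdvd
  omega

/-- If `1 ≤ k ≤ n/2` and `gcd(n,k) > 1`, then every irredundant base for the action of
`Sₙ` on `k`-subsets of `{1,…,n}` has length at most `n - 2`. -/
theorem irredundant_base_le_of_not_coprime {n k : ℕ} (hk : 1 ≤ k) (hkn : 2 * k ≤ n)
    (hg : 1 < Nat.gcd n k) :
    ∀ (ℓ : ℕ) (f : Fin ℓ → Finset (Fin n)),
      (∀ i, (f i).card = k) →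
      (∀ i < ℓ, chainStab (⊤ : Subgroup (Equiv.Perm (Fin n))) f (i + 1) <
        chainStab ⊤ f i) →
      chainStab (⊤ : Subgroup (Equiv.Perm (Fin n))) f ℓ = ⊥ →
      ℓ ≤ n - 2 :=
  irredundant_base_le_of_not_coprime_general hg
end

section
/- Let n, k be positive integers with 2 ≤ k ≤ n/2. The sequence of k-subsets ω_i = {1,…,k−1, k+i−1} for i = 1,…,n−k, followed by ω_i = {i−(n−k), k+1,…,2k−1} for i = n−k+1,…,n−2, is an irredundant base of length n−2 for the action of S_n on k-subsets; in particular I(S_n, Ω_k) ≥ n − 2. -/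
open Pointwise

/-- The `(j+1)`-st set of the explicit sequence (1-indexed sets `ω_i`, `i = j + 1`):
`ω_i = {1,…,k-1, k+i-1}` for `i = 1,…,n-k`, and
`ω_i = {i-(n-k), k+1,…,2k-1}` for `i = n-k+1,…,n-2`.
Here elements of `{1,…,n}` are modelled by `Fin n` via `x ↦ x.val + 1`. -/
def wseq (n k j : ℕ) : Finset (Fin n) :=
  if j + 1 ≤ n - k then
    Finset.univ.filter (fun x : Fin n => (x : ℕ) + 1 ≤ k - 1 ∨ (x : ℕ) + 1 = k + j)
  else
    Finset.univ.filter (fun x : Fin n =>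
      (x : ℕ) + 1 = (j + 1) - (n - k) ∨ (k + 1 ≤ (x : ℕ) + 1 ∧ (x : ℕ) + 1 ≤ 2 * k - 1))

section Aux

lemma mem_wseq₁ {n k j : ℕ} (hj : j + 1 ≤ n - k) (x : Fin n) :
    x ∈ wseq n k j ↔ (x : ℕ) + 1 ≤ k - 1 ∨ (x : ℕ) + 1 = k + j := by
  simp [wseq, hj]

lemma mem_wseq₂ {n k j : ℕ} (hj : ¬ (j + 1 ≤ n - k)) (x : Fin n) :
    x ∈ wseq n k j ↔
      (x : ℕ) + 1 = (j + 1) - (n - k) ∨ (k + 1 ≤ (x : ℕ) + 1 ∧ (x : ℕ) + 1 ≤ 2 * k - 1) := by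
  simp [wseq, hj]

lemma card_filter_Icc (n a b : ℕ) (hb : b ≤ n) :
    (Finset.univ.filter (fun x : Fin n => a ≤ (x : ℕ) ∧ (x : ℕ) < b)).card = b - a := by
  have h : ∀ m ∈ Finset.Ico a b, m < n := fun m hm =>
    lt_of_lt_of_le (Finset.mem_Ico.mp hm).2 hb
  have : Finset.univ.filter (fun x : Fin n => a ≤ (x : ℕ) ∧ (x : ℕ) < b)
      = (Finset.Ico a b).attachFin h := by
    ext x
    simp [Finset.mem_attachFin, Finset.mem_Ico]
  rw [this, Finset.card_attachFin, Nat.card_Ico]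

lemma smul_eq_image {n : ℕ} (g : Equiv.Perm (Fin n)) (s : Finset (Fin n)) :
    g • s = s.image g := rfl

lemma mem_smul_iff {n : ℕ} (g : Equiv.Perm (Fin n)) (s : Finset (Fin n)) (x : Fin n) :
    x ∈ g • s ↔ g⁻¹ x ∈ s := by
  rw [smul_eq_image]
  constructor
  · intro hx
    obtain ⟨y, hy, rfl⟩ := Finset.mem_image.mp hx
    simpa using hy
  · intro h
    exact Finset.mem_image.mpr ⟨g⁻¹ x, h, by simp⟩

lemma smul_eq_of_fixed {n : ℕ} (g : Equiv.Perm (Fin n)) (s : Finset (Fin n))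
    (h : ∀ x ∈ s, g x = x) : g • s = s := by
  rw [smul_eq_image]
  ext x
  constructor
  · intro hx
    obtain ⟨y, hy, rfl⟩ := Finset.mem_image.mp hx
    rwa [h y hy]
  · intro hx
    exact Finset.mem_image.mpr ⟨x, hx, h x hx⟩

lemma swap_smul_eq {n : ℕ} (a b : Fin n) (s : Finset (Fin n)) (h : a ∈ s ↔ b ∈ s) :
    Equiv.swap a b • s = s := by
  ext x
  rw [mem_smul_iff]
  rw [show (Equiv.swap a b)⁻¹ = Equiv.swap a b from Equiv.swap_inv a b]
  rcases eq_or_ne x a with rfl | hxa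
  · rw [Equiv.swap_apply_left]; exact ⟨h.mpr, h.mp⟩
  rcases eq_or_ne x b with rfl | hxb
  · rw [Equiv.swap_apply_right]; exact ⟨h.mp, h.mpr⟩
  · rw [Equiv.swap_apply_of_ne_of_ne hxa hxb]

lemma swap_smul_ne {n : ℕ} (a b : Fin n) (s : Finset (Fin n)) (ha : a ∈ s) (hb : b ∉ s) :
    Equiv.swap a b • s ≠ s := by
  intro hcon
  apply hb
  rw [← hcon, mem_smul_iff]
  rw [show (Equiv.swap a b)⁻¹ = Equiv.swap a b from Equiv.swap_inv a b]
  rwa [Equiv.swap_apply_right]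

lemma mem_chainStab {n e : ℕ} (f : Fin e → Finset (Fin n)) (i : ℕ) (g : Equiv.Perm (Fin n)) :
    g ∈ chainStab (⊤ : Subgroup (Equiv.Perm (Fin n))) f i ↔
      ∀ j : Fin e, (j : ℕ) < i → g • f j = f j := by
  simp [chainStab, Subgroup.mem_iInf, MulAction.mem_stabilizer_iff]

lemma singleton_smul_fix {n : ℕ} (g : Equiv.Perm (Fin n)) (x : Fin n)
    (h : g • ({x} : Finset (Fin n)) = {x}) : g x = x := by
  have : g x ∈ ({x} : Finset (Fin n)) := by
    rw [← h, smul_eq_image]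
    exact Finset.mem_image.mpr ⟨x, Finset.mem_singleton_self x, rfl⟩
  simpa using this

end Aux

/-- The explicit sequence `wseq` of `n - 2` `k`-subsets is an irredundant base for the
action of `Sₙ` on `k`-subsets; in particular `I(Sₙ, Ω_k) ≥ n - 2`. -/
theorem explicit_irredundant_base {n k : ℕ} (hk : 2 ≤ k) (hkn : 2 * k ≤ n) :
    (∀ j : Fin (n - 2), (wseq n k (j : ℕ)).card = k) ∧
    (∀ i < n - 2,
      chainStab (⊤ : Subgroup (Equiv.Perm (Fin n))) (fun j : Fin (n - 2) => wseq n k j)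
          (i + 1) <
        chainStab ⊤ (fun j : Fin (n - 2) => wseq n k j) i) ∧
    chainStab (⊤ : Subgroup (Equiv.Perm (Fin n))) (fun j : Fin (n - 2) => wseq n k j)
      (n - 2) = ⊥ := by
  refine ⟨?_, ?_, ?_⟩
  · -- cardinality
    rintro ⟨j, hj⟩
    simp only
    by_cases hj1 : j + 1 ≤ n - k
    · have hp : k + j - 1 < n := by omega
      have : wseq n k j =
          insert (⟨k + j - 1, hp⟩ : Fin n)
            (Finset.univ.filter (fun x : Fin n => 0 ≤ (x : ℕ) ∧ (x : ℕ) < k - 1)) := by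
        ext x
        rw [mem_wseq₁ hj1]
        simp [Fin.ext_iff]
        omega
      rw [this, Finset.card_insert_of_notMem (by simp; omega), card_filter_Icc n 0 (k-1) (by omega)]
      omega
    · have hq : (j + 1) - (n - k) - 1 < n := by omega
      have : wseq n k j =
          insert (⟨(j + 1) - (n - k) - 1, hq⟩ : Fin n)
            (Finset.univ.filter (fun x : Fin n => k ≤ (x : ℕ) ∧ (x : ℕ) < 2 * k - 1)) := by
        ext x
        rw [mem_wseq₂ hj1]
        simp [Fin.ext_iff]
        omega
      rw [this, Finset.card_insert_of_notMem (by simp; omega),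
        card_filter_Icc n k (2*k-1) (by omega)]
      omega
  · -- strict decrease
    intro i hi
    rw [SetLike.lt_iff_le_and_exists]
    constructor
    · -- ≤
      intro g hg
      rw [mem_chainStab] at hg ⊢
      intro j hj
      exact hg j (by omega)
    · -- witness
      by_cases hi1 : i < n - k
      · -- phase 1 witness: swap indices k+i-1 and k+i
        have ha : k + i - 1 < n := by omega
        have hb : k + i < n := by omega
        set a : Fin n := ⟨k + i - 1, ha⟩
        set b : Fin n := ⟨k + i, hb⟩
        refine ⟨Equiv.swap a b, ?_, ?_⟩
        · rw [mem_chainStab]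
          intro j hj
          apply swap_smul_eq
          rw [mem_wseq₁ (by omega), mem_wseq₁ (by omega)]
          simp only [a, b]
          constructor <;> (intro h; omega)
        · rw [mem_chainStab]
          push_neg
          refine ⟨⟨i, hi⟩, by simp, ?_⟩
          simp only
          refine swap_smul_ne a b _ ?_ ?_
          · rw [mem_wseq₁ (by omega)]; right; simp [a]; omega
          · rw [mem_wseq₁ (by omega)]; simp [b]; omega
      · -- phase 2 witness: singleton value v = i+1-(n-k); swap indices v-1 and v
        have hv1 : 1 ≤ i + 1 - (n - k) := by omega
        have hv2 : i + 1 - (n - k) ≤ k - 2 := by omega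
        have ha : i - (n - k) < n := by omega
        have hb : i + 1 - (n - k) < n := by omega
        set a : Fin n := ⟨i - (n - k), ha⟩
        set b : Fin n := ⟨i + 1 - (n - k), hb⟩
        refine ⟨Equiv.swap a b, ?_, ?_⟩
        · rw [mem_chainStab]
          intro j hj
          apply swap_smul_eq
          by_cases hj1 : (j : ℕ) + 1 ≤ n - k
          · rw [mem_wseq₁ hj1, mem_wseq₁ hj1]
            simp only [a, b]
            constructor <;> (intro h; left; omega)
          · rw [mem_wseq₂ hj1, mem_wseq₂ hj1]
            simp only [a, b]
            have : (j : ℕ) < i := hj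
            constructor <;> (intro h; exfalso; omega)
        · rw [mem_chainStab]
          push_neg
          refine ⟨⟨i, hi⟩, by simp, ?_⟩
          simp only
          refine swap_smul_ne a b _ ?_ ?_
          · rw [mem_wseq₂ (by omega)]; left; simp [a]; omega
          · rw [mem_wseq₂ (by omega)]; simp [b]; omega
  · -- triviality
    rw [eq_bot_iff]
    intro g hg
    rw [mem_chainStab] at hg
    have hstab : ∀ j : ℕ, j < n - 2 → g • wseq n k j = wseq n k j := by
      intro j hj
      exact hg ⟨j, hj⟩ hj
    rw [Subgroup.mem_bot]
    -- g fixes A = indices 0..k-2 setwise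
    set A : Finset (Fin n) := Finset.univ.filter (fun x : Fin n => (x : ℕ) + 1 ≤ k - 1) with hA
    have hgA : g • A = A := by
      have h0 := hstab 0 (by omega)
      have h1 := hstab 1 (by omega)
      have hp0 : (0 : ℕ) + 1 ≤ n - k := by omega
      have hp1 : (1 : ℕ) + 1 ≤ n - k := by omega
      have hint : wseq n k 0 ∩ wseq n k 1 = A := by
        ext x
        rw [Finset.mem_inter, mem_wseq₁ hp0, mem_wseq₁ hp1]
        simp [hA]
        omega
      calc g • A = g • (wseq n k 0 ∩ wseq n k 1) := by rw [hint]
        _ = (g • wseq n k 0) ∩ (g • wseq n k 1) := Finset.smul_finset_inter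
        _ = A := by rw [h0, h1, hint]
    -- g fixes indices k-1 .. n-2 pointwise
    have hfix1 : ∀ m : ℕ, k - 1 ≤ m → m ≤ n - 2 → ∀ hm : m < n, g ⟨m, hm⟩ = ⟨m, hm⟩ := by
      intro m hm1 hm2 hm
      have hj : m + 1 - k < n - 2 := by omega
      have hph : (m + 1 - k) + 1 ≤ n - k := by omega
      have hdiff : wseq n k (m + 1 - k) \ A = {(⟨m, hm⟩ : Fin n)} := by
        ext x
        rw [Finset.mem_sdiff, mem_wseq₁ hph]
        rw [hA]
        simp only [Finset.mem_filter, Finset.mem_univ, true_and, Finset.mem_singleton, Fin.ext_iff]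
        omega
      apply singleton_smul_fix
      rw [← hdiff, Finset.smul_finset_sdiff, hstab _ hj, hgA]
    -- g fixes indices 0 .. k-3 pointwise
    have hfix2 : ∀ m : ℕ, m + 2 ≤ k - 1 → ∀ hm : m < n, g ⟨m, hm⟩ = ⟨m, hm⟩ := by
      intro m hm2 hm
      have hj : n - k + m < n - 2 := by omega
      set C : Finset (Fin n) :=
        Finset.univ.filter (fun x : Fin n => k ≤ (x : ℕ) ∧ (x : ℕ) < 2 * k - 1) with hC
      have hgC : g • C = C := by
        apply smul_eq_of_fixed
        intro x hx
        simp [hC] at hx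
        have hx2 : (x : ℕ) < n := x.isLt
        have := hfix1 (x : ℕ) (by omega) (by omega) x.isLt
        simpa [Fin.eta] using this
      have hph : ¬ ((n - k + m) + 1 ≤ n - k) := by omega
      have hdiff : wseq n k (n - k + m) \ C = {(⟨m, hm⟩ : Fin n)} := by
        ext x
        rw [Finset.mem_sdiff, mem_wseq₂ hph]
        rw [hC]
        simp only [Finset.mem_filter, Finset.mem_univ, true_and, Finset.mem_singleton, Fin.ext_iff]
        omega
      apply singleton_smul_fix
      rw [← hdiff, Finset.smul_finset_sdiff, hstab _ hj, hgC]
    -- g fixes index k-2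
    have hfixk2 : ∀ hm : k - 2 < n, g ⟨k - 2, hm⟩ = ⟨k - 2, hm⟩ := by
      intro hm
      set D : Finset (Fin n) :=
        Finset.univ.filter (fun x : Fin n => (x : ℕ) + 2 ≤ k - 1) with hD
      have hgD : g • D = D := by
        apply smul_eq_of_fixed
        intro x hx
        simp [hD] at hx
        have := hfix2 (x : ℕ) (by omega) x.isLt
        simpa [Fin.eta] using this
      have hdiff : A \ D = {(⟨k - 2, hm⟩ : Fin n)} := by
        ext x
        rw [hA, hD]
        simp only [Finset.mem_sdiff, Finset.mem_filter, Finset.mem_univ, true_and, Finset.mem_singleton, Fin.ext_iff]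
        omega
      apply singleton_smul_fix
      rw [← hdiff, Finset.smul_finset_sdiff, hgA, hgD]
    -- all fixed, last point by injectivity
    have hfixall : ∀ y : Fin n, (y : ℕ) ≤ n - 2 → g y = y := by
      intro y hy
      rcases lt_trichotomy ((y : ℕ) + 1) (k - 1) with h' | h' | h'
      · have := hfix2 (y : ℕ) (by omega) y.isLt
        simpa using this
      · have hy2 : y = ⟨k - 2, by omega⟩ := by apply Fin.ext; simp; omega
        rw [hy2]; exact hfixk2 _
      · have := hfix1 (y : ℕ) (by omega) (by omega) y.isLt
        simpa using this
    apply Equiv.ext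
    intro x
    show g x = x
    by_cases hx : (x : ℕ) ≤ n - 2
    · exact hfixall x hx
    · by_contra hne
      have hgx : (g x : ℕ) ≤ n - 2 := by
        have h1 := (g x).isLt
        have h2 := x.isLt
        rcases Nat.lt_or_ge ((g x) : ℕ) (n - 1) with h' | h'
        · omega
        · exfalso
          apply hne
          apply Fin.ext
          omega
      have hfg := hfixall (g x) hgx
      exact hne (g.injective hfg)
end

section
/- Let H be a permutation group on a set Ω and consider the induced action of H on 2-subsets of Ω. If Λ is an independent set of 2-subsets with respect to this action, then the graph Γ_Λ with vertex set Ω and edge set Λ contains no cycles (is a forest). -/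
/-!
Suppose an edge `vw` of `Γ_Λ` lies on a cycle, i.e. `v` and `w` are joined by a path avoiding
`vw`. An element fixing every other member of `Λ` fixes each edge of that path setwise. It cannot
move `v`: it would then swap `v` with the next vertex, and the following edge would lead back to
`v`. Fixing `v` and the edges of the path, it fixes every vertex of the path, so it fixes `{v, w}`.
Hence removing `{v, w}` from `Λ` does not change the pointwise stabilizer, contradicting
independence.
-/

open Pointwise

/-- The pointwise stabilizer in `G` of a set `Λ` of points of a `G`-set. -/
def pstab (G : Type*) {α : Type*} [Group G] [MulAction G α] (Λ : Set α) : Subgroup G :=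
  ⨅ a ∈ Λ, MulAction.stabilizer G a

section Pstab

variable {G α : Type*} [Group G] [MulAction G α]

lemma mem_pstab_iff {Λ : Set α} {g : G} : g ∈ pstab G Λ ↔ ∀ a ∈ Λ, g • a = a := by
  simp [pstab, Subgroup.mem_iInf, MulAction.mem_stabilizer_iff]

lemma pstab_antitone : Antitone (pstab G : Set α → Subgroup G) :=
  fun _ _ hΔ => biInf_mono fun _ ha => hΔ ha

end Pstab

section PairStabilizer

variable {G Ω : Type*} [Group G] [MulAction G Ω] [DecidableEq Ω] {g : G} {a b : Ω}

lemma smul_eq_or_smul_eq_of_smul_pair_eq (h : g • ({a, b} : Finset Ω) = {a, b}) :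
    g • a = a ∨ g • a = b := by
  have : g • a ∈ g • ({a, b} : Finset Ω) := Finset.smul_mem_smul_finset (by simp)
  simpa [h] using this

lemma smul_eq_of_smul_pair_eq (h : g • ({a, b} : Finset Ω) = {a, b}) (ha : g • a = a) :
    g • b = b := by
  rw [Finset.pair_comm] at h
  rcases smul_eq_or_smul_eq_of_smul_pair_eq h with hb | hba
  · exact hb
  · rw [← ha, smul_left_cancel_iff] at hba
    rw [hba, ha]

lemma smul_pair_eq_of_smul_eq (ha : g • a = a) (hb : g • b = b) :
    g • ({a, b} : Finset Ω) = {a, b} := by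
  rw [Finset.smul_finset_insert, Finset.smul_finset_singleton, ha, hb]

end PairStabilizer

lemma Sym2.mk_eq_mk_of_pair_eq {α : Type*} [DecidableEq α] {a b c d : α}
    (h : ({a, b} : Finset α) = {c, d}) : s(a, b) = s(c, d) :=
  Sym2.ext fun x => by
    rw [← Sym2.mem_toFinset, ← Sym2.mem_toFinset, Sym2.toFinset_mk_eq, Sym2.toFinset_mk_eq, h]

lemma SimpleGraph.Walk.two_le_length_of_not_adj {V : Type*} {G : SimpleGraph V} {u v : V}
    (hne : u ≠ v) (hnadj : ¬G.Adj u v) (p : G.Walk u v) : 2 ≤ p.length := by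
  match p with
  | nil => exact absurd rfl hne
  | cons h nil => exact absurd h hnadj
  | cons _ (cons _ _) => simp

def pairGraph {Ω : Type*} [DecidableEq Ω] (Λ : Set (Finset Ω)) : SimpleGraph Ω :=
  SimpleGraph.fromRel fun x y => ({x, y} : Finset Ω) ∈ Λ

namespace pairGraph

variable {Ω : Type*} [DecidableEq Ω] {Λ : Set (Finset Ω)} {a b x y : Ω}

lemma adj_iff : (pairGraph Λ).Adj a b ↔ a ≠ b ∧ ({a, b} : Finset Ω) ∈ Λ := by
  rw [pairGraph, SimpleGraph.fromRel_adj, Finset.pair_comm b a, or_self]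

lemma deleteEdges_le (x y : Ω) :
    (pairGraph Λ).deleteEdges {s(x, y)} ≤ pairGraph (Λ \ {{x, y}}) := by
  intro a b hab
  rw [SimpleGraph.deleteEdges_adj, adj_iff] at hab
  obtain ⟨⟨hne, hmem⟩, hxy⟩ := hab
  exact adj_iff.mpr ⟨hne, hmem, fun hpair => hxy (Sym2.mk_eq_mk_of_pair_eq hpair)⟩

variable {H : Type*} [Group H] [MulAction H Ω] {g : H}

lemma smul_pair_eq_of_adj (hg : g ∈ pstab H Λ) (hab : (pairGraph Λ).Adj a b) :
    g • ({a, b} : Finset Ω) = {a, b} :=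
  mem_pstab_iff.mp hg _ (adj_iff.mp hab).2

lemma smul_eq_of_reachable (hg : g ∈ pstab H Λ) (hx : g • x = x)
    (hxy : (pairGraph Λ).Reachable x y) : g • y = y := by
  obtain ⟨p⟩ := hxy
  induction p with
  | nil => exact hx
  | cons hadj _ ih => exact ih (smul_eq_of_smul_pair_eq (smul_pair_eq_of_adj hg hadj) hx)

lemma smul_eq_of_isPath (hg : g ∈ pstab H Λ) {p : (pairGraph Λ).Walk x y} (hp : p.IsPath)
    (hlen : 2 ≤ p.length) : g • x = x := by
  obtain _ | ⟨hxu, _ | ⟨huv, r⟩⟩ := p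
  · simp at hlen
  · simp at hlen
  rename_i u v
  have hxu_fixed := smul_pair_eq_of_adj hg hxu
  by_contra hx
  have hgx : g • x = u := (smul_eq_or_smul_eq_of_smul_pair_eq hxu_fixed).resolve_left hx
  have hgu : g • u = x := by
    rw [Finset.pair_comm] at hxu_fixed
    refine (smul_eq_or_smul_eq_of_smul_pair_eq hxu_fixed).resolve_left fun hgu => hxu.ne ?_
    exact smul_left_cancel g (hgx.trans hgu.symm)
  rcases smul_eq_or_smul_eq_of_smul_pair_eq (smul_pair_eq_of_adj hg huv) with hgu' | hgu'
  · exact hxu.ne (hgu.symm.trans hgu')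
  · obtain rfl : x = v := hgu.symm.trans hgu'
    simp [SimpleGraph.Walk.cons_isPath_iff] at hp

end pairGraph

theorem independent_pairs_graph_isAcyclic_general {H Ω : Type*} [Group H] [MulAction H Ω]
    [DecidableEq Ω] (Λ : Set (Finset Ω))
    (hind : ∀ Δ : Set (Finset Ω), Δ ⊂ Λ → pstab H Δ ≠ pstab H Λ) :
    (SimpleGraph.fromRel (fun x y => ({x, y} : Finset Ω) ∈ Λ)).IsAcyclic := by
  change (pairGraph Λ).IsAcyclic
  refine SimpleGraph.isAcyclic_iff_forall_adj_isBridge.mpr fun v w hvw => ?_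
  by_contra hbridge
  have hreach : (pairGraph (Λ \ {{v, w}})).Reachable v w :=
    (not_not.mp hbridge).mono (pairGraph.deleteEdges_le v w)
  obtain ⟨p, hp⟩ := hreach.exists_isPath
  obtain ⟨hne, hmem⟩ := pairGraph.adj_iff.mp hvw
  have hlen : 2 ≤ p.length :=
    p.two_le_length_of_not_adj hne fun h => (pairGraph.adj_iff.mp h).2.2 rfl
  refine hind _ (Set.sdiff_singleton_ssubset.mpr hmem)
    (le_antisymm ?_ (pstab_antitone Set.sdiff_subset))
  refine fun g hg => mem_pstab_iff.mpr fun s hs => ?_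
  by_cases hs' : s = {v, w}
  · have hv := pairGraph.smul_eq_of_isPath hg hp hlen
    rw [hs', smul_pair_eq_of_smul_eq hv (pairGraph.smul_eq_of_reachable hg hv hreach)]
  · exact mem_pstab_iff.mp hg s ⟨hs, hs'⟩

/-- Lemma 2.4: if `Λ` is an independent set of 2-subsets of `Ω` with respect to the
induced action of a permutation group `H` on 2-subsets, then the graph on `Ω` whose
edges are the members of `Λ` is acyclic (a forest). -/
theorem independent_pairs_graph_isAcyclic {H Ω : Type*} [Group H] [MulAction H Ω]
    [DecidableEq Ω] (Λ : Set (Finset Ω)) (h2 : ∀ s ∈ Λ, s.card = 2)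
    (hind : ∀ Δ : Set (Finset Ω), Δ ⊂ Λ → pstab H Δ ≠ pstab H Λ) :
    (SimpleGraph.fromRel (fun x y => ({x, y} : Finset Ω) ∈ Λ)).IsAcyclic :=
  independent_pairs_graph_isAcyclic_general Λ hind
end

section
/- Let n ≥ 2 and let Δ be a set of subsets of {1,…,n} that is independent with respect to the action of S_n on the power set of {1,…,n}. Then either there exists δ ∈ Δ with |δ| ∈ {1, n−1}, or |Δ| ≤ n − 2. -/
/-!
Independence gives, for every `δ ∈ Δ`, a permutation fixing every other member of `Δ` but
moving `δ`; it maps some `x ∈ δ` to a point `y ∉ δ`, so `x, y` are separated by `δ` and by no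
other member of `Δ`. The edges `{x, y}` chosen this way form a graph on `n` vertices with
`|Δ|` edges in which every edge is the only one crossing the cut `δ`, so every edge is a bridge
and the graph is a forest; hence `|Δ| ≤ n - 1`. In case of equality it is a tree, and the cut
belonging to the edge at a leaf `v` separates `v` from all other points, so `δ = {v}` or
`δ = {v}ᶜ`.
-/

open Pointwise

lemma mem_pstab {G α : Type*} [Group G] [MulAction G α] {Λ : Set α} {g : G} :
    g ∈ pstab G Λ ↔ ∀ a ∈ Λ, g • a = a := by
  simp [pstab, Subgroup.mem_iInf, MulAction.mem_stabilizer_iff]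

lemma pstab_anti {G α : Type*} [Group G] [MulAction G α] {Λ Λ' : Set α} (h : Λ ⊆ Λ') :
    pstab G Λ' ≤ pstab G Λ := fun _ hg ↦
  mem_pstab.mpr fun a ha ↦ mem_pstab.mp hg a (h ha)

open Finset

namespace SimpleGraph

variable {V : Type*} {G : SimpleGraph V}

lemma Reachable.iff_of_forall_adj {P : V → Prop} (hP : ∀ a b, G.Adj a b → (P a ↔ P b))
    {u v : V} (h : G.Reachable u v) : P u ↔ P v := by
  obtain ⟨p⟩ := h
  induction p with
  | nil => rfl
  | cons hadj _ ih => exact (hP _ _ hadj).trans ih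

lemma isBridge_of_forall_adj_iff {P : V → Prop} {u v : V} (hsep : ¬(P u ↔ P v))
    (hP : ∀ a b, G.Adj a b → s(a, b) ≠ s(u, v) → (P a ↔ P b)) : G.IsBridge s(u, v) := by
  refine isBridge_iff.mpr fun h ↦ hsep (h.iff_of_forall_adj fun a b hab ↦ ?_)
  rw [deleteEdges_adj, Set.mem_singleton_iff] at hab
  exact hP a b hab.1 hab.2

lemma isAcyclic_of_forall_adj_exists_cut
    (h : ∀ u v, G.Adj u v → ∃ P : V → Prop,
      ¬(P u ↔ P v) ∧ ∀ a b, G.Adj a b → s(a, b) ≠ s(u, v) → (P a ↔ P b)) :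
    G.IsAcyclic :=
  isAcyclic_iff_forall_adj_isBridge.mpr fun u v huv ↦
    let ⟨_, hsep, hP⟩ := h u v huv
    isBridge_of_forall_adj_iff hsep hP

lemma IsAcyclic.card_edgeSet_add_one_le [Finite V] [Nonempty V] (h : G.IsAcyclic) :
    Nat.card G.edgeSet + 1 ≤ Nat.card V := by
  obtain ⟨T, hle, -, hT⟩ := connected_top.exists_isTree_le_of_le_of_isAcyclic le_top h
  rw [← (isTree_iff_connected_and_card.mp hT).2, Nat.card_coe_set_eq, Nat.card_coe_set_eq]
  exact Nat.add_le_add_right (Set.ncard_le_ncard (edgeSet_mono hle) (Set.toFinite _)) 1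

lemma IsAcyclic.isTree_of_card_edgeSet [Finite V] (h : G.IsAcyclic)
    (hcard : Nat.card G.edgeSet + 1 = Nat.card V) : G.IsTree := by
  have : Nonempty V := Nat.card_pos_iff.mp (by omega) |>.1
  obtain ⟨T, hle, -, hT⟩ := connected_top.exists_isTree_le_of_le_of_isAcyclic le_top h
  have hTcard := (isTree_iff_connected_and_card.mp hT).2
  rw [Nat.card_coe_set_eq] at hcard hTcard
  have : G.edgeSet = T.edgeSet :=
    Set.eq_of_subset_of_ncard_le (edgeSet_mono hle) (by omega) (Set.toFinite _)
  rwa [edgeSet_inj.mp this]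

/-- `v` is a leaf. -/
lemma IsTree.exists_adj_forall_iff [Finite V] [Nontrivial V] (hG : G.IsTree) :
    ∃ v w, G.Adj v w ∧ ∀ P : V → Prop,
      (∀ a b, G.Adj a b → s(a, b) ≠ s(v, w) → (P a ↔ P b)) → ∀ u ≠ v, P u ↔ P w := by
  have := Fintype.ofFinite V
  classical
  obtain ⟨v, hv⟩ := hG.exists_vert_degree_one_of_nontrivial
  obtain ⟨w, hvw, -⟩ := degree_eq_one_iff_existsUnique_adj.mp hv
  refine ⟨v, w, hvw, fun P hP u hu ↦ ?_⟩
  have hconn := hG.connected.induce_compl_singleton_of_degree_eq_one hv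
  refine (hconn.preconnected ⟨u, hu⟩ ⟨w, hvw.ne.symm⟩).iff_of_forall_adj
    (G := G.induce {v}ᶜ) (P := fun z ↦ P z.1) fun a b hab ↦ hP a b hab fun heq ↦ ?_
  rcases Sym2.eq_iff.mp heq with ⟨ha, -⟩ | ⟨-, hb⟩
  exacts [a.2 ha, b.2 hb]

end SimpleGraph

lemma Finset.card_eq_one_or_card_sub_one_of_forall_ne_iff {α : Type*} [Fintype α]
    [DecidableEq α] {δ : Finset α} {v w : α} (hvw : ¬(v ∈ δ ↔ w ∈ δ))
    (h : ∀ u ≠ v, u ∈ δ ↔ w ∈ δ) : #δ = 1 ∨ #δ = Fintype.card α - 1 := by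
  by_cases hv : v ∈ δ
  · have hw : w ∉ δ := fun hw ↦ hvw (iff_of_true hv hw)
    left
    rw [card_eq_one]
    exact ⟨v, eq_singleton_iff_unique_mem.mpr ⟨hv, fun u hu ↦ not_not.mp fun hne ↦
      hw ((h u hne).mp hu)⟩⟩
  · have hw : w ∈ δ := not_not.mp fun hw ↦ hvw (iff_of_false hv hw)
    right
    have : δ = {v}ᶜ := by
      ext u
      by_cases hu : u = v
      · simp [hu, hv]
      · simp [hu, (h u hu).mpr hw]
    rw [this, card_compl, card_singleton]

section PrivatePair

variable {α : Type*} {Δ : Set (Finset α)} {δ : Finset α} {x y : α}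

def IsPrivatePair (Δ : Set (Finset α)) (δ : Finset α) (x y : α) : Prop :=
  ∀ δ' ∈ Δ, (x ∈ δ' ↔ y ∈ δ') ↔ δ' ≠ δ

lemma IsPrivatePair.symm (h : IsPrivatePair Δ δ x y) : IsPrivatePair Δ δ y x :=
  fun δ' hδ' ↦ iff_comm.trans (h δ' hδ')

lemma IsPrivatePair.not_iff (h : IsPrivatePair Δ δ x y) (hδ : δ ∈ Δ) : ¬(x ∈ δ ↔ y ∈ δ) :=
  fun hxy ↦ (h δ hδ).mp hxy rfl

lemma IsPrivatePair.eq {δ' : Finset α} (h : IsPrivatePair Δ δ x y) (h' : IsPrivatePair Δ δ' x y)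
    (hδ : δ ∈ Δ) : δ = δ' :=
  not_not.mp fun hne ↦ h.not_iff hδ ((h' δ hδ).mpr hne)

lemma exists_isPrivatePair_of_pstab_ne [DecidableEq α]
    (h : pstab (Equiv.Perm α) (Δ \ {δ}) ≠ pstab (Equiv.Perm α) Δ) :
    ∃ x y, IsPrivatePair Δ δ x y := by
  obtain ⟨g, hg, hgΔ⟩ := SetLike.exists_of_lt
    (lt_of_le_of_ne (pstab_anti Set.sdiff_subset) h.symm)
  have hfix : ∀ δ' ∈ Δ, δ' ≠ δ → g • δ' = δ' := fun δ' hδ' hne ↦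
    mem_pstab.mp hg δ' ⟨hδ', hne⟩
  obtain ⟨δ₁, hδ₁, hmove⟩ := not_forall₂.mp (mt mem_pstab.mpr hgΔ)
  obtain rfl : δ₁ = δ := not_not.mp fun hne ↦ hmove (hfix δ₁ hδ₁ hne)
  obtain ⟨x, hx, hgx⟩ : ∃ x ∈ δ₁, g x ∉ δ₁ := by
    by_contra! hall
    refine hmove (eq_of_subset_of_card_le (fun _ hz ↦ ?_) (card_smul_finset g δ₁).ge)
    obtain ⟨z, hzδ, rfl⟩ := mem_smul_finset.mp hz
    exact hall z hzδ
  refine ⟨x, g x, fun δ' hδ' ↦ ?_⟩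
  by_cases hne : δ' = δ₁
  · subst hne
    simp [hx, hgx]
  · rw [← hfix δ' hδ' hne, ← Equiv.Perm.smul_def, smul_mem_smul_finset_iff, hfix δ' hδ' hne]
    simp [hne]

lemma exists_graph_of_isPrivatePair [Finite α] (x y : Finset α → α)
    (hxy : ∀ δ ∈ Δ, IsPrivatePair Δ δ (x δ) (y δ)) :
    ∃ G : SimpleGraph α, Δ.ncard ≤ Nat.card G.edgeSet ∧
      ∀ u v, G.Adj u v → ∃ δ ∈ Δ, ¬(u ∈ δ ↔ v ∈ δ) ∧
        ∀ a b, G.Adj a b → s(a, b) ≠ s(u, v) → (a ∈ δ ↔ b ∈ δ) := by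
  let e : Finset α → Sym2 α := fun δ ↦ s(x δ, y δ)
  let G := SimpleGraph.fromEdgeSet (e '' Δ)
  have hlabel : ∀ δ a b, s(a, b) = e δ → δ ∈ Δ → IsPrivatePair Δ δ a b := by
    intro δ a b hab hδ
    rcases Sym2.eq_iff.mp hab with ⟨rfl, rfl⟩ | ⟨rfl, rfl⟩
    exacts [hxy δ hδ, (hxy δ hδ).symm]
  have hadj : ∀ a b, G.Adj a b → ∃ δ ∈ Δ, s(a, b) = e δ ∧ IsPrivatePair Δ δ a b := by
    intro a b hab
    obtain ⟨δ, hδ, he⟩ := (SimpleGraph.fromEdgeSet_adj _).mp hab |>.1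
    exact ⟨δ, hδ, he.symm, hlabel δ a b he.symm hδ⟩
  refine ⟨G, Set.ncard_le_ncard_of_injOn e (fun δ hδ ↦ ?_) (fun δ hδ δ' hδ' he ↦ ?_)
    (Set.toFinite _), fun u v huv ↦ ?_⟩
  · exact (SimpleGraph.fromEdgeSet_adj _).mpr
      ⟨⟨δ, hδ, rfl⟩, fun hxy' ↦ (hxy δ hδ).not_iff hδ (iff_of_eq (congrArg (· ∈ δ) hxy'))⟩
  · exact (hxy δ hδ).eq (hlabel _ _ _ he hδ') hδ
  obtain ⟨δ, hδ, he, hpriv⟩ := hadj u v huv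
  refine ⟨δ, hδ, hpriv.not_iff hδ, fun a b hab hne ↦ ?_⟩
  obtain ⟨δ', -, he', hpriv'⟩ := hadj a b hab
  exact (hpriv' δ hδ).mpr fun h ↦ hne (he'.trans (h ▸ he.symm))

theorem ncard_le_card_sub_two_of_isPrivatePair [Fintype α] [DecidableEq α]
    (hα : 2 ≤ Fintype.card α) (h : ∀ δ ∈ Δ, ∃ x y, IsPrivatePair Δ δ x y) :
    (∃ δ ∈ Δ, #δ = 1 ∨ #δ = Fintype.card α - 1) ∨ Δ.ncard ≤ Fintype.card α - 2 := by
  have : Nontrivial α := Fintype.one_lt_card_iff_nontrivial.mp hα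
  choose! x y hxy using h
  obtain ⟨G, hcard, hcut⟩ := exists_graph_of_isPrivatePair x y hxy
  have hacyc : G.IsAcyclic := SimpleGraph.isAcyclic_of_forall_adj_exists_cut fun u v huv ↦
    let ⟨δ, _, hsep, hother⟩ := hcut u v huv
    ⟨(· ∈ δ), hsep, hother⟩
  have hforest := hacyc.card_edgeSet_add_one_le
  rw [Nat.card_eq_fintype_card (α := α)] at hforest
  refine or_iff_not_imp_right.mpr fun hlarge ↦ ?_
  have hT := hacyc.isTree_of_card_edgeSet (by rw [Nat.card_eq_fintype_card (α := α)]; omega)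
  obtain ⟨v, w, hvw, hleaf⟩ := hT.exists_adj_forall_iff
  obtain ⟨δ, hδ, hsep, hother⟩ := hcut v w hvw
  exact ⟨δ, hδ, card_eq_one_or_card_sub_one_of_forall_ne_iff hsep (hleaf (· ∈ δ) hother)⟩

end PrivatePair

/-- Lemma 2.5: if `n ≥ 2` and `Δ` is a set of subsets of `{1,…,n}` that is independent
for the action of `Sₙ` on the power set, then either some `δ ∈ Δ` has size `1` or `n-1`,
or `|Δ| ≤ n - 2`. -/
theorem independent_subsets_bound {n : ℕ} (hn : 2 ≤ n) (Δ : Set (Finset (Fin n)))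
    (hind : ∀ Δ' : Set (Finset (Fin n)), Δ' ⊂ Δ →
      pstab (Equiv.Perm (Fin n)) Δ' ≠ pstab (Equiv.Perm (Fin n)) Δ) :
    (∃ δ ∈ Δ, δ.card = 1 ∨ δ.card = n - 1) ∨ Δ.ncard ≤ n - 2 := by
  have hpriv : ∀ δ ∈ Δ, ∃ x y, IsPrivatePair Δ δ x y := fun δ hδ ↦
    exists_isPrivatePair_of_pstab_ne (hind _ (Set.sdiff_singleton_ssubset.mpr hδ))
  simpa using ncard_le_card_sub_two_of_isPrivatePair (by simpa using hn) hpriv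
end

section
/- Let k ≥ 3 and n with 2k ≤ n, and consider the set Λ of k-subsets of {1,…,n} consisting of {1,…,k−1,j} for j = k, k+1, …, n−2 together with {i, n−k+1, n−k+2, …, n−1} for i = 1, …, k−2. Then Λ is a minimal base of size n−3 for the action of S_n on k-subsets; in particular B(S_n, Ω_k) ≥ n − 3. -/
open Pointwise

/-- The explicit family of `k`-subsets of `{1,…,n}` (modelled on `Fin n` via
`x ↦ x.val + 1`): the sets `{1,…,k-1,j}` for `j = k,…,n-2` together with the sets
`{i, n-k+1, n-k+2, …, n-1}` for `i = 1,…,k-2`. -/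
def lowerBase (n k : ℕ) : Set (Finset (Fin n)) :=
  {s | ∃ j : ℕ, k ≤ j ∧ j ≤ n - 2 ∧
      s = Finset.univ.filter (fun x : Fin n => (x : ℕ) + 1 ≤ k - 1 ∨ (x : ℕ) + 1 = j)} ∪
  {s | ∃ i : ℕ, 1 ≤ i ∧ i ≤ k - 2 ∧
      s = Finset.univ.filter (fun x : Fin n =>
        (x : ℕ) + 1 = i ∨ (n - k + 1 ≤ (x : ℕ) + 1 ∧ (x : ℕ) + 1 ≤ n - 1))}

lemma smul_filter {n : ℕ} (g : Equiv.Perm (Fin n)) (p : Fin n → Prop) [DecidablePred p]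
    (h : ∀ x, p x ↔ p (g x)) :
    g • (Finset.univ.filter p) = Finset.univ.filter p := by
  ext y
  simp only [Finset.mem_smul_finset, Finset.mem_filter, Finset.mem_univ, true_and,
    Equiv.Perm.smul_def]
  constructor
  · rintro ⟨x, hx, rfl⟩
    exact (h x).mp hx
  · intro hy
    exact ⟨g⁻¹ y, (h (g⁻¹ y)).mpr (by simpa using hy), by simp⟩

lemma filter_iff_of_smul {n : ℕ} (g : Equiv.Perm (Fin n)) (p : Fin n → Prop) [DecidablePred p]
    (h : g • (Finset.univ.filter p) = Finset.univ.filter p) :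
    ∀ x, p x ↔ p (g x) := by
  intro x
  constructor
  · intro hx
    have : g • x ∈ g • (Finset.univ.filter p) :=
      Finset.smul_mem_smul_finset (by simp [hx])
    rw [h] at this
    simpa [Equiv.Perm.smul_def] using this
  · intro hx
    have : g x ∈ g • (Finset.univ.filter p) := by rw [h]; simp [hx]
    simp only [Finset.mem_smul_finset, Finset.mem_filter, Finset.mem_univ, true_and,
      Equiv.Perm.smul_def] at this
    obtain ⟨z, hz, hzx⟩ := this
    rwa [g.injective hzx] at hz

lemma swap_filter {n : ℕ} (a b : Fin n) (p : Fin n → Prop) [DecidablePred p]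
    (h : p a ↔ p b) :
    ∀ x, p x ↔ p (Equiv.swap a b x) := by
  intro x
  rcases eq_or_ne x a with rfl | hxa
  · rwa [Equiv.swap_apply_left]
  rcases eq_or_ne x b with rfl | hxb
  · rw [Equiv.swap_apply_right]; exact h.symm
  · rw [Equiv.swap_apply_of_ne_of_ne hxa hxb]


/-- For `k ≥ 3` and `n ≥ 2k`, the explicit family `lowerBase n k` is a minimal base of
size `n - 3` for the action of `Sₙ` on `k`-subsets; in particular `B(Sₙ, Ω_k) ≥ n - 3`. -/
theorem lowerBase_isMinimalBase {n k : ℕ} (hk : 3 ≤ k) (hkn : 2 * k ≤ n) :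
    pstab (Equiv.Perm (Fin n)) (lowerBase n k) = ⊥ ∧
    (∀ Δ : Set (Finset (Fin n)), Δ ⊂ lowerBase n k → pstab (Equiv.Perm (Fin n)) Δ ≠ ⊥) ∧
    (lowerBase n k).ncard = n - 3 := by
  refine ⟨?_, ?_, ?_⟩
  · -- the pointwise stabilizer is trivial
    rw [Subgroup.eq_bot_iff_forall]
    intro g hg
    simp only [pstab, Subgroup.mem_iInf, MulAction.mem_stabilizer_iff] at hg
    have hA : ∀ j : ℕ, k ≤ j → j ≤ n - 2 → ∀ x : Fin n,
        ((x : ℕ) + 1 ≤ k - 1 ∨ (x : ℕ) + 1 = j) ↔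
        ((g x : ℕ) + 1 ≤ k - 1 ∨ (g x : ℕ) + 1 = j) := by
      intro j hj1 hj2
      exact filter_iff_of_smul g _ (hg _ (Set.mem_union_left _ ⟨j, hj1, hj2, rfl⟩))
    have hB : ∀ i : ℕ, 1 ≤ i → i ≤ k - 2 → ∀ x : Fin n,
        ((x : ℕ) + 1 = i ∨ (n - k + 1 ≤ (x : ℕ) + 1 ∧ (x : ℕ) + 1 ≤ n - 1)) ↔
        ((g x : ℕ) + 1 = i ∨ (n - k + 1 ≤ (g x : ℕ) + 1 ∧ (g x : ℕ) + 1 ≤ n - 1)) := by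
      intro i hi1 hi2
      exact filter_iff_of_smul g _ (hg _ (Set.mem_union_right _ ⟨i, hi1, hi2, rfl⟩))
    have h1 : ∀ x : Fin n, (x : ℕ) + 1 ≤ k - 1 → (g x : ℕ) + 1 ≤ k - 1 := by
      intro x hx
      have a1 := (hA k le_rfl (by omega) x).mp (Or.inl hx)
      have a2 := (hA (k + 1) (by omega) (by omega) x).mp (Or.inl hx)
      omega
    have h1' : ∀ x : Fin n, (g x : ℕ) + 1 ≤ k - 1 → (x : ℕ) + 1 ≤ k - 1 := by
      intro x hx
      have a1 := (hA k le_rfl (by omega) x).mpr (Or.inl hx)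
      have a2 := (hA (k + 1) (by omega) (by omega) x).mpr (Or.inl hx)
      omega
    have h2 : ∀ x : Fin n, k ≤ (x : ℕ) + 1 → (x : ℕ) + 1 ≤ n - 2 → g x = x := by
      intro x hx1 hx2
      have a := (hA ((x : ℕ) + 1) hx1 hx2 x).mp (Or.inr rfl)
      have hx3 : ¬ ((g x : ℕ) + 1 ≤ k - 1) := by
        intro hc; have := h1' x hc; omega
      exact Fin.val_injective (by omega)
    have h3 : ∀ x : Fin n, (x : ℕ) + 1 ≤ k - 2 → g x = x := by
      intro x hx
      have a := (hB ((x : ℕ) + 1) (by omega) hx x).mp (Or.inl rfl)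
      have b := h1 x (by omega)
      exact Fin.val_injective (by omega)
    have h4 : ∀ x : Fin n, (x : ℕ) + 1 = k - 1 → g x = x := by
      intro x hx
      have b := h1 x (by omega)
      by_cases hc : (g x : ℕ) + 1 ≤ k - 2
      · exfalso
        have e := g.injective (h3 (g x) hc)
        rw [e] at hc; omega
      · exact Fin.val_injective (by omega)
    have h5 : ∀ x : Fin n, (x : ℕ) + 1 = n - 1 → g x = x := by
      intro x hx
      have a := (hB 1 le_rfl (by omega) x).mp (Or.inr ⟨by omega, by omega⟩)
      rcases a with a | ⟨a1, a2⟩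
      · exfalso
        have e := g.injective (h3 (g x) (by omega))
        rw [e] at a; omega
      · by_cases hc : (g x : ℕ) + 1 ≤ n - 2
        · exfalso
          have e := g.injective (h2 (g x) (by omega) hc)
          rw [e] at hc; omega
        · exact Fin.val_injective (by omega)
    have hbelow : ∀ x : Fin n, (x : ℕ) + 1 ≤ n - 1 → g x = x := by
      intro x hx
      by_cases c3 : (x : ℕ) + 1 ≤ k - 2
      · exact h3 x c3
      by_cases c4 : (x : ℕ) + 1 = k - 1
      · exact h4 x c4
      by_cases c5 : (x : ℕ) + 1 = n - 1
      · exact h5 x c5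
      · exact h2 x (by omega) (by omega)
    have hall : ∀ x : Fin n, g x = x := by
      intro x
      have hxlt := x.isLt
      by_cases hc : (x : ℕ) + 1 ≤ n - 1
      · exact hbelow x hc
      · have hglt := (g x).isLt
        by_cases hgc : (g x : ℕ) + 1 ≤ n - 1
        · exfalso
          have e := g.injective (hbelow (g x) hgc)
          rw [e] at hgc; omega
        · exact Fin.val_injective (by omega)
    exact Equiv.ext fun x => by simp [hall x]
  · -- minimality
    intro Δ hΔ hbot
    obtain ⟨s, hsΛ, hsΔ⟩ := Set.exists_of_ssubset hΔ
    have hsub := hΔ.subset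
    have key : ∀ a b : Fin n, a ≠ b →
        (∀ t ∈ Δ, Equiv.swap a b • t = t) → False := by
      intro a b hab hfix
      have hg : Equiv.swap a b ∈ pstab (Equiv.Perm (Fin n)) Δ := by
        simp only [pstab, Subgroup.mem_iInf, MulAction.mem_stabilizer_iff]
        exact hfix
      rw [hbot, Subgroup.mem_bot] at hg
      have : Equiv.swap a b a = a := by rw [hg]; rfl
      rw [Equiv.swap_apply_left] at this
      exact hab this.symm
    rcases hsΛ with ⟨j, hj1, hj2, rfl⟩ | ⟨i, hi1, hi2, rfl⟩
    · by_cases hjsmall : j ≤ n - k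
      · refine key ⟨j - 1, by omega⟩ ⟨n - 1, by omega⟩
          (by simp only [ne_eq, Fin.mk.injEq]; omega) ?_
        intro t ht
        rcases hsub ht with ⟨j', hj'1, hj'2, rfl⟩ | ⟨i', hi'1, hi'2, rfl⟩
        · have hne : j' ≠ j := by rintro rfl; exact hsΔ ht
          apply smul_filter
          apply swap_filter
          simp only [Fin.val_mk]
          omega
        · apply smul_filter
          apply swap_filter
          simp only [Fin.val_mk]
          omega
      · refine key ⟨j - 1, by omega⟩ ⟨n - 2, by omega⟩
          (by simp only [ne_eq, Fin.mk.injEq]; omega) ?_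
        intro t ht
        rcases hsub ht with ⟨j', hj'1, hj'2, rfl⟩ | ⟨i', hi'1, hi'2, rfl⟩
        · have hne : j' ≠ j := by rintro rfl; exact hsΔ ht
          apply smul_filter
          apply swap_filter
          simp only [Fin.val_mk]
          omega
        · apply smul_filter
          apply swap_filter
          simp only [Fin.val_mk]
          omega
    · refine key ⟨i - 1, by omega⟩ ⟨k - 2, by omega⟩
        (by simp only [ne_eq, Fin.mk.injEq]; omega) ?_
      intro t ht
      rcases hsub ht with ⟨j', hj'1, hj'2, rfl⟩ | ⟨i', hi'1, hi'2, rfl⟩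
      · apply smul_filter
        apply swap_filter
        simp only [Fin.val_mk]
        omega
      · have hne : i' ≠ i := by rintro rfl; exact hsΔ ht
        apply smul_filter
        apply swap_filter
        simp only [Fin.val_mk]
        omega
  · -- cardinality
    have hrw : lowerBase n k =
        (fun j : ℕ => Finset.univ.filter
          (fun x : Fin n => (x : ℕ) + 1 ≤ k - 1 ∨ (x : ℕ) + 1 = j)) '' (Set.Icc k (n - 2)) ∪
        (fun i : ℕ => Finset.univ.filter
          (fun x : Fin n => (x : ℕ) + 1 = i ∨
            (n - k + 1 ≤ (x : ℕ) + 1 ∧ (x : ℕ) + 1 ≤ n - 1))) '' (Set.Icc 1 (k - 2)) := by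
      unfold lowerBase
      ext s
      constructor
      · rintro (⟨j, hj1, hj2, rfl⟩ | ⟨i, hi1, hi2, rfl⟩)
        · exact Or.inl ⟨j, Set.mem_Icc.mpr ⟨hj1, hj2⟩, rfl⟩
        · exact Or.inr ⟨i, Set.mem_Icc.mpr ⟨hi1, hi2⟩, rfl⟩
      · rintro (⟨j, hj, rfl⟩ | ⟨i, hi, rfl⟩)
        · exact Or.inl ⟨j, (Set.mem_Icc.mp hj).1, (Set.mem_Icc.mp hj).2, rfl⟩
        · exact Or.inr ⟨i, (Set.mem_Icc.mp hi).1, (Set.mem_Icc.mp hi).2, rfl⟩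
    have hinjA : Set.InjOn (fun j : ℕ => Finset.univ.filter
        (fun x : Fin n => (x : ℕ) + 1 ≤ k - 1 ∨ (x : ℕ) + 1 = j)) (Set.Icc k (n - 2)) := by
      intro j hj j' hj' heq
      rw [Set.mem_Icc] at hj hj'
      have hx : (⟨j - 1, by omega⟩ : Fin n) ∈ Finset.univ.filter
          (fun x : Fin n => (x : ℕ) + 1 ≤ k - 1 ∨ (x : ℕ) + 1 = j) := by
        simp only [Finset.mem_filter, Finset.mem_univ, true_and, Fin.val_mk]
        omega
      beta_reduce at heq
      rw [heq] at hx
      simp only [Finset.mem_filter, Finset.mem_univ, true_and, Fin.val_mk] at hx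
      omega
    have hinjB : Set.InjOn (fun i : ℕ => Finset.univ.filter
        (fun x : Fin n => (x : ℕ) + 1 = i ∨
          (n - k + 1 ≤ (x : ℕ) + 1 ∧ (x : ℕ) + 1 ≤ n - 1))) (Set.Icc 1 (k - 2)) := by
      intro i hi i' hi' heq
      rw [Set.mem_Icc] at hi hi'
      have hx : (⟨i - 1, by omega⟩ : Fin n) ∈ Finset.univ.filter
          (fun x : Fin n => (x : ℕ) + 1 = i ∨
            (n - k + 1 ≤ (x : ℕ) + 1 ∧ (x : ℕ) + 1 ≤ n - 1)) := by
        simp only [Finset.mem_filter, Finset.mem_univ, true_and, Fin.val_mk]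
        omega
      beta_reduce at heq
      rw [heq] at hx
      simp only [Finset.mem_filter, Finset.mem_univ, true_and, Fin.val_mk] at hx
      omega
    have hdisj : Disjoint
        ((fun j : ℕ => Finset.univ.filter
          (fun x : Fin n => (x : ℕ) + 1 ≤ k - 1 ∨ (x : ℕ) + 1 = j)) '' (Set.Icc k (n - 2)))
        ((fun i : ℕ => Finset.univ.filter
          (fun x : Fin n => (x : ℕ) + 1 = i ∨
            (n - k + 1 ≤ (x : ℕ) + 1 ∧ (x : ℕ) + 1 ≤ n - 1))) '' (Set.Icc 1 (k - 2))) := by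
      rw [Set.disjoint_left]
      rintro s ⟨j, hj, rfl⟩ ⟨i, hi, heq⟩
      rw [Set.mem_Icc] at hj hi
      have hx : (⟨k - 2, by omega⟩ : Fin n) ∈ Finset.univ.filter
          (fun x : Fin n => (x : ℕ) + 1 ≤ k - 1 ∨ (x : ℕ) + 1 = j) := by
        simp only [Finset.mem_filter, Finset.mem_univ, true_and, Fin.val_mk]
        omega
      beta_reduce at heq
      rw [← heq] at hx
      simp only [Finset.mem_filter, Finset.mem_univ, true_and, Fin.val_mk] at hx
      omega
    rw [hrw, Set.ncard_union_eq hdisj ((Set.finite_Icc _ _).image _)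
        ((Set.finite_Icc _ _).image _),
      Set.ncard_image_of_injOn hinjA, Set.ncard_image_of_injOn hinjB,
      ← Finset.coe_Icc, ← Finset.coe_Icc, Set.ncard_coe_finset, Set.ncard_coe_finset,
      Nat.card_Icc, Nat.card_Icc]
    omega
end

section
/- Let k ≥ 3 and n = 2k + 2. The set consisting of the k-subsets {1,…,k+1} \ {i} for i = 1,…,k together with {k+2,…,2k+2} \ {i} for i = k+2,…,2k+1 is a minimal base of size 2k = n − 2 for the action of S_n on k-subsets. -/
open Pointwise

/-- For `n = 2k+2`, the family of `k`-subsets `{1,…,k+1} \ {i}` for `i = 1,…,k`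
together with `{k+2,…,2k+2} \ {i}` for `i = k+2,…,2k+1`, modelled on `Fin (2k+2)` via
`x ↦ x.val + 1`. -/
def specialBase (k : ℕ) : Set (Finset (Fin (2 * k + 2))) :=
  {s | ∃ i : ℕ, 1 ≤ i ∧ i ≤ k ∧
      s = Finset.univ.filter (fun x : Fin (2 * k + 2) =>
        (x : ℕ) + 1 ≤ k + 1 ∧ (x : ℕ) + 1 ≠ i)} ∪
  {s | ∃ i : ℕ, k + 2 ≤ i ∧ i ≤ 2 * k + 1 ∧
      s = Finset.univ.filter (fun x : Fin (2 * k + 2) =>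
        k + 2 ≤ (x : ℕ) + 1 ∧ (x : ℕ) + 1 ≤ 2 * k + 2 ∧ (x : ℕ) + 1 ≠ i)}

/-- The first kind of block. -/
def Af (k i : ℕ) : Finset (Fin (2 * k + 2)) :=
  Finset.univ.filter (fun x : Fin (2 * k + 2) =>
    (x : ℕ) + 1 ≤ k + 1 ∧ (x : ℕ) + 1 ≠ i)

/-- The second kind of block. -/
def Bf (k i : ℕ) : Finset (Fin (2 * k + 2)) :=
  Finset.univ.filter (fun x : Fin (2 * k + 2) =>
    k + 2 ≤ (x : ℕ) + 1 ∧ (x : ℕ) + 1 ≤ 2 * k + 2 ∧ (x : ℕ) + 1 ≠ i)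

lemma mem_Af {k i : ℕ} {x : Fin (2 * k + 2)} :
    x ∈ Af k i ↔ (x : ℕ) + 1 ≤ k + 1 ∧ (x : ℕ) + 1 ≠ i := by
  simp [Af]

lemma mem_Bf {k i : ℕ} {x : Fin (2 * k + 2)} :
    x ∈ Bf k i ↔ k + 2 ≤ (x : ℕ) + 1 ∧ (x : ℕ) + 1 ≠ i := by
  have := x.isLt
  simp only [Bf, Finset.mem_filter, Finset.mem_univ, true_and]
  omega

lemma specialBase_eq (k : ℕ) :
    specialBase k = (Af k) '' Set.Icc 1 k ∪ (Bf k) '' Set.Icc (k + 2) (2 * k + 1) := by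
  ext s
  simp only [specialBase, Set.mem_union, Set.mem_setOf_eq, Set.mem_image, Set.mem_Icc, Af, Bf]
  constructor
  · rintro (⟨i, h1, h2, rfl⟩ | ⟨i, h1, h2, rfl⟩)
    exacts [Or.inl ⟨i, ⟨h1, h2⟩, rfl⟩, Or.inr ⟨i, ⟨h1, h2⟩, rfl⟩]
  · rintro (⟨i, ⟨h1, h2⟩, rfl⟩ | ⟨i, ⟨h1, h2⟩, rfl⟩)
    exacts [Or.inl ⟨i, h1, h2, rfl⟩, Or.inr ⟨i, h1, h2, rfl⟩]

lemma perm_smul_finset_eq {α : Type*} [DecidableEq α] (σ : Equiv.Perm α) (t : Finset α)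
    (h : ∀ y ∈ t, σ y ∈ t) : σ • t = t := by
  have hsub : σ • t ⊆ t := by
    intro y hy
    rw [Finset.mem_smul_finset] at hy
    obtain ⟨z, hz, rfl⟩ := hy
    exact h z hz
  exact Finset.eq_of_subset_of_card_le hsub (le_of_eq (Finset.card_smul_finset σ t).symm)

/-- For `k ≥ 3` and `n = 2k + 2`, the family `specialBase k` is a minimal base of size
`2k = n - 2` for the action of `Sₙ` on `k`-subsets. -/
theorem specialBase_isMinimalBase {k : ℕ} (hk : 3 ≤ k) :
    pstab (Equiv.Perm (Fin (2 * k + 2))) (specialBase k) = ⊥ ∧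
    (∀ Δ : Set (Finset (Fin (2 * k + 2))), Δ ⊂ specialBase k →
      pstab (Equiv.Perm (Fin (2 * k + 2))) Δ ≠ ⊥) ∧
    (specialBase k).ncard = 2 * k := by
  refine ⟨?_, ?_, ?_⟩
  · rw [eq_bot_iff]
    intro g hg
    rw [mem_pstab] at hg
    have key : ∀ s ∈ specialBase k, ∀ x : Fin (2 * k + 2), g x ∈ s ↔ x ∈ s := by
      intro s hs x
      have h := hg s hs
      have h2 := Finset.smul_mem_smul_finset_iff (a := g) (b := x) (s := s)
      rwa [h, Equiv.Perm.smul_def] at h2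
    simp only [Subgroup.mem_bot]
    ext x
    simp only [Equiv.Perm.coe_one, id_eq]
    have hx := x.isLt
    have hgx := (g x).isLt
    have hA : ∀ i : ℕ, 1 ≤ i → i ≤ k →
        ((((g x : Fin (2*k+2)) : ℕ) + 1 ≤ k + 1 ∧ ((g x : Fin (2*k+2)) : ℕ) + 1 ≠ i) ↔
          ((x : ℕ) + 1 ≤ k + 1 ∧ (x : ℕ) + 1 ≠ i)) := by
      intro i h1 h2
      have := key (Af k i) (by
        rw [specialBase_eq]; exact Or.inl ⟨i, Set.mem_Icc.mpr ⟨h1, h2⟩, rfl⟩) x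
      simpa [mem_Af] using this
    have hB : ∀ i : ℕ, k + 2 ≤ i → i ≤ 2 * k + 1 →
        ((k + 2 ≤ ((g x : Fin (2*k+2)) : ℕ) + 1 ∧ ((g x : Fin (2*k+2)) : ℕ) + 1 ≠ i) ↔
          (k + 2 ≤ (x : ℕ) + 1 ∧ (x : ℕ) + 1 ≠ i)) := by
      intro i h1 h2
      have := key (Bf k i) (by
        rw [specialBase_eq]; exact Or.inr ⟨i, Set.mem_Icc.mpr ⟨h1, h2⟩, rfl⟩) x
      simpa [mem_Bf] using this
    have f1 := hA 1 (by omega) (by omega)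
    have f2 := hA 2 (by omega) (by omega)
    have g1 := hB (k + 2) (by omega) (by omega)
    have g2 := hB (k + 3) (by omega) (by omega)
    have fx : (x : ℕ) + 1 ≤ k → _ := fun h => hA ((x : ℕ) + 1) (by omega) h
    have fgx : ((g x : Fin (2*k+2)) : ℕ) + 1 ≤ k → _ :=
      fun h => hA (((g x : Fin (2*k+2)) : ℕ) + 1) (by omega) h
    have fx' : k + 2 ≤ (x : ℕ) + 1 → (x : ℕ) + 1 ≤ 2 * k + 1 → _ :=
      fun h1 h2 => hB ((x : ℕ) + 1) h1 h2
    have fgx' : k + 2 ≤ ((g x : Fin (2*k+2)) : ℕ) + 1 →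
        ((g x : Fin (2*k+2)) : ℕ) + 1 ≤ 2 * k + 1 → _ :=
      fun h1 h2 => hB (((g x : Fin (2*k+2)) : ℕ) + 1) h1 h2
    have hval : ((g x : Fin (2*k+2)) : ℕ) = (x : ℕ) := by omega
    exact hval
  · intro Δ hΔ hbot
    obtain ⟨s, hs, hsΔ⟩ := Set.not_subset.mp hΔ.2
    have hsub : Δ ⊆ specialBase k := hΔ.1
    rw [specialBase_eq] at hs
    rcases hs with ⟨i, hi, rfl⟩ | ⟨i, hi, rfl⟩
    · rw [Set.mem_Icc] at hi
      obtain ⟨hi1, hi2⟩ := hi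
      obtain ⟨a, hav⟩ : ∃ a : Fin (2 * k + 2), (a : ℕ) = i - 1 := ⟨⟨i - 1, by omega⟩, rfl⟩
      obtain ⟨b, hbv⟩ : ∃ b : Fin (2 * k + 2), (b : ℕ) = k := ⟨⟨k, by omega⟩, rfl⟩
      have hab : a ≠ b := by intro h; rw [h] at hav; omega
      have hmem : Equiv.swap a b ∈ pstab (Equiv.Perm (Fin (2 * k + 2))) Δ := by
        rw [mem_pstab]
        intro t ht
        have ht' := hsub ht
        rw [specialBase_eq] at ht'
        rcases ht' with ⟨j, hj, rfl⟩ | ⟨j, hj, rfl⟩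
        · rw [Set.mem_Icc] at hj
          have hji : j ≠ i := by rintro rfl; exact hsΔ ht
          apply perm_smul_finset_eq
          intro y hy
          rw [mem_Af] at hy
          rcases eq_or_ne y a with rfl | hya
          · rw [Equiv.swap_apply_left, mem_Af]; omega
          rcases eq_or_ne y b with rfl | hyb
          · rw [Equiv.swap_apply_right, mem_Af]; omega
          · rw [Equiv.swap_apply_of_ne_of_ne hya hyb, mem_Af]; omega
        · rw [Set.mem_Icc] at hj
          apply perm_smul_finset_eq
          intro y hy
          rw [mem_Bf] at hy
          have hya : y ≠ a := by rintro rfl; omega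
          have hyb : y ≠ b := by rintro rfl; omega
          rw [Equiv.swap_apply_of_ne_of_ne hya hyb, mem_Bf]; omega
      rw [hbot, Subgroup.mem_bot] at hmem
      have hb2 : b = a := by
        have h1 := Equiv.ext_iff.mp hmem a
        rwa [Equiv.swap_apply_left, Equiv.Perm.one_apply] at h1
      exact hab hb2.symm
    · rw [Set.mem_Icc] at hi
      obtain ⟨hi1, hi2⟩ := hi
      obtain ⟨a, hav⟩ : ∃ a : Fin (2 * k + 2), (a : ℕ) = i - 1 := ⟨⟨i - 1, by omega⟩, rfl⟩
      obtain ⟨b, hbv⟩ : ∃ b : Fin (2 * k + 2), (b : ℕ) = 2 * k + 1 := ⟨⟨2 * k + 1, by omega⟩, rfl⟩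
      have hab : a ≠ b := by intro h; rw [h] at hav; omega
      have hmem : Equiv.swap a b ∈ pstab (Equiv.Perm (Fin (2 * k + 2))) Δ := by
        rw [mem_pstab]
        intro t ht
        have ht' := hsub ht
        rw [specialBase_eq] at ht'
        rcases ht' with ⟨j, hj, rfl⟩ | ⟨j, hj, rfl⟩
        · rw [Set.mem_Icc] at hj
          apply perm_smul_finset_eq
          intro y hy
          rw [mem_Af] at hy
          have hya : y ≠ a := by rintro rfl; omega
          have hyb : y ≠ b := by rintro rfl; omega
          rw [Equiv.swap_apply_of_ne_of_ne hya hyb, mem_Af]; omega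
        · rw [Set.mem_Icc] at hj
          have hji : j ≠ i := by rintro rfl; exact hsΔ ht
          apply perm_smul_finset_eq
          intro y hy
          rw [mem_Bf] at hy
          rcases eq_or_ne y a with rfl | hya
          · rw [Equiv.swap_apply_left, mem_Bf]; omega
          rcases eq_or_ne y b with rfl | hyb
          · rw [Equiv.swap_apply_right, mem_Bf]; omega
          · rw [Equiv.swap_apply_of_ne_of_ne hya hyb, mem_Bf]; omega
      rw [hbot, Subgroup.mem_bot] at hmem
      have hb2 : b = a := by
        have h1 := Equiv.ext_iff.mp hmem a
        rwa [Equiv.swap_apply_left, Equiv.Perm.one_apply] at h1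
      exact hab hb2.symm
  · rw [specialBase_eq]
    have hinjA : Set.InjOn (Af k) (Set.Icc 1 k) := by
      intro i hi j hj hij
      rw [Set.mem_Icc] at hi hj
      by_contra hne
      have hlt : i - 1 < 2 * k + 2 := by omega
      have h1 : (⟨i - 1, hlt⟩ : Fin (2 * k + 2)) ∈ Af k j := by
        rw [mem_Af]; show i - 1 + 1 ≤ k + 1 ∧ i - 1 + 1 ≠ j; omega
      have h2 : (⟨i - 1, hlt⟩ : Fin (2 * k + 2)) ∉ Af k i := by
        rw [mem_Af]; show ¬(i - 1 + 1 ≤ k + 1 ∧ i - 1 + 1 ≠ i); omega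
      rw [hij] at h2
      exact h2 h1
    have hinjB : Set.InjOn (Bf k) (Set.Icc (k + 2) (2 * k + 1)) := by
      intro i hi j hj hij
      rw [Set.mem_Icc] at hi hj
      by_contra hne
      have hlt : i - 1 < 2 * k + 2 := by omega
      have h1 : (⟨i - 1, hlt⟩ : Fin (2 * k + 2)) ∈ Bf k j := by
        rw [mem_Bf]; show k + 2 ≤ i - 1 + 1 ∧ i - 1 + 1 ≠ j; omega
      have h2 : (⟨i - 1, hlt⟩ : Fin (2 * k + 2)) ∉ Bf k i := by
        rw [mem_Bf]; show ¬(k + 2 ≤ i - 1 + 1 ∧ i - 1 + 1 ≠ i); omega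
      rw [hij] at h2
      exact h2 h1
    have hdisj : Disjoint ((Af k) '' Set.Icc 1 k) ((Bf k) '' Set.Icc (k + 2) (2 * k + 1)) := by
      rw [Set.disjoint_left]
      rintro s ⟨i, hi, rfl⟩ ⟨j, hj, heq⟩
      rw [Set.mem_Icc] at hi hj
      have hlt : 2 * k + 1 < 2 * k + 2 := by omega
      have h1 : (⟨2 * k + 1, hlt⟩ : Fin (2 * k + 2)) ∈ Bf k j := by
        rw [mem_Bf]; show k + 2 ≤ 2 * k + 1 + 1 ∧ 2 * k + 1 + 1 ≠ j; omega
      have h2 : (⟨2 * k + 1, hlt⟩ : Fin (2 * k + 2)) ∉ Af k i := by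
        rw [mem_Af]; show ¬(2 * k + 1 + 1 ≤ k + 1 ∧ 2 * k + 1 + 1 ≠ i); omega
      rw [heq] at h1
      exact h2 h1
    rw [Set.ncard_union_eq hdisj ((Set.finite_Icc _ _).image _) ((Set.finite_Icc _ _).image _),
      Set.ncard_image_of_injOn hinjA, Set.ncard_image_of_injOn hinjB]
    rw [← Finset.coe_Icc, ← Finset.coe_Icc, Set.ncard_coe_finset, Set.ncard_coe_finset,
      Nat.card_Icc, Nat.card_Icc]
    omega
end

section
/- Let Ω be a finite set of size n and Λ a set of k-subsets of Ω with |Λ| ≥ 2 that is independent for the action of Sym(Ω) on k-subsets. Suppose Ω is the union of two intersecting members of Λ (so k > n/2). Then |Λ| ≤ n − 1 if n = k + 1, and |Λ| ≤ n − 2 if n > k + 1. -/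
open Pointwise

lemma flip_bound {α : Type*} [DecidableEq α] (M : Finset (Finset α)) :
    ∀ G : Finset α, G.Nonempty →
      (∀ s ∈ M, ∃ x ∈ G, ∃ y ∈ G, x ∈ s ∧ y ∉ s ∧ ∀ t ∈ M, t ≠ s → (x ∈ t ↔ y ∈ t)) →
      M.card + 1 ≤ G.card := by
  classical
  induction M using Finset.strongInduction with
  | _ M ih =>
    intro G hG hM
    rcases M.eq_empty_or_nonempty with rfl | ⟨s, hs⟩
    · simpa using hG.card_pos
    obtain ⟨x, hxG, y, hyG, hxs, hys, -⟩ := hM s hs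
    set G1 := G.filter (fun z => z ∈ s) with hG1def
    set G0 := G.filter (fun z => ¬ z ∈ s) with hG0def
    set M0 := (M.erase s).filter
      (fun t => ∃ p ∈ G0, ∃ q ∈ G0, p ∈ t ∧ q ∉ t ∧
        ∀ u ∈ M.erase s, u ≠ t → (p ∈ u ↔ q ∈ u)) with hM0def
    set M1 := (M.erase s) \ M0 with hM1def
    have herase : (M.erase s) ⊂ M := Finset.erase_ssubset hs
    have hM0e : M0 ⊆ M.erase s := Finset.filter_subset _ _
    have hM1e : M1 ⊆ M.erase s := Finset.sdiff_subset
    have hG1ne : G1.Nonempty := ⟨x, by simp [hG1def, hxG, hxs]⟩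
    have hG0ne : G0.Nonempty := ⟨y, by simp [hG0def, hyG, hys]⟩
    have h0 : M0.card + 1 ≤ G0.card := by
      refine ih M0 (lt_of_le_of_lt hM0e herase) G0 hG0ne ?_
      intro t ht
      rw [hM0def, Finset.mem_filter] at ht
      obtain ⟨hte, p, hp, q, hq, hpt, hqt, hag⟩ := ht
      exact ⟨p, hp, q, hq, hpt, hqt, fun u hu hut => hag u (hM0e hu) hut⟩
    have h1 : M1.card + 1 ≤ G1.card := by
      refine ih M1 (lt_of_le_of_lt hM1e herase) G1 hG1ne ?_
      intro t ht
      have htM : t ∈ M.erase s := hM1e ht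
      have htnot : t ∉ M0 := (Finset.mem_sdiff.mp ht).2
      obtain ⟨p, hp, q, hq, hpt, hqt, hag⟩ := hM t (Finset.mem_of_mem_erase htM)
      have hts : t ≠ s := Finset.ne_of_mem_erase htM
      have hps : p ∈ s ↔ q ∈ s := hag s hs (Ne.symm hts)
      by_cases hcase : p ∈ s
      · have hqs : q ∈ s := hps.mp hcase
        refine ⟨p, by simp [hG1def, hp, hcase] , q,
          by simp [hG1def, hq, hqs], hpt, hqt,
          fun u hu hut => hag u (Finset.mem_of_mem_erase (hM1e hu)) hut⟩
      · exfalso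
        apply htnot
        rw [hM0def, Finset.mem_filter]
        have hqs : q ∉ s := fun h => hcase (hps.mpr h)
        exact ⟨htM, p, by simp [hG0def, hp, hcase], q,
          by simp [hG0def, hq, hqs], hpt, hqt,
          fun u hu hut => hag u (Finset.mem_of_mem_erase hu) hut⟩
    have hGsplit : G1.card + G0.card = G.card := by
      rw [hG1def, hG0def]
      exact Finset.card_filter_add_card_filter_not _
    have hMsplit : M0.card + M1.card = (M.erase s).card := by
      rw [hM1def, Finset.card_sdiff_of_subset hM0e]
      have := Finset.card_le_card hM0e
      omega
    have hMe : (M.erase s).card = M.card - 1 := Finset.card_erase_of_mem hs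
    have hMpos : 0 < M.card := Finset.card_pos.mpr ⟨s, hs⟩
    omega

/-- Lemma 2.6: let `Ω` be a finite set of size `n` and `Λ` an independent set (for
`Sym(Ω)` acting on `k`-subsets) of `k`-subsets of `Ω` with `|Λ| ≥ 2`, such that `Ω` is
spanned by two intersecting members of `Λ`. Then `|Λ| ≤ n - 1` if `n = k + 1`, and
`|Λ| ≤ n - 2` if `n > k + 1`. -/
theorem spanned_by_two_edges_bound {Ω : Type*} [Fintype Ω] [DecidableEq Ω] {n k : ℕ}
    (hn : Fintype.card Ω = n) (Λ : Set (Finset Ω)) (hk : ∀ s ∈ Λ, s.card = k)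
    (hΛ2 : 2 ≤ Λ.ncard)
    (hind : ∀ Δ : Set (Finset Ω), Δ ⊂ Λ →
      pstab (Equiv.Perm Ω) Δ ≠ pstab (Equiv.Perm Ω) Λ)
    (hspan : ∃ E₁ ∈ Λ, ∃ E₂ ∈ Λ, E₁ ≠ E₂ ∧ (E₁ ∩ E₂).Nonempty ∧
      E₁ ∪ E₂ = Finset.univ) :
    (n = k + 1 → Λ.ncard ≤ n - 1) ∧ (n > k + 1 → Λ.ncard ≤ n - 2) := by
  classical
  obtain ⟨E₁, hE₁, E₂, hE₂, hE12, ⟨u, hu⟩, hunion⟩ := hspan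
  have hk1 : E₁.card = k := hk E₁ hE₁
  have hk2 : E₂.card = k := hk E₂ hE₂
  have hcardUnion : (E₁ ∪ E₂).card = n := by rw [hunion, Finset.card_univ, hn]
  have hsum : (E₁ ∪ E₂).card + (E₁ ∩ E₂).card = 2 * k := by
    rw [Finset.card_union_add_card_inter, hk1, hk2]; ring
  have hinterpos : 0 < (E₁ ∩ E₂).card := Finset.card_pos.mpr ⟨u, hu⟩
  have hn2k : n < 2 * k := by omega
  have hkle : k ≤ n := by
    rw [← hk1, ← hn]; exact E₁.card_le_univ
  have hkn : k ≠ n := by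
    intro h
    apply hE12
    have e1 : E₁ = Finset.univ := Finset.eq_univ_of_card _ (by rw [hk1, h, hn])
    have e2 : E₂ = Finset.univ := Finset.eq_univ_of_card _ (by rw [hk2, h, hn])
    rw [e1, e2]
  -- extraction of flip pairs from independence
  have key : ∀ s ∈ Λ, ∃ x y : Ω, x ∈ s ∧ y ∉ s ∧
      ∀ t ∈ Λ, t ≠ s → (x ∈ t ↔ y ∈ t) := by
    intro s hs
    have hsub : Λ \ {s} ⊂ Λ := by
      constructor
      · exact Set.diff_subset
      · intro hcon
        exact (hcon hs).2 rfl
    have hne := hind _ hsub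
    have hle : pstab (Equiv.Perm Ω) Λ ≤ pstab (Equiv.Perm Ω) (Λ \ {s}) := by
      intro g hg
      rw [mem_pstab] at hg ⊢
      exact fun a ha => hg a ha.1
    obtain ⟨g, hgΔ, hgΛ⟩ := SetLike.exists_of_lt (lt_of_le_of_ne hle (Ne.symm hne))
    rw [mem_pstab] at hgΔ
    have hgs : g • s ≠ s := by
      intro hcon
      apply hgΛ
      rw [mem_pstab]
      intro a ha
      by_cases has : a = s
      · rw [has]; exact hcon
      · exact hgΔ a ⟨ha, has⟩
    have hfix : ∀ t ∈ Λ, t ≠ s → g • t = t := fun t ht hts => hgΔ t ⟨ht, hts⟩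
    have hex : ∃ x ∈ s, g • x ∉ s := by
      by_contra hcon
      push_neg at hcon
      apply hgs
      apply Finset.eq_of_subset_of_card_le
      · intro z hz
        rw [Finset.mem_smul_finset] at hz
        obtain ⟨w, hw, rfl⟩ := hz
        exact hcon w hw
      · rw [Finset.card_smul_finset]
    obtain ⟨x, hxs, hgx⟩ := hex
    refine ⟨x, g • x, hxs, hgx, ?_⟩
    intro t ht hts
    have hft := hfix t ht hts
    constructor
    · intro hx
      have := Finset.smul_mem_smul_finset (a := g) hx
      rwa [hft] at this
    · intro hx
      rw [← hft, Finset.smul_mem_smul_finset_iff] at hx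
      exact hx
  have : Nonempty Ω := ⟨u⟩
  choose! xf yf hxf hyf hagf using key
  set LF := Λ.toFinite.toFinset with hLFdef
  have memLF : ∀ s, s ∈ LF ↔ s ∈ Λ := fun s => Set.Finite.mem_toFinset _
  have hncard : Λ.ncard = LF.card := Set.ncard_eq_toFinset_card Λ Λ.toFinite
  have hNE : (Finset.univ : Finset Ω).Nonempty := ⟨u, Finset.mem_univ u⟩
  have hgen : LF.card + 1 ≤ n := by
    have hb := flip_bound LF Finset.univ hNE ?_
    · rwa [Finset.card_univ, hn] at hb
    · intro s hsLF
      have hs : s ∈ Λ := (memLF s).mp hsLF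
      exact ⟨xf s, Finset.mem_univ _, yf s, Finset.mem_univ _, hxf s hs, hyf s hs,
        fun t ht hts => hagf s hs t ((memLF t).mp ht) hts⟩
  constructor
  · intro _
    omega
  · intro hgt
    by_contra hcon
    push_neg at hcon
    have hLFcard : LF.card = n - 1 := by omega
    have hk3 : 3 ≤ k := by omega
    have hn5 : 5 ≤ n := by omega
    -- find a vertex of degree ≤ 1
    have hdeg : ∃ v : Ω, (LF.filter (fun s => v = xf s ∨ v = yf s)).card ≤ 1 := by
      by_contra hcon2
      push_neg at hcon2
      have h1 : 2 * n ≤ ∑ v : Ω, (LF.filter (fun s => v = xf s ∨ v = yf s)).card := by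
        calc 2 * n = ∑ _v : Ω, 2 := by
              rw [Finset.sum_const, Finset.card_univ, hn, smul_eq_mul, mul_comm]
          _ ≤ _ := Finset.sum_le_sum (fun v _ => hcon2 v)
      have h2 : ∑ v : Ω, (LF.filter (fun s => v = xf s ∨ v = yf s)).card
          ≤ 2 * LF.card := by
        have hswap : ∑ v : Ω, (LF.filter (fun s => v = xf s ∨ v = yf s)).card
            = ∑ s ∈ LF, (Finset.univ.filter (fun v : Ω => v = xf s ∨ v = yf s)).card := by
          simp only [Finset.card_filter]
          rw [Finset.sum_comm]
        rw [hswap]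
        have hbnd : ∀ s ∈ LF,
            (Finset.univ.filter (fun v : Ω => v = xf s ∨ v = yf s)).card ≤ 2 := by
          intro s _
          have hsubs : (Finset.univ.filter (fun v : Ω => v = xf s ∨ v = yf s))
              ⊆ {xf s, yf s} := by
            intro v hv
            rw [Finset.mem_filter] at hv
            simp [Finset.mem_insert, hv.2]
          calc (Finset.univ.filter (fun v : Ω => v = xf s ∨ v = yf s)).card
              ≤ ({xf s, yf s} : Finset Ω).card := Finset.card_le_card hsubs
            _ ≤ 2 := Finset.card_insert_le _ _ |>.trans (by simp)
        calc ∑ s ∈ LF, (Finset.univ.filter (fun v : Ω => v = xf s ∨ v = yf s)).card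
            ≤ ∑ _s ∈ LF, 2 := Finset.sum_le_sum hbnd
          _ = 2 * LF.card := by rw [Finset.sum_const, smul_eq_mul, mul_comm]
      omega
    obtain ⟨v, hv⟩ := hdeg
    rcases Nat.le_one_iff_eq_zero_or_eq_one.mp hv with hv0 | hv1
    · -- degree 0 : all pairs avoid v
      rw [Finset.card_eq_zero] at hv0
      have havoid : ∀ s ∈ LF, v ≠ xf s ∧ v ≠ yf s := by
        intro s hs
        have : s ∉ LF.filter (fun s => v = xf s ∨ v = yf s) := by rw [hv0]; simp
        rw [Finset.mem_filter] at this
        push_neg at this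
        exact this hs
      have hbig : LF.card + 1 ≤ (Finset.univ.erase v).card := by
        refine flip_bound LF (Finset.univ.erase v) ?_ ?_
        · rw [← Finset.card_pos, Finset.card_erase_of_mem (Finset.mem_univ v),
            Finset.card_univ, hn]
          omega
        · intro s hsLF
          have hs : s ∈ Λ := (memLF s).mp hsLF
          refine ⟨xf s, ?_, yf s, ?_, hxf s hs, hyf s hs,
            fun t ht hts => hagf s hs t ((memLF t).mp ht) hts⟩
          · exact Finset.mem_erase.mpr ⟨Ne.symm (havoid s hsLF).1, Finset.mem_univ _⟩
          · exact Finset.mem_erase.mpr ⟨Ne.symm (havoid s hsLF).2, Finset.mem_univ _⟩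
      rw [Finset.card_erase_of_mem (Finset.mem_univ v), Finset.card_univ, hn] at hbig
      omega
    · -- degree 1 : unique edge s* at v
      obtain ⟨sstar, hsstar⟩ := Finset.card_eq_one.mp hv1
      have hsstarLF : sstar ∈ LF := by
        have : sstar ∈ LF.filter (fun s => v = xf s ∨ v = yf s) := by rw [hsstar]; simp
        exact (Finset.mem_filter.mp this).1
      have huniq : ∀ s ∈ LF, (v = xf s ∨ v = yf s) → s = sstar := by
        intro s hs hvs
        have : s ∈ LF.filter (fun s => v = xf s ∨ v = yf s) :=
          Finset.mem_filter.mpr ⟨hs, hvs⟩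
        rw [hsstar, Finset.mem_singleton] at this
        exact this
      set P1 := (Finset.univ.erase v).filter (fun z => z ∈ sstar) with hP1def
      set P0 := (Finset.univ.erase v).filter (fun z => ¬ z ∈ sstar) with hP0def
      have hPsplit : P1.card + P0.card = n - 1 := by
        rw [hP1def, hP0def, Finset.card_filter_add_card_filter_not,
          Finset.card_erase_of_mem (Finset.mem_univ v), Finset.card_univ, hn]
      -- both parts nonempty
      have hsstark : sstar.card = k := hk sstar ((memLF sstar).mp hsstarLF)
      have hP1ne : P1.Nonempty := by
        rw [Finset.nonempty_iff_ne_empty]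
        intro hcon2
        have hsub : sstar ⊆ {v} := by
          intro z hz
          rw [Finset.mem_singleton]
          by_contra hzv
          have : z ∈ P1 := by
            rw [hP1def, Finset.mem_filter, Finset.mem_erase]
            exact ⟨⟨hzv, Finset.mem_univ z⟩, hz⟩
          rw [hcon2] at this
          exact absurd this (Finset.notMem_empty z)
        have := Finset.card_le_card hsub
        rw [hsstark, Finset.card_singleton] at this
        omega
      have hP0ne : P0.Nonempty := by
        rw [Finset.nonempty_iff_ne_empty]
        intro hcon2
        have hsub : Finset.univ.erase v ⊆ sstar := by
          intro z hz
          by_contra hzs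
          have : z ∈ P0 := by
            rw [hP0def, Finset.mem_filter]
            exact ⟨hz, hzs⟩
          rw [hcon2] at this
          exact absurd this (Finset.notMem_empty z)
        have := Finset.card_le_card hsub
        rw [Finset.card_erase_of_mem (Finset.mem_univ v), Finset.card_univ, hn,
          hsstark] at this
        omega
      -- split the other edges by which side of sstar they lie on
      set N1 := (LF.erase sstar).filter (fun t => xf t ∈ sstar) with hN1def
      set N0 := (LF.erase sstar).filter (fun t => ¬ xf t ∈ sstar) with hN0def
      have hNsplit : N1.card + N0.card = n - 2 := by
        rw [hN1def, hN0def, Finset.card_filter_add_card_filter_not,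
          Finset.card_erase_of_mem hsstarLF, hLFcard]
        omega
      have hedge : ∀ t ∈ LF.erase sstar,
          xf t ≠ v ∧ yf t ≠ v ∧ (xf t ∈ sstar ↔ yf t ∈ sstar) := by
        intro t ht
        have htLF : t ∈ LF := Finset.mem_of_mem_erase ht
        have htss : t ≠ sstar := Finset.ne_of_mem_erase ht
        refine ⟨?_, ?_, ?_⟩
        · intro hcon2; exact htss (huniq t htLF (Or.inl hcon2.symm))
        · intro hcon2; exact htss (huniq t htLF (Or.inr hcon2.symm))
        · exact hagf t ((memLF t).mp htLF) sstar ((memLF sstar).mp hsstarLF)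
            (Ne.symm htss)
      have hb1 : N1.card + 1 ≤ P1.card := by
        refine flip_bound N1 P1 hP1ne ?_
        intro t ht
        rw [hN1def, Finset.mem_filter] at ht
        obtain ⟨hte, hxt⟩ := ht
        obtain ⟨hxv, hyv, hiff⟩ := hedge t hte
        have htΛ : t ∈ Λ := (memLF t).mp (Finset.mem_of_mem_erase hte)
        refine ⟨xf t, ?_, yf t, ?_, hxf t htΛ, hyf t htΛ, ?_⟩
        · rw [hP1def, Finset.mem_filter, Finset.mem_erase]
          exact ⟨⟨hxv, Finset.mem_univ _⟩, hxt⟩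
        · rw [hP1def, Finset.mem_filter, Finset.mem_erase]
          exact ⟨⟨hyv, Finset.mem_univ _⟩, hiff.mp hxt⟩
        · intro w hw hwt
          have hwΛ : w ∈ Λ := (memLF w).mp
            (Finset.mem_of_mem_erase (Finset.mem_of_mem_filter w hw))
          exact hagf t htΛ w hwΛ hwt
      have hb0 : N0.card + 1 ≤ P0.card := by
        refine flip_bound N0 P0 hP0ne ?_
        intro t ht
        rw [hN0def, Finset.mem_filter] at ht
        obtain ⟨hte, hxt⟩ := ht
        obtain ⟨hxv, hyv, hiff⟩ := hedge t hte
        have htΛ : t ∈ Λ := (memLF t).mp (Finset.mem_of_mem_erase hte)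
        refine ⟨xf t, ?_, yf t, ?_, hxf t htΛ, hyf t htΛ, ?_⟩
        · rw [hP0def, Finset.mem_filter, Finset.mem_erase]
          exact ⟨⟨hxv, Finset.mem_univ _⟩, hxt⟩
        · rw [hP0def, Finset.mem_filter, Finset.mem_erase]
          exact ⟨⟨hyv, Finset.mem_univ _⟩, fun h => hxt (hiff.mpr h)⟩
        · intro w hw hwt
          have hwΛ : w ∈ Λ := (memLF w).mp
            (Finset.mem_of_mem_erase (Finset.mem_of_mem_filter w hw))
          exact hagf t htΛ w hwΛ hwt
      omega
end

section
/- Let P and Q be partitions of {1,…,n} arising as the partitions associated to two sets of k-subsets of {1,…,n}, and let H_P and H_Q be the stabilizers in A_n of all parts of P and Q respectively. If H_P = H_Q, then either P = Q or both P and Q are partitions of type 1^n or 1^{n−2}2^1 (i.e. all parts are singletons except possibly one part of size 2). -/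
open Pointwise

/-- The subgroup of `Aₙ` stabilizing (setwise) every part of the partition `P`. -/
def partStab {n : ℕ} (P : Finset (Finset (Fin n))) : Subgroup (Equiv.Perm (Fin n)) :=
  alternatingGroup (Fin n) ⊓ ⨅ p ∈ P, MulAction.stabilizer (Equiv.Perm (Fin n)) p

/-- A partition is of type `1^n` or `1^{n-2}2^1`: every part is a singleton, except
possibly one part of size 2. -/
def SmallType {n : ℕ} (P : Finset (Finset (Fin n))) : Prop :=
  ∀ p ∈ P, p.card = 1 ∨ (p.card = 2 ∧ ∀ q ∈ P, q ≠ p → q.card = 1)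

namespace AltStabAux

variable {n : ℕ}

/-- The class of `x`. -/
def cls (Δ : Finset (Finset (Fin n))) (x : Fin n) : Finset (Fin n) :=
  Finset.univ.filter (fun y : Fin n => ∀ δ ∈ Δ, (x ∈ δ ↔ y ∈ δ))

lemma mem_cls {Δ : Finset (Finset (Fin n))} {x y : Fin n} :
    y ∈ cls Δ x ↔ ∀ δ ∈ Δ, (x ∈ δ ↔ y ∈ δ) := by simp [cls]

lemma mem_cls_self (Δ : Finset (Finset (Fin n))) (x : Fin n) : x ∈ cls Δ x :=
  mem_cls.2 fun _ _ => Iff.rfl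

lemma cls_eq_of_mem {Δ : Finset (Finset (Fin n))} {x y : Fin n} (h : y ∈ cls Δ x) :
    cls Δ y = cls Δ x := by
  rw [mem_cls] at h
  ext z; rw [mem_cls, mem_cls]
  constructor
  · intro hz δ hδ; exact (h δ hδ).trans (hz δ hδ)
  · intro hz δ hδ; exact (h δ hδ).symm.trans (hz δ hδ)

lemma parts_eq (Δ : Finset (Finset (Fin n))) : parts Δ = Finset.univ.image (cls Δ) := rfl

lemma cls_mem_parts (Δ : Finset (Finset (Fin n))) (x : Fin n) : cls Δ x ∈ parts Δ := by
  rw [parts_eq]; exact Finset.mem_image_of_mem _ (Finset.mem_univ x)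

lemma exists_cls {Δ : Finset (Finset (Fin n))} {p : Finset (Fin n)} (hp : p ∈ parts Δ) :
    ∃ x, cls Δ x = p := by
  rw [parts_eq] at hp; simpa using Finset.mem_image.1 hp

lemma parts_disjoint {Δ : Finset (Finset (Fin n))} {p q : Finset (Fin n)}
    (hp : p ∈ parts Δ) (hq : q ∈ parts Δ) (hne : p ≠ q) {a : Fin n} (ha : a ∈ p) : a ∉ q := by
  obtain ⟨u, rfl⟩ := exists_cls hp
  obtain ⟨v, rfl⟩ := exists_cls hq
  intro haq
  exact hne ((cls_eq_of_mem ha).symm.trans (cls_eq_of_mem haq))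

lemma mem_partStab {P : Finset (Finset (Fin n))} {g : Equiv.Perm (Fin n)} :
    g ∈ partStab P ↔ g ∈ alternatingGroup (Fin n) ∧ ∀ p ∈ P, g • p = p := by
  simp [partStab, Subgroup.mem_inf, Subgroup.mem_iInf, MulAction.mem_stabilizer_iff]

lemma smul_eq_of_maps (g : Equiv.Perm (Fin n)) (p : Finset (Fin n))
    (h : ∀ a ∈ p, g a ∈ p) : g • p = p := by
  apply Finset.eq_of_subset_of_card_le
  · intro b hb
    rw [Finset.mem_smul_finset] at hb
    obtain ⟨a, ha, rfl⟩ := hb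
    exact h a ha
  · rw [Finset.card_smul_finset]

lemma apply_mem_cls {Δ : Finset (Finset (Fin n))} {g : Equiv.Perm (Fin n)}
    (hg : g ∈ partStab (parts Δ)) (x : Fin n) : g x ∈ cls Δ x := by
  have h := (mem_partStab.1 hg).2 (cls Δ x) (cls_mem_parts Δ x)
  rw [← h]
  exact Finset.smul_mem_smul_finset (mem_cls_self Δ x)

lemma not_small (Δ : Finset (Finset (Fin n))) (hns : ¬ SmallType (parts Δ)) :
    ∃ p ∈ parts Δ, p.card ≠ 1 ∧
      (p.card = 2 → ∃ q ∈ parts Δ, q ≠ p ∧ q.card ≠ 1) := by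
  unfold SmallType at hns
  push_neg at hns
  obtain ⟨p, hp, h1, h2⟩ := hns
  exact ⟨p, hp, h1, fun hc => by obtain ⟨q, hq, hq1, hq2⟩ := h2 hc; exact ⟨q, hq, hq1, hq2⟩⟩

lemma card_pos_of_mem {Δ : Finset (Finset (Fin n))} {p : Finset (Fin n)} (hp : p ∈ parts Δ) :
    1 ≤ p.card := by
  obtain ⟨x, rfl⟩ := exists_cls hp
  exact Finset.card_pos.2 ⟨x, mem_cls_self Δ x⟩

/-- The key construction: if the partition is not small, the class of `x` is the orbit of
`x` under the stabilizer. -/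
lemma exists_g {Δ : Finset (Finset (Fin n))} (hns : ¬ SmallType (parts Δ)) (x y : Fin n)
    (hy : y ∈ cls Δ x) : ∃ g ∈ partStab (parts Δ), g x = y := by
  by_cases hxy : y = x
  · exact ⟨1, (partStab _).one_mem, hxy.symm⟩
  have hxp : x ∈ cls Δ x := mem_cls_self Δ x
  by_cases h3 : 3 ≤ (cls Δ x).card
  · -- use a 3-cycle inside the class
    have hsub : ¬ cls Δ x ⊆ {x, y} := by
      intro hsub
      have := Finset.card_le_card hsub
      have h2 : ({x, y} : Finset (Fin n)).card ≤ 2 := Finset.card_insert_le _ _ |>.trans (by simp)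
      omega
    obtain ⟨z, hz, hz2⟩ := Finset.not_subset.1 hsub
    have hzx : z ≠ x := by simp at hz2; tauto
    have hzy : z ≠ y := by simp at hz2; tauto
    refine ⟨Equiv.swap x z * Equiv.swap x y, mem_partStab.2 ⟨?_, ?_⟩, ?_⟩
    · rw [Equiv.Perm.mem_alternatingGroup, map_mul,
        Equiv.Perm.sign_swap (Ne.symm hzx), Equiv.Perm.sign_swap (Ne.symm hxy)]
      decide
    · intro q hq
      apply smul_eq_of_maps
      intro a ha
      by_cases hqp : q = cls Δ x
      · subst hqp
        rcases eq_or_ne a x with rfl | hax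
        · simpa [Equiv.Perm.mul_apply, Equiv.swap_apply_left,
            Equiv.swap_apply_of_ne_of_ne hxy (Ne.symm hzy)] using hy
        rcases eq_or_ne a y with rfl | hay
        · simpa [Equiv.Perm.mul_apply, Equiv.swap_apply_right, Equiv.swap_apply_left] using hz
        rcases eq_or_ne a z with rfl | haz
        · simpa [Equiv.Perm.mul_apply, Equiv.swap_apply_of_ne_of_ne hzx hzy,
            Equiv.swap_apply_right] using hxp
        · simpa [Equiv.Perm.mul_apply, Equiv.swap_apply_of_ne_of_ne hax hay,
            Equiv.swap_apply_of_ne_of_ne hax haz] using ha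
      · have hax : a ≠ x := fun h => parts_disjoint hq (cls_mem_parts Δ x) hqp ha (h ▸ hxp)
        have hay : a ≠ y := fun h => parts_disjoint hq (cls_mem_parts Δ x) hqp ha (h ▸ hy)
        have haz : a ≠ z := fun h => parts_disjoint hq (cls_mem_parts Δ x) hqp ha (h ▸ hz)
        simpa [Equiv.Perm.mul_apply, Equiv.swap_apply_of_ne_of_ne hax hay,
          Equiv.swap_apply_of_ne_of_ne hax haz] using ha
    · simp [Equiv.Perm.mul_apply, Equiv.swap_apply_left,
        Equiv.swap_apply_of_ne_of_ne hxy (Ne.symm hzy)]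
  · -- the class of x has exactly two elements; find another non-singleton part
    have hxy2 : ({x, y} : Finset (Fin n)) ⊆ cls Δ x := by
      intro a ha; simp at ha; rcases ha with rfl | rfl <;> assumption
    have hcard2 : ({x, y} : Finset (Fin n)).card = 2 := Finset.card_pair (Ne.symm hxy)
    have hcard : (cls Δ x).card = 2 := by
      have := Finset.card_le_card hxy2
      omega
    have hpxy : cls Δ x = {x, y} := by
      apply (Finset.eq_of_subset_of_card_le hxy2 (by omega)).symm
    obtain ⟨p', hp', hp'1, hp'2⟩ := not_small Δ hns
    obtain ⟨q, hq, hqp, hq2⟩ : ∃ q ∈ parts Δ, q ≠ cls Δ x ∧ 2 ≤ q.card := by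
      by_cases hpp : p' = cls Δ x
      · subst hpp
        obtain ⟨q, hq, hq1, hq2⟩ := hp'2 hcard
        have := card_pos_of_mem hq
        exact ⟨q, hq, hq1, by omega⟩
      · have := card_pos_of_mem hp'
        exact ⟨p', hp', hpp, by omega⟩
    obtain ⟨a, ha, b, hb, hab⟩ := Finset.one_lt_card.1 hq2
    have haP : a ∉ cls Δ x := parts_disjoint hq (cls_mem_parts Δ x) hqp ha
    have hbP : b ∉ cls Δ x := parts_disjoint hq (cls_mem_parts Δ x) hqp hb
    have hax : x ≠ a := fun h => haP (h ▸ hxp)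
    have hbx : x ≠ b := fun h => hbP (h ▸ hxp)
    have hay : y ≠ a := fun h => haP (h ▸ hy)
    have hby : y ≠ b := fun h => hbP (h ▸ hy)
    refine ⟨Equiv.swap x y * Equiv.swap a b, mem_partStab.2 ⟨?_, ?_⟩, ?_⟩
    · rw [Equiv.Perm.mem_alternatingGroup, map_mul,
        Equiv.Perm.sign_swap (Ne.symm hxy), Equiv.Perm.sign_swap hab]
      decide
    · intro q' hq'
      apply smul_eq_of_maps
      intro c hc
      by_cases hq'p : q' = cls Δ x
      · subst hq'p
        rcases eq_or_ne c x with rfl | hcx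
        · simpa [Equiv.Perm.mul_apply, Equiv.swap_apply_of_ne_of_ne hax hbx,
            Equiv.swap_apply_left] using hy
        rcases eq_or_ne c y with rfl | hcy
        · simpa [Equiv.Perm.mul_apply, Equiv.swap_apply_of_ne_of_ne hay hby,
            Equiv.swap_apply_right] using hxp
        · have hca : c ≠ a := fun h => haP (h ▸ hc)
          have hcb : c ≠ b := fun h => hbP (h ▸ hc)
          simpa [Equiv.Perm.mul_apply, Equiv.swap_apply_of_ne_of_ne hca hcb,
            Equiv.swap_apply_of_ne_of_ne hcx hcy] using hc
      by_cases hq'q : q' = q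
      · subst hq'q
        have hcx : c ≠ x := fun h => parts_disjoint (cls_mem_parts Δ x) hq' hqp.symm hxp (h ▸ hc)
        have hcy : c ≠ y := fun h => parts_disjoint (cls_mem_parts Δ x) hq' hqp.symm hy (h ▸ hc)
        rcases eq_or_ne c a with rfl | hca
        · simpa [Equiv.Perm.mul_apply, Equiv.swap_apply_left,
            Equiv.swap_apply_of_ne_of_ne (Ne.symm hbx) (Ne.symm hby)] using hb
        rcases eq_or_ne c b with rfl | hcb
        · simpa [Equiv.Perm.mul_apply, Equiv.swap_apply_right,
            Equiv.swap_apply_of_ne_of_ne (Ne.symm hax) (Ne.symm hay)] using ha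
        · simpa [Equiv.Perm.mul_apply, Equiv.swap_apply_of_ne_of_ne hca hcb,
            Equiv.swap_apply_of_ne_of_ne hcx hcy] using hc
      · have hcx : c ≠ x := fun h => parts_disjoint (cls_mem_parts Δ x) hq' (Ne.symm hq'p) hxp (h ▸ hc)
        have hcy : c ≠ y := fun h => parts_disjoint (cls_mem_parts Δ x) hq' (Ne.symm hq'p) hy (h ▸ hc)
        have hca : c ≠ a := fun h => parts_disjoint hq hq' (Ne.symm hq'q) ha (h ▸ hc)
        have hcb : c ≠ b := fun h => parts_disjoint hq hq' (Ne.symm hq'q) hb (h ▸ hc)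
        simpa [Equiv.Perm.mul_apply, Equiv.swap_apply_of_ne_of_ne hca hcb,
          Equiv.swap_apply_of_ne_of_ne hcx hcy] using hc
    · simp [Equiv.Perm.mul_apply, Equiv.swap_apply_of_ne_of_ne hax hbx, Equiv.swap_apply_left]

lemma exists_ne_one {Δ : Finset (Finset (Fin n))} (hns : ¬ SmallType (parts Δ)) :
    ∃ g ∈ partStab (parts Δ), g ≠ 1 := by
  obtain ⟨p, hp, hp1, _⟩ := not_small Δ hns
  have h2 : 2 ≤ p.card := by have := card_pos_of_mem hp; omega
  obtain ⟨x, hx, y, hy, hxy⟩ := Finset.one_lt_card.1 h2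
  obtain ⟨u, rfl⟩ := exists_cls hp
  have hyx : y ∈ cls Δ x := by rw [cls_eq_of_mem hx]; exact hy
  obtain ⟨g, hg, hgx⟩ := exists_g hns x y hyx
  refine ⟨g, hg, fun h1 => hxy ?_⟩
  rw [h1] at hgx
  simpa using hgx

lemma eq_one_of_small {Δ : Finset (Finset (Fin n))} (hs : SmallType (parts Δ))
    {g : Equiv.Perm (Fin n)} (hg : g ∈ partStab (parts Δ)) : g = 1 := by
  by_contra hg1
  obtain ⟨x, hx⟩ : ∃ x, g x ≠ x := by
    by_contra hall
    push_neg at hall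
    exact hg1 (Equiv.ext fun z => (hall z).trans (Equiv.Perm.one_apply z).symm)
  have hgx : g x ∈ cls Δ x := apply_mem_cls hg x
  rcases hs (cls Δ x) (cls_mem_parts Δ x) with h1 | ⟨h2, hrest⟩
  · obtain ⟨a, ha⟩ := Finset.card_eq_one.1 h1
    rw [ha, Finset.mem_singleton] at hgx
    have hxa : x ∈ ({a} : Finset (Fin n)) := ha ▸ mem_cls_self Δ x
    rw [Finset.mem_singleton] at hxa
    exact hx (hgx.trans hxa.symm)
  · -- cls Δ x = {x, g x}, and g is the transposition (x, g x): contradiction with parity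
    have hsub : ({x, g x} : Finset (Fin n)) ⊆ cls Δ x :=
      Finset.insert_subset_iff.2 ⟨mem_cls_self Δ x, Finset.singleton_subset_iff.2 hgx⟩
    have hcard : ({x, g x} : Finset (Fin n)).card = 2 := Finset.card_pair (Ne.symm hx)
    have hcls : cls Δ x = {x, g x} :=
      (Finset.eq_of_subset_of_card_le hsub (by omega)).symm
    have hggx : g (g x) = x := by
      have h1 : g (g x) ∈ cls Δ (g x) := apply_mem_cls hg (g x)
      rw [cls_eq_of_mem hgx, hcls, Finset.mem_insert, Finset.mem_singleton] at h1
      rcases h1 with h1 | h1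
      · exact h1
      · exact absurd (g.injective h1) hx
    have hswap : g = Equiv.swap x (g x) := by
      apply Equiv.ext
      intro z
      rcases eq_or_ne z x with rfl | hzx
      · rw [Equiv.swap_apply_left]
      rcases eq_or_ne z (g x) with rfl | hzg
      · rw [Equiv.swap_apply_right]; exact hggx
      · rw [Equiv.swap_apply_of_ne_of_ne hzx hzg]
        -- z's class is a singleton
        have hzcls : cls Δ z ≠ cls Δ x := by
          intro hEq
          have : z ∈ cls Δ x := hEq ▸ mem_cls_self Δ z
          rw [hcls] at this
          simp at this
          tauto
        have hz1 : (cls Δ z).card = 1 := hrest (cls Δ z) (cls_mem_parts Δ z) hzcls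
        obtain ⟨a, ha⟩ := Finset.card_eq_one.1 hz1
        have hza : z ∈ ({a} : Finset (Fin n)) := ha ▸ mem_cls_self Δ z
        have hgz : g z ∈ ({a} : Finset (Fin n)) := ha ▸ apply_mem_cls hg z
        rw [Finset.mem_singleton] at hza hgz
        exact hgz.trans hza.symm
    have hsign := Equiv.Perm.mem_alternatingGroup.1 (mem_partStab.1 hg).1
    rw [hswap, Equiv.Perm.sign_swap (Ne.symm hx)] at hsign
    exact absurd hsign (by decide)

end AltStabAux

open AltStabAux in
/-- If two partitions of `{1,…,n}` arising from sets of `k`-subsets have the same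
part-stabilizer in `Aₙ`, then they are equal or both of type `1^n` or `1^{n-2}2^1`. -/
theorem alt_partStab_eq {n k : ℕ} (Δ₁ Δ₂ : Finset (Finset (Fin n)))
    (h₁ : ∀ δ ∈ Δ₁, δ.card = k) (h₂ : ∀ δ ∈ Δ₂, δ.card = k)
    (h : partStab (parts Δ₁) = partStab (parts Δ₂)) :
    parts Δ₁ = parts Δ₂ ∨ (SmallType (parts Δ₁) ∧ SmallType (parts Δ₂)) := by
  by_cases s₁ : SmallType (parts Δ₁) <;> by_cases s₂ : SmallType (parts Δ₂)
  · exact Or.inr ⟨s₁, s₂⟩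
  · -- s₁ small, ¬s₂ : contradiction
    exfalso
    obtain ⟨g, hg, hg1⟩ := exists_ne_one s₂
    exact hg1 (eq_one_of_small s₁ (h ▸ hg))
  · exfalso
    obtain ⟨g, hg, hg1⟩ := exists_ne_one s₁
    exact hg1 (eq_one_of_small s₂ (h ▸ hg))
  · -- both non-small: classes coincide
    left
    have key : ∀ x, cls Δ₁ x = cls Δ₂ x := by
      intro x
      apply Finset.Subset.antisymm
      · intro y hy
        obtain ⟨g, hg, hgx⟩ := exists_g s₁ x y hy
        have hg2 : g ∈ partStab (parts Δ₂) := h ▸ hg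
        rw [← hgx]
        exact apply_mem_cls hg2 x
      · intro y hy
        obtain ⟨g, hg, hgx⟩ := exists_g s₂ x y hy
        have hg1' : g ∈ partStab (parts Δ₁) := h.symm ▸ hg
        rw [← hgx]
        exact apply_mem_cls hg1' x
    rw [parts_eq, parts_eq]
    exact Finset.image_congr fun x _ => key x
end

section
/- For n ≥ 5, the height and maximum size of a minimal base for A_n acting on 2-subsets of {1,…,n} both equal n − 3: B(A_n, Ω_2) = H(A_n, Ω_2) = n − 3. -/
open Pointwise

/-- The pointwise stabilizer inside `Aₙ` of a set of `2`-subsets. -/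
def altPstab (n : ℕ) (Λ : Set (Finset (Fin n))) : Subgroup (Equiv.Perm (Fin n)) :=
  alternatingGroup (Fin n) ⊓ pstab (Equiv.Perm (Fin n)) Λ

namespace AnAux

variable {n : ℕ}

lemma mem_pstab_iff {Λ : Set (Finset (Fin n))} {g : Equiv.Perm (Fin n)} :
    g ∈ pstab (Equiv.Perm (Fin n)) Λ ↔ ∀ s ∈ Λ, g • s = s := by
  simp [pstab, Subgroup.mem_iInf, MulAction.mem_stabilizer_iff]

lemma mem_altPstab_iff {Λ : Set (Finset (Fin n))} {g : Equiv.Perm (Fin n)} :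
    g ∈ altPstab n Λ ↔ Equiv.Perm.sign g = 1 ∧ ∀ s ∈ Λ, g • s = s := by
  simp [altPstab, Subgroup.mem_inf, mem_pstab_iff, Equiv.Perm.mem_alternatingGroup]

lemma altPstab_mono {A B : Set (Finset (Fin n))} (h : A ⊆ B) : altPstab n B ≤ altPstab n A := by
  intro g hg
  rw [mem_altPstab_iff] at hg ⊢
  exact ⟨hg.1, fun s hs => hg.2 s (h hs)⟩

lemma altPstab_union (A B : Set (Finset (Fin n))) :
    altPstab n (A ∪ B) = altPstab n A ⊓ altPstab n B := by
  ext g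
  simp only [Subgroup.mem_inf, mem_altPstab_iff, Set.mem_union]
  constructor
  · rintro ⟨h1, h2⟩
    exact ⟨⟨h1, fun s hs => h2 s (Or.inl hs)⟩, ⟨h1, fun s hs => h2 s (Or.inr hs)⟩⟩
  · rintro ⟨⟨h1, h2⟩, ⟨_, h3⟩⟩
    exact ⟨h1, fun s hs => hs.elim (h2 s) (h3 s)⟩

lemma smul_pair (g : Equiv.Perm (Fin n)) (a b : Fin n) :
    g • ({a, b} : Finset (Fin n)) = {g a, g b} := by
  simp [Finset.smul_finset_insert, Finset.smul_finset_singleton]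

/-- an even permutation whose support lies in a 2-element finset is trivial. -/
lemma even_small {g : Equiv.Perm (Fin n)} (hsgn : Equiv.Perm.sign g = 1)
    (T : Finset (Fin n)) (hT : T.card ≤ 2) (hsub : ∀ v, g v ≠ v → v ∈ T) : g = 1 := by
  have hsupp : g.support ⊆ T := fun v hv => hsub v (Equiv.Perm.mem_support.mp hv)
  have hc : g.support.card ≤ 2 := le_trans (Finset.card_le_card hsupp) hT
  have hne1 : g.support.card ≠ 1 := Equiv.Perm.card_support_ne_one g
  interval_cases h : g.support.card
  · exact Equiv.Perm.support_eq_empty_iff.mp (Finset.card_eq_zero.mp h)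
  · exact absurd rfl hne1
  · obtain ⟨x, y, hxy, rfl⟩ := Equiv.Perm.card_support_eq_two.mp h
    rw [Equiv.Perm.sign_swap hxy] at hsgn
    exact absurd hsgn (by decide)

/-- If `g` fixes `s` (a 2-set) setwise and fixes one point of `s`, it fixes `s` pointwise. -/
lemma fix_of_mem_fix {g : Equiv.Perm (Fin n)} {s : Finset (Fin n)} (hs2 : s.card = 2)
    (hgs : g • s = s) {x : Fin n} (hx : x ∈ s) (hgx : g x = x) : ∀ v ∈ s, g v = v := by
  intro v hv
  by_cases hvx : v = x
  · rw [hvx]; exact hgx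
  · have hsub : ({x, v} : Finset (Fin n)) ⊆ s := by
      intro w hw; simp only [Finset.mem_insert, Finset.mem_singleton] at hw
      rcases hw with rfl | rfl <;> assumption
    have hcard : ({x, v} : Finset (Fin n)).card = 2 := by
      rw [Finset.card_pair (Ne.symm hvx)]
    have hseq : ({x, v} : Finset (Fin n)) = s :=
      Finset.eq_of_subset_of_card_le hsub (by omega)
    have hgv : g v ∈ s := by
      rw [← hgs]; exact Finset.smul_mem_smul_finset hv
    rw [← hseq] at hgv
    simp only [Finset.mem_insert, Finset.mem_singleton] at hgv
    rcases hgv with h | h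
    · exfalso; apply hvx; apply g.injective; rw [h, hgx]
    · exact h

/-- If `g` fixes setwise two distinct intersecting 2-sets, it fixes their common point. -/
lemma fix_inter {g : Equiv.Perm (Fin n)} {s t : Finset (Fin n)} (hs2 : s.card = 2)
    (ht2 : t.card = 2) (hst : s ≠ t) {x : Fin n} (hxs : x ∈ s) (hxt : x ∈ t)
    (hgs : g • s = s) (hgt : g • t = t) : g x = x := by
  by_contra hne
  have hgxs : g x ∈ s := by rw [← hgs]; exact Finset.smul_mem_smul_finset hxs
  have hgxt : g x ∈ t := by rw [← hgt]; exact Finset.smul_mem_smul_finset hxt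
  have hsub : ({x, g x} : Finset (Fin n)) ⊆ s ∩ t := by
    intro w hw; simp only [Finset.mem_insert, Finset.mem_singleton] at hw
    rcases hw with rfl | rfl <;> simp_all [Finset.mem_inter]
  have hcard : ({x, g x} : Finset (Fin n)).card = 2 := Finset.card_pair (fun h => hne h.symm)
  have h1 : s ∩ t = s := by
    apply Finset.eq_of_subset_of_card_le Finset.inter_subset_left
    calc s.card = 2 := hs2
    _ = ({x, g x} : Finset (Fin n)).card := hcard.symm
    _ ≤ (s ∩ t).card := Finset.card_le_card hsub
  have h2 : s ∩ t = t := by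
    apply Finset.eq_of_subset_of_card_le Finset.inter_subset_right
    calc t.card = 2 := ht2
    _ = ({x, g x} : Finset (Fin n)).card := hcard.symm
    _ ≤ (s ∩ t).card := Finset.card_le_card hsub
  exact hst (h1 ▸ h2)


open scoped Classical in
/-- `s` is an isolated edge of `S`: every other edge is disjoint from it. -/
def IsoIn (S : Finset (Finset (Fin n))) (s : Finset (Fin n)) : Prop :=
  ∀ t ∈ S, t = s ∨ Disjoint s t

/-- the covered vertices -/
def cov (S : Finset (Finset (Fin n))) : Finset (Fin n) := S.biUnion id

open scoped Classical in
/-- isolated edges -/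
noncomputable def ES (S : Finset (Finset (Fin n))) : Finset (Finset (Fin n)) :=
  S.filter (fun s => IsoIn S s)

open scoped Classical in
/-- non-isolated edges -/
noncomputable def RS (S : Finset (Finset (Fin n))) : Finset (Finset (Fin n)) :=
  S.filter (fun s => ¬ IsoIn S s)

/-- isolated (uncovered) vertices -/
def IS (S : Finset (Finset (Fin n))) : Finset (Fin n) := (cov S)ᶜ

lemma mem_IS {S : Finset (Finset (Fin n))} {v : Fin n} :
    v ∈ IS S ↔ ∀ s ∈ S, v ∉ s := by
  simp [IS, cov, Finset.mem_compl, Finset.mem_biUnion]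

lemma mem_ES {S : Finset (Finset (Fin n))} {s : Finset (Fin n)} :
    s ∈ ES S ↔ s ∈ S ∧ IsoIn S s := by
  simp [ES]

lemma mem_RS {S : Finset (Finset (Fin n))} {s : Finset (Fin n)} :
    s ∈ RS S ↔ s ∈ S ∧ ¬ IsoIn S s := by
  simp [RS]

/-- a permutation fixing all edges fixes every vertex of a non-isolated edge -/
lemma rigid_fix {S : Finset (Finset (Fin n))} (h2 : ∀ s ∈ S, s.card = 2)
    {g : Equiv.Perm (Fin n)} (hg : ∀ s ∈ S, g • s = s)
    {s : Finset (Fin n)} (hsS : s ∈ S) (hs : ¬ IsoIn S s) :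
    ∀ v ∈ s, g v = v := by
  simp only [IsoIn, not_forall] at hs
  obtain ⟨t, htS, ht⟩ := hs
  push_neg at ht
  obtain ⟨hts, hdis⟩ := ht
  obtain ⟨x, hxs, hxt⟩ := Finset.not_disjoint_iff.mp hdis
  have hgx : g x = x :=
    fix_inter (h2 s hsS) (h2 t htS) (fun h => hts h.symm) hxs hxt (hg s hsS) (hg t htS)
  exact fix_of_mem_fix (h2 s hsS) (hg s hsS) hxs hgx

/-- a permutation fixing all edges preserves the set of uncovered vertices -/
lemma IS_fix {S : Finset (Finset (Fin n))} {g : Equiv.Perm (Fin n)}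
    (hg : ∀ s ∈ S, g • s = s) {v : Fin n} (hv : v ∈ IS S) : g v ∈ IS S := by
  rw [mem_IS] at hv ⊢
  intro s hs hmem
  have hginv : g⁻¹ • s = s := by
    have := hg s hs
    calc g⁻¹ • s = g⁻¹ • (g • s) := by rw [this]
    _ = s := by rw [← mul_smul]; simp
  apply hv s hs
  have : g⁻¹ (g v) ∈ g⁻¹ • s := Finset.smul_mem_smul_finset hmem
  rw [hginv] at this
  simpa using this

lemma altPstab_bot_A {S : Finset (Finset (Fin n))} (h2 : ∀ s ∈ S, s.card = 2)
    (hES : ES S = ∅) (hIS : (IS S).card ≤ 2) : altPstab n (S : Set (Finset (Fin n))) = ⊥ := by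
  rw [Subgroup.eq_bot_iff_forall]
  intro g hg
  rw [mem_altPstab_iff] at hg
  obtain ⟨hsgn, hfix⟩ := hg
  have hfix' : ∀ s ∈ S, g • s = s := fun s hs => hfix s (by simpa using hs)
  apply even_small hsgn (IS S) hIS
  intro v hv
  by_contra hvI
  rw [mem_IS] at hvI
  push_neg at hvI
  obtain ⟨s, hsS, hvs⟩ := hvI
  by_cases hiso : IsoIn S s
  · have : s ∈ ES S := mem_ES.mpr ⟨hsS, hiso⟩
    rw [hES] at this; exact absurd this (Finset.notMem_empty s)
  · exact hv (rigid_fix h2 hfix' hsS hiso v hvs)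

lemma altPstab_bot_B {S : Finset (Finset (Fin n))} (h2 : ∀ s ∈ S, s.card = 2)
    (hES : (ES S).card ≤ 1) (hIS : (IS S).card ≤ 1) :
    altPstab n (S : Set (Finset (Fin n))) = ⊥ := by
  rw [Subgroup.eq_bot_iff_forall]
  intro g hg
  rw [mem_altPstab_iff] at hg
  obtain ⟨hsgn, hfix⟩ := hg
  have hfix' : ∀ s ∈ S, g • s = s := fun s hs => hfix s (by simpa using hs)
  -- uncovered vertices are fixed pointwise
  have hIfix : ∀ v ∈ IS S, g v = v := by
    intro v hv
    have : g v ∈ IS S := IS_fix hfix' hv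
    have h1 : ∀ a ∈ IS S, ∀ b ∈ IS S, a = b := Finset.card_le_one.mp hIS
    exact h1 _ this _ hv
  rcases Finset.eq_empty_or_nonempty (ES S) with hE | ⟨μ, hμ⟩
  · apply even_small hsgn (IS S) (le_trans hIS (by norm_num))
    intro v hv
    by_contra hvI
    rw [mem_IS] at hvI
    push_neg at hvI
    obtain ⟨s, hsS, hvs⟩ := hvI
    by_cases hiso : IsoIn S s
    · have : s ∈ ES S := mem_ES.mpr ⟨hsS, hiso⟩
      rw [hE] at this; exact absurd this (Finset.notMem_empty s)
    · exact hv (rigid_fix h2 hfix' hsS hiso v hvs)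
  · obtain ⟨hμS, hμiso⟩ := mem_ES.mp hμ
    apply even_small hsgn μ (le_of_eq (h2 μ hμS))
    intro v hv
    by_cases hvI : v ∈ IS S
    · exact absurd (hIfix v hvI) hv
    · rw [mem_IS] at hvI
      push_neg at hvI
      obtain ⟨s, hsS, hvs⟩ := hvI
      by_cases hiso : IsoIn S s
      · have hsE : s ∈ ES S := mem_ES.mpr ⟨hsS, hiso⟩
        have : s = μ := Finset.card_le_one.mp hES s hsE μ hμ
        rwa [← this]
      · exact absurd (rigid_fix h2 hfix' hsS hiso v hvs) hv

/-- helper: the second point of a 2-set -/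
lemma other_point {s : Finset (Fin n)} (hs : s.card = 2) {v : Fin n} (hv : v ∈ s) :
    ∃ w ∈ s, w ≠ v ∧ s = {v, w} := by
  obtain ⟨a, b, hab, rfl⟩ := Finset.card_eq_two.mp hs
  simp only [Finset.mem_insert, Finset.mem_singleton] at hv
  rcases hv with rfl | rfl
  · exact ⟨b, by simp, fun h => hab h.symm, rfl⟩
  · exact ⟨a, by simp, hab, by rw [Finset.pair_comm]⟩

/-- if two 2-sets share two distinct points, they are equal -/
lemma eq_of_two_mem {s t : Finset (Fin n)} (hs : s.card = 2) (ht : t.card = 2)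
    {v w : Fin n} (hvw : v ≠ w) (hvs : v ∈ s) (hws : w ∈ s) (hvt : v ∈ t) (hwt : w ∈ t) :
    s = t := by
  have h1 : ({v, w} : Finset (Fin n)) ⊆ s := by
    intro a ha; simp only [Finset.mem_insert, Finset.mem_singleton] at ha
    rcases ha with rfl | rfl <;> assumption
  have h2 : ({v, w} : Finset (Fin n)) ⊆ t := by
    intro a ha; simp only [Finset.mem_insert, Finset.mem_singleton] at ha
    rcases ha with rfl | rfl <;> assumption
  have hc : ({v, w} : Finset (Fin n)).card = 2 := Finset.card_pair hvw
  have e1 := Finset.eq_of_subset_of_card_le h1 (by omega)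
  have e2 := Finset.eq_of_subset_of_card_le h2 (by omega)
  rw [← e1, ← e2]

/-- If `S` has a non-isolated edge and single-removals all change the stabilizer,
then some non-isolated edge has an endpoint of degree one. -/
lemma exists_leaf {S : Finset (Finset (Fin n))} (h2 : ∀ s ∈ S, s.card = 2)
    (hind : ∀ l ∈ S, altPstab n ((S.erase l : Finset (Finset (Fin n))) : Set (Finset (Fin n)))
      ≠ altPstab n (S : Set (Finset (Fin n))))
    (hR : (RS S).Nonempty) :
    ∃ l ∈ RS S, ∃ u ∈ l, ∀ s ∈ S, u ∈ s → s = l := by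
  by_contra hcon
  push_neg at hcon
  obtain ⟨l, hlR⟩ := hR
  obtain ⟨hlS, hliso⟩ := mem_RS.mp hlR
  apply hind l hlS
  apply le_antisymm
  · intro g hg
    rw [mem_altPstab_iff] at hg ⊢
    obtain ⟨hsgn, hfix⟩ := hg
    have hfixE : ∀ s ∈ S.erase l, g • s = s := fun s hs => hfix s (Finset.mem_coe.mpr hs)
    refine ⟨hsgn, ?_⟩
    intro s hs
    simp only [Finset.coe_sort_coe, Finset.mem_coe] at hs
    by_cases hsl : s = l
    · -- show g fixes l pointwise
      subst hsl
      have hfixpt : ∀ v ∈ s, g v = v := by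
        intro v hv
        obtain ⟨sv, hsvS, hvsv, hsvne⟩ := hcon s hlR v hv
        have hsvE : sv ∈ S.erase s := Finset.mem_erase.mpr ⟨hsvne, hsvS⟩
        -- sv is non-isolated in S.erase l
        have hsvRS : sv ∈ RS S := by
          rw [mem_RS]
          refine ⟨hsvS, ?_⟩
          intro hiso
          rcases hiso s hlS with h | h
          · exact hsvne h.symm
          · exact Finset.not_disjoint_iff.mpr ⟨v, hvsv, hv⟩ h
        obtain ⟨w, hwsv, hwv, hsveq⟩ := other_point (h2 sv hsvS) hvsv
        have hwl : w ∉ s := by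
          intro hwl
          exact hsvne (eq_of_two_mem (h2 sv hsvS) (h2 s hlS) (Ne.symm hwv) hvsv hwsv hv hwl)
        obtain ⟨t, htS, hwt, htne⟩ := hcon sv hsvRS w hwsv
        have htl : t ≠ s := fun h => hwl (h ▸ hwt)
        have htE : t ∈ S.erase s := Finset.mem_erase.mpr ⟨htl, htS⟩
        have hnotiso : ¬ IsoIn (S.erase s) sv := by
          intro hiso
          rcases hiso t htE with h | h
          · exact htne h
          · exact Finset.not_disjoint_iff.mpr ⟨w, hwsv, hwt⟩ h
        exact rigid_fix (fun x hx => h2 x (Finset.mem_of_mem_erase hx)) hfixE hsvE hnotiso v hvsv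
      obtain ⟨a, b, hab, hseq⟩ := Finset.card_eq_two.mp (h2 s hlS)
      rw [hseq, smul_pair, hfixpt a (by rw [hseq]; simp), hfixpt b (by rw [hseq]; simp)]
    · exact hfixE s (Finset.mem_erase.mpr ⟨hsl, hs⟩)
  · exact altPstab_mono (fun x hx => Finset.mem_coe.mpr (Finset.mem_of_mem_erase (Finset.mem_coe.mp hx)))

section EraseLemmas

variable {S : Finset (Finset (Fin n))} {l : Finset (Fin n)} {u x : Fin n}

/-- the other endpoint of a leaf edge is covered by another edge -/
lemma leaf_other_covered (h2 : ∀ s ∈ S, s.card = 2) (hlS : l ∈ S) (hliso : ¬ IsoIn S l)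
    (hleaf : ∀ s ∈ S, u ∈ s → s = l) (hlux : l = {u, x}) :
    ∃ t ∈ S.erase l, x ∈ t := by
  simp only [IsoIn, not_forall] at hliso
  obtain ⟨t, htS, ht⟩ := hliso
  push_neg at ht
  obtain ⟨htl', hdis⟩ := ht
  obtain ⟨y, hyl, hyt⟩ := Finset.not_disjoint_iff.mp hdis
  rw [hlux] at hyl
  simp only [Finset.mem_insert, Finset.mem_singleton] at hyl
  rcases hyl with rfl | rfl
  · exact absurd (hleaf t htS hyt) htl'
  · exact ⟨t, Finset.mem_erase.mpr ⟨htl', htS⟩, hyt⟩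

lemma IS_erase (hlS : l ∈ S) (hul : u ∈ l)
    (hleaf : ∀ s ∈ S, u ∈ s → s = l) (hlux : l = {u, x})
    (hxcov : ∃ t ∈ S.erase l, x ∈ t) :
    IS (S.erase l) = insert u (IS S) ∧ u ∉ IS S := by
  constructor
  · ext v
    simp only [mem_IS, Finset.mem_insert]
    constructor
    · intro hv
      by_cases hvu : v = u
      · exact Or.inl hvu
      · refine Or.inr (fun s hs hvs => ?_)
        by_cases hsl : s = l
        · subst hsl
          rw [hlux] at hvs
          simp only [Finset.mem_insert, Finset.mem_singleton] at hvs
          rcases hvs with rfl | rfl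
          · exact hvu rfl
          · obtain ⟨t, htE, hxt⟩ := hxcov
            exact hv t htE hxt
        · exact hv s (Finset.mem_erase.mpr ⟨hsl, hs⟩) hvs
    · rintro (rfl | hv)
      · intro s hs hvs
        have := hleaf s (Finset.mem_of_mem_erase hs) hvs
        exact (Finset.mem_erase.mp hs).1 this
      · exact fun s hs => hv s (Finset.mem_of_mem_erase hs)
  · rw [mem_IS]; push_neg; exact ⟨l, hlS, hul⟩

lemma ES_subset_erase (hliso : ¬ IsoIn S l) : ES S ⊆ ES (S.erase l) := by
  intro s hs
  obtain ⟨hsS, hsiso⟩ := mem_ES.mp hs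
  have hsl : s ≠ l := fun h => hliso (h ▸ hsiso)
  rw [mem_ES]
  exact ⟨Finset.mem_erase.mpr ⟨hsl, hsS⟩, fun t ht => hsiso t (Finset.mem_of_mem_erase ht)⟩

lemma new_iso_has_x (hleaf : ∀ s ∈ S, u ∈ s → s = l) (hlux : l = {u, x})
    {μ : Finset (Fin n)} (hμ : μ ∈ ES (S.erase l) \ ES S) : x ∈ μ := by
  obtain ⟨hμE, hμnE⟩ := Finset.mem_sdiff.mp hμ
  obtain ⟨hμe, hμiso⟩ := mem_ES.mp hμE
  have hμS : μ ∈ S := Finset.mem_of_mem_erase hμe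
  have hμnl : μ ≠ l := (Finset.mem_erase.mp hμe).1
  have : ¬ IsoIn S μ := fun h => hμnE (mem_ES.mpr ⟨hμS, h⟩)
  simp only [IsoIn, not_forall] at this
  obtain ⟨t, htS, ht⟩ := this
  push_neg at ht
  obtain ⟨htμ, hdis⟩ := ht
  have htl : t = l := by
    by_contra htl
    rcases hμiso t (Finset.mem_erase.mpr ⟨htl, htS⟩) with h | h
    · exact htμ h
    · exact hdis h
  subst htl
  obtain ⟨y, hyμ, hyt⟩ := Finset.not_disjoint_iff.mp hdis
  rw [hlux] at hyt
  simp only [Finset.mem_insert, Finset.mem_singleton] at hyt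
  rcases hyt with rfl | rfl
  · exact absurd (hleaf μ hμS hyμ) hμnl
  · exact hyμ

lemma new_iso_card (hleaf : ∀ s ∈ S, u ∈ s → s = l) (hlux : l = {u, x}) :
    (ES (S.erase l) \ ES S).card ≤ 1 := by
  rw [Finset.card_le_one]
  intro a ha b hb
  have hxa := new_iso_has_x hleaf hlux ha
  have hxb := new_iso_has_x hleaf hlux hb
  obtain ⟨haE, _⟩ := Finset.mem_sdiff.mp ha
  obtain ⟨hbE, _⟩ := Finset.mem_sdiff.mp hb
  obtain ⟨hae, haiso⟩ := mem_ES.mp haE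
  obtain ⟨hbe, _⟩ := mem_ES.mp hbE
  rcases haiso b hbe with h | h
  · exact h.symm
  · exact absurd h (Finset.not_disjoint_iff.mpr ⟨x, hxa, hxb⟩)

end EraseLemmas

/-- the key counting inequality for independent sets -/
lemma star : ∀ S : Finset (Finset (Fin n)),
    (∀ s ∈ S, s.card = 2) →
    (∀ S' ⊆ S, ∀ l ∈ S', altPstab n ((S'.erase l : Finset (Finset (Fin n))) : Set (Finset (Fin n)))
      ≠ altPstab n (S' : Set (Finset (Fin n)))) →
    S.card + (ES S).card + (IS S).card + (if (RS S).Nonempty then 1 else 0)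
      ≤ n := by
  intro S
  induction S using Finset.strongInductionOn with
  | _ S IH =>
  intro h2 hind
  by_cases hR : (RS S).Nonempty
  · -- there is a non-isolated edge; find a leaf
    obtain ⟨l, hlR, u, hul, hleaf⟩ := exists_leaf h2 (hind S (subset_refl S)) hR
    obtain ⟨hlS, hliso⟩ := mem_RS.mp hlR
    obtain ⟨x, hxl, hxu, hlux⟩ := other_point (h2 l hlS) hul
    have hlux' : l = {u, x} := hlux
    have hxcov : ∃ t ∈ S.erase l, x ∈ t := leaf_other_covered h2 hlS hliso hleaf hlux'
    set S' := S.erase l with hS'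
    have hS'sub : S' ⊂ S := Finset.erase_ssubset hlS
    have h2' : ∀ s ∈ S', s.card = 2 := fun s hs => h2 s (Finset.mem_of_mem_erase hs)
    have hind' : ∀ T ⊆ S', ∀ m ∈ T, altPstab n ((T.erase m : Finset (Finset (Fin n))) : Set (Finset (Fin n)))
        ≠ altPstab n (T : Set (Finset (Fin n))) :=
      fun T hT => hind T (hT.trans hS'sub.subset)
    have hIH := IH S' hS'sub h2' hind'
    have hcard : S.card = S'.card + 1 := (Finset.card_erase_add_one hlS).symm
    obtain ⟨hISeq, huIS⟩ := IS_erase hlS hul hleaf hlux' hxcov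
    have hIScard : (IS S').card = (IS S).card + 1 := by
      rw [hISeq, Finset.card_insert_of_notMem huIS]
    have hESsub : ES S ⊆ ES S' := ES_subset_erase hliso
    have hEScard : (ES S').card = (ES S).card + (ES S' \ ES S).card := by
      rw [← Finset.card_sdiff_add_card_eq_card hESsub]; ring
    have hqle : (ES S' \ ES S).card ≤ 1 := new_iso_card hleaf hlux'
    rw [if_pos hR]
    rcases Nat.le_one_iff_eq_zero_or_eq_one.mp hqle with hq | hq
    · -- no new isolated edge: S' still has a non-isolated edge
      have hq' : ES S' = ES S := by
        apply Finset.Subset.antisymm _ hESsub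
        intro s hs
        by_contra hns
        have : s ∈ ES S' \ ES S := Finset.mem_sdiff.mpr ⟨hs, hns⟩
        rw [Finset.card_eq_zero.mp hq] at this
        exact absurd this (Finset.notMem_empty s)
      have hRS' : (RS S').Nonempty := by
        obtain ⟨t, htE, hxt⟩ := hxcov
        refine ⟨t, mem_RS.mpr ⟨htE, ?_⟩⟩
        intro hiso
        have : t ∈ ES S' := mem_ES.mpr ⟨htE, hiso⟩
        rw [hq'] at this
        obtain ⟨htS, htiso⟩ := mem_ES.mp this
        rcases htiso l hlS with h | h
        · exact (Finset.mem_erase.mp htE).1 h.symm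
        · exact Finset.not_disjoint_iff.mpr ⟨x, hxt, hxl⟩ h
      rw [if_pos hRS'] at hIH
      rw [hq, add_zero] at hEScard
      omega
    · -- one new isolated edge
      have hIH' : S'.card + (ES S').card + (IS S').card ≤ n := by
        rcases ite_eq_or_eq ((RS S').Nonempty) 1 0 with h | h <;> omega
      omega
  · -- all edges isolated
    rw [if_neg hR]
    have hiso : ∀ s ∈ S, IsoIn S s := by
      intro s hs
      by_contra h
      exact hR ⟨s, mem_RS.mpr ⟨hs, h⟩⟩
    have hES : ES S = S := by
      apply Finset.Subset.antisymm (fun s hs => (mem_ES.mp hs).1)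
      intro s hs; exact mem_ES.mpr ⟨hs, hiso s hs⟩
    have hdisj : ∀ s ∈ S, ∀ t ∈ S, s ≠ t → Disjoint (id s) (id t) := by
      intro s hs t ht hst
      rcases hiso s hs t ht with h | h
      · exact absurd h.symm hst
      · simpa using h
    have hcov : (cov S).card = 2 * S.card := by
      rw [cov, Finset.card_biUnion hdisj]
      have hsum : ∑ u ∈ S, (id u).card = ∑ _u ∈ S, 2 :=
        Finset.sum_congr rfl (fun s hs => h2 s hs)
      rw [hsum, Finset.sum_const, smul_eq_mul, mul_comm]
    have hcovle : (cov S).card ≤ n := by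
      have := Finset.card_le_univ (cov S)
      simpa using this
    have hIScard : (IS S).card = n - (cov S).card := by
      rw [IS, Finset.card_compl, Fintype.card_fin]
    rw [hES]
    omega

lemma ES_eq_self {S : Finset (Finset (Fin n))} (hR : ¬ (RS S).Nonempty) : ES S = S := by
  apply Finset.Subset.antisymm (fun s hs => (mem_ES.mp hs).1)
  intro s hs
  refine mem_ES.mpr ⟨hs, ?_⟩
  by_contra h
  exact hR ⟨s, mem_RS.mpr ⟨hs, h⟩⟩

lemma hered {Λ : Set (Finset (Fin n))}
    (hind : ∀ Δ ⊂ Λ, altPstab n Δ ≠ altPstab n Λ)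
    {S' : Finset (Finset (Fin n))} (hsub : ↑S' ⊆ Λ) :
    ∀ l ∈ S', altPstab n ((S'.erase l : Finset (Finset (Fin n))) : Set (Finset (Fin n)))
      ≠ altPstab n (S' : Set (Finset (Fin n))) := by
  intro l hl heq
  set Δ : Set (Finset (Fin n)) := ↑(S'.erase l) ∪ (Λ \ ↑S') with hΔdef
  have hΔsub : Δ ⊆ Λ := by
    apply Set.union_subset
    · exact (Finset.coe_subset.mpr (Finset.erase_subset l S')).trans hsub
    · exact Set.diff_subset
  have hlΔ : l ∉ Δ := by
    rw [hΔdef]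
    rintro (h | h)
    · exact absurd rfl (Finset.mem_erase.mp (Finset.mem_coe.mp h)).1
    · exact h.2 (Finset.mem_coe.mpr hl)
  have hlΛ : l ∈ Λ := hsub (Finset.mem_coe.mpr hl)
  have hΔss : Δ ⊂ Λ := ⟨hΔsub, fun hsup => hlΔ (hsup hlΛ)⟩
  apply hind Δ hΔss
  calc altPstab n Δ = altPstab n ↑(S'.erase l) ⊓ altPstab n (Λ \ ↑S') := altPstab_union _ _
  _ = altPstab n ↑S' ⊓ altPstab n (Λ \ ↑S') := by rw [heq]
  _ = altPstab n (↑S' ∪ (Λ \ ↑S')) := (altPstab_union _ _).symm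
  _ = altPstab n Λ := by rw [Set.union_diff_cancel hsub]

/-- The upper bound: an independent set has size at most `n - 3`. -/
lemma upper (hn : 5 ≤ n) (Λ : Set (Finset (Fin n))) (h2 : ∀ s ∈ Λ, s.card = 2)
    (hind : ∀ Δ ⊂ Λ, altPstab n Δ ≠ altPstab n Λ) : Λ.ncard ≤ n - 3 := by
  have hfin : Λ.Finite := Set.toFinite Λ
  set S := hfin.toFinset with hSdef
  have hScoe : (S : Set (Finset (Fin n))) = Λ := hfin.coe_toFinset
  have hncard : Λ.ncard = S.card := by rw [← hScoe, Set.ncard_coe_finset]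
  have h2' : ∀ s ∈ S, s.card = 2 := fun s hs => h2 s (hfin.mem_toFinset.mp hs)
  have hindS : ∀ S' ⊆ S, ∀ l ∈ S',
      altPstab n ((S'.erase l : Finset (Finset (Fin n))) : Set (Finset (Fin n)))
        ≠ altPstab n (S' : Set (Finset (Fin n))) := by
    intro S' hS'
    exact hered hind ((Finset.coe_subset.mpr hS').trans (le_of_eq hScoe))
  have hstar := star S h2' hindS
  rw [hncard]
  by_cases hR : (RS S).Nonempty
  swap
  · -- all edges isolated
    rw [if_neg hR] at hstar
    have hES : ES S = S := ES_eq_self hR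
    rw [hES] at hstar
    omega
  · rw [if_pos hR] at hstar
    by_cases hei : 2 ≤ (ES S).card + (IS S).card
    · omega
    · -- degenerate low states
      -- common leaf data
      obtain ⟨l, hlR, u, hul, hleaf⟩ := exists_leaf h2' (hindS S (subset_refl S)) hR
      obtain ⟨hlS, hliso⟩ := mem_RS.mp hlR
      obtain ⟨x, hxl, hxu, hlux⟩ := other_point (h2' l hlS) hul
      have hxcov := leaf_other_covered h2' hlS hliso hleaf hlux
      obtain ⟨hISeq, huIS⟩ := IS_erase hlS hul hleaf hlux hxcov
      have h2'' : ∀ s ∈ S.erase l, s.card = 2 := fun s hs => h2' s (Finset.mem_of_mem_erase hs)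
      have hIS'card : (IS (S.erase l)).card = (IS S).card + 1 := by
        rw [hISeq, Finset.card_insert_of_notMem huIS]
      have hcontra : altPstab n ((S.erase l : Finset (Finset (Fin n))) : Set (Finset (Fin n))) = ⊥ →
          False := by
        intro hbot
        apply hindS S (subset_refl S) l hlS
        have h1 : altPstab n (S : Set (Finset (Fin n))) ≤
            altPstab n ((S.erase l : Finset (Finset (Fin n))) : Set (Finset (Fin n))) :=
          altPstab_mono (Finset.coe_subset.mpr (Finset.erase_subset l S))
        rw [hbot] at h1 ⊢
        exact (le_bot_iff.mp h1).symm
      have hqle := new_iso_card hleaf hlux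
      -- case on (e, i)
      rcases Nat.lt_or_ge (ES S).card 1 with he0 | he1
      · -- e = 0
        have hES0 : ES S = ∅ := Finset.card_eq_zero.mp (by omega)
        have hES'card : (ES (S.erase l)).card ≤ 1 := by
          rw [hES0, Finset.sdiff_empty] at hqle
          exact hqle
        rcases Nat.lt_or_ge (IS S).card 1 with hi0 | hi1
        · -- (0,0)
          exact absurd (altPstab_bot_B h2'' hES'card (by omega)) (fun h => hcontra h)
        · -- (0,1) : i = 1 since e + i ≤ 1
          have hi1' : (IS S).card = 1 := by omega
          rcases Nat.lt_or_ge (ES (S.erase l)).card 1 with hq0 | hq1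
          · exact absurd (altPstab_bot_A h2'' (Finset.card_eq_zero.mp (by omega)) (by omega))
              (fun h => hcontra h)
          · -- one new isolated edge: use star on S.erase l
            have hind'' : ∀ T ⊆ S.erase l, ∀ m ∈ T,
                altPstab n ((T.erase m : Finset (Finset (Fin n))) : Set (Finset (Fin n)))
                  ≠ altPstab n (T : Set (Finset (Fin n))) :=
              fun T hT => hindS T (hT.trans (Finset.erase_subset l S))
            have hstar' := star (S.erase l) h2'' hind''
            have hcard : S.card = (S.erase l).card + 1 := (Finset.card_erase_add_one hlS).symm
            by_cases hRS' : (RS (S.erase l)).Nonempty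
            · rw [if_pos hRS'] at hstar'
              omega
            · rw [if_neg hRS'] at hstar'
              have hESeq : ES (S.erase l) = S.erase l := ES_eq_self hRS'
              have : (ES (S.erase l)).card = (S.erase l).card := by rw [hESeq]
              have hq1' : (ES (S.erase l)).card ≤ 1 := by
                rw [hES0, Finset.sdiff_empty] at hqle
                exact hqle
              omega
      · -- e = 1, i = 0
        have he1' : (ES S).card = 1 := by omega
        have hi0 : (IS S).card = 0 := by omega
        obtain ⟨ν, hνeq⟩ := Finset.card_eq_one.mp he1'
        have hνES : ν ∈ ES S := by rw [hνeq]; exact Finset.mem_singleton_self ν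
        obtain ⟨hνS, hνiso⟩ := mem_ES.mp hνES
        have hES' : ES (S.erase ν) = ∅ := by
          rw [Finset.eq_empty_iff_forall_notMem]
          intro μ hμ
          obtain ⟨hμe, hμiso⟩ := mem_ES.mp hμ
          have hμS : μ ∈ S := Finset.mem_of_mem_erase hμe
          have hμν : μ ≠ ν := (Finset.mem_erase.mp hμe).1
          have : μ ∈ ES S := by
            refine mem_ES.mpr ⟨hμS, ?_⟩
            intro t htS
            by_cases htν : t = ν
            · subst htν
              rcases hνiso μ hμS with h | h
              · exact Or.inl h.symm
              · exact Or.inr h.symm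
            · exact hμiso t (Finset.mem_erase.mpr ⟨htν, htS⟩)
          rw [hνeq] at this
          exact hμν (Finset.mem_singleton.mp this)
        have hIS' : IS (S.erase ν) = ν := by
          ext v
          rw [mem_IS]
          constructor
          · intro hv
            by_contra hvν
            have : v ∈ IS S := by
              rw [mem_IS]
              intro s hs hvs
              by_cases hsν : s = ν
              · exact hvν (hsν ▸ hvs)
              · exact hv s (Finset.mem_erase.mpr ⟨hsν, hs⟩) hvs
            rw [Finset.card_eq_zero.mp hi0] at this
            exact absurd this (Finset.notMem_empty v)
          · intro hvν s hs hvs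
            obtain ⟨hsν, hsS⟩ := Finset.mem_erase.mp hs
            rcases hνiso s hsS with h | h
            · exact hsν h
            · exact Finset.disjoint_left.mp h hvν hvs
        have h2ν : ∀ s ∈ S.erase ν, s.card = 2 := fun s hs => h2' s (Finset.mem_of_mem_erase hs)
        have hbot : altPstab n ((S.erase ν : Finset (Finset (Fin n))) : Set (Finset (Fin n))) = ⊥ :=
          altPstab_bot_A h2ν hES' (by rw [hIS', h2' ν hνS])
        exfalso
        apply hindS S (subset_refl S) ν hνS
        have h1 : altPstab n (S : Set (Finset (Fin n))) ≤
            altPstab n ((S.erase ν : Finset (Finset (Fin n))) : Set (Finset (Fin n))) :=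
          altPstab_mono (Finset.coe_subset.mpr (Finset.erase_subset ν S))
        rw [hbot] at h1 ⊢
        exact (le_bot_iff.mp h1).symm


lemma existence {n : ℕ} (hn : 5 ≤ n) : ∃ Λ : Set (Finset (Fin n)),
    (∀ s ∈ Λ, s.card = 2) ∧ altPstab n Λ = ⊥ ∧
    (∀ Δ : Set (Finset (Fin n)), Δ ⊂ Λ → altPstab n Δ ≠ ⊥) ∧ Λ.ncard = n - 3 := by
  have h0n : 0 < n := by omega
  obtain ⟨hub, hhubv⟩ : ∃ v : Fin n, v.1 = 0 := ⟨⟨0, h0n⟩, rfl⟩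
  obtain ⟨N2, hN2v⟩ : ∃ v : Fin n, v.1 = n - 2 := ⟨⟨n - 2, by omega⟩, rfl⟩
  obtain ⟨N1, hN1v⟩ : ∃ v : Fin n, v.1 = n - 1 := ⟨⟨n - 1, by omega⟩, rfl⟩
  obtain ⟨sp, hspv⟩ : ∃ sp : Fin (n - 3) → Fin n, ∀ k, (sp k).1 = k.1 + 1 :=
    ⟨fun k => ⟨k.1 + 1, by have := k.2; omega⟩, fun _ => rfl⟩
  obtain ⟨f, hfdef⟩ : ∃ f : Fin (n - 3) → Finset (Fin n), ∀ k, f k = {hub, sp k} :=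
    ⟨_, fun _ => rfl⟩
  have hspne : ∀ k, hub ≠ sp k := by
    intro k h
    have := congrArg Fin.val h
    rw [hhubv, hspv] at this
    omega
  have hhub_mem : ∀ k, hub ∈ f k := by intro k; rw [hfdef]; simp
  have hsp_mem : ∀ k, sp k ∈ f k := by intro k; rw [hfdef]; simp
  have h2f : ∀ k, (f k).card = 2 := by
    intro k; rw [hfdef]; exact Finset.card_pair (hspne k)
  have hspinj : ∀ j k : Fin (n - 3), sp j = sp k → j = k := by
    intro j k h
    have := congrArg Fin.val h
    rw [hspv, hspv] at this
    exact Fin.ext (by omega)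
  have hinj : Function.Injective f := by
    intro a b hab
    have hmm : sp a ∈ f b := by rw [← hab]; exact hsp_mem a
    rw [hfdef] at hmm
    simp only [Finset.mem_insert, Finset.mem_singleton] at hmm
    rcases hmm with h | h
    · exact absurd h.symm (hspne a)
    · exact hspinj a b h
  obtain ⟨S₀, hmemS₀, hcardS₀⟩ : ∃ S₀ : Finset (Finset (Fin n)),
      (∀ s, s ∈ S₀ ↔ ∃ k, f k = s) ∧ S₀.card = n - 3 := by
    refine ⟨Finset.image f Finset.univ, fun s => ?_, ?_⟩
    · simp
    · rw [Finset.card_image_of_injective _ hinj, Finset.card_univ, Fintype.card_fin]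
  refine ⟨(S₀ : Set (Finset (Fin n))), ?_, ?_, ?_, ?_⟩
  · intro s hs
    obtain ⟨k, rfl⟩ := (hmemS₀ s).mp (Finset.mem_coe.mp hs)
    exact h2f k
  · -- the base property
    rw [Subgroup.eq_bot_iff_forall]
    intro g hg
    rw [mem_altPstab_iff] at hg
    obtain ⟨hsgn, hfix⟩ := hg
    have hfix' : ∀ k, g • f k = f k := by
      intro k
      exact hfix (f k) (Finset.mem_coe.mpr ((hmemS₀ (f k)).mpr ⟨k, rfl⟩))
    have hk0 : (0 : ℕ) < n - 3 := by omega
    have hk1 : (1 : ℕ) < n - 3 := by omega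
    have hne01 : f ⟨0, hk0⟩ ≠ f ⟨1, hk1⟩ := by
      intro h
      have h2 := hinj h
      simp only [Fin.mk.injEq] at h2
      omega
    have hg0 : g hub = hub :=
      fix_inter (h2f _) (h2f _) hne01 (hhub_mem _) (hhub_mem _) (hfix' ⟨0, hk0⟩) (hfix' ⟨1, hk1⟩)
    have hgspoke : ∀ k, g (sp k) = sp k := by
      intro k
      exact fix_of_mem_fix (h2f k) (hfix' k) (hhub_mem k) hg0 _ (hsp_mem k)
    apply even_small hsgn ({N2, N1} : Finset (Fin n))
    · apply le_of_eq
      apply Finset.card_pair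
      intro h
      have := congrArg Fin.val h
      rw [hN2v, hN1v] at this
      omega
    · intro v hv
      by_contra hvmem
      simp only [Finset.mem_insert, Finset.mem_singleton] at hvmem
      push_neg at hvmem
      have hv0 : v ≠ hub := fun h => hv (by rw [h, hg0])
      have hval : 1 ≤ v.1 ∧ v.1 ≤ n - 3 := by
        have h1 : v.1 ≠ 0 := fun h => hv0 (Fin.ext (by rw [h, hhubv]))
        have h2 : v.1 ≠ n - 2 := fun h => hvmem.1 (Fin.ext (by rw [h, hN2v]))
        have h3 : v.1 ≠ n - 1 := fun h => hvmem.2 (Fin.ext (by rw [h, hN1v]))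
        have := v.2
        omega
      have hkv : v = sp ⟨v.1 - 1, by omega⟩ := Fin.ext (by rw [hspv]; simp; omega)
      apply hv
      rw [hkv]
      exact hgspoke ⟨v.1 - 1, by omega⟩
  · -- minimality
    intro Δ hΔ hbot
    obtain ⟨s, hsS, hsΔ⟩ := Set.exists_of_ssubset hΔ
    obtain ⟨k, rfl⟩ := (hmemS₀ s).mp (Finset.mem_coe.mp hsS)
    have hk2 := k.2
    have hkvN2 : sp k ≠ N2 := by
      intro h; have := congrArg Fin.val h; rw [hspv, hN2v] at this; omega
    have hkvN1 : sp k ≠ N1 := by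
      intro h; have := congrArg Fin.val h; rw [hspv, hN1v] at this; omega
    have hN2N1 : N2 ≠ N1 := by
      intro h; have := congrArg Fin.val h; rw [hN2v, hN1v] at this; omega
    obtain ⟨c, hcdef⟩ : ∃ c : Equiv.Perm (Fin n), c = Equiv.swap (sp k) N2 * Equiv.swap N2 N1 :=
      ⟨_, rfl⟩
    have hsgn : Equiv.Perm.sign c = 1 := by
      rw [hcdef, Equiv.Perm.sign_mul, Equiv.Perm.sign_swap hkvN2, Equiv.Perm.sign_swap hN2N1]
      norm_num
    have hcN1 : c N1 = sp k := by
      rw [hcdef]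
      simp only [Equiv.Perm.mul_apply]
      rw [Equiv.swap_apply_right, Equiv.swap_apply_right]
    have hc1 : c ≠ 1 := by
      intro h
      rw [h] at hcN1
      simp only [Equiv.Perm.one_apply] at hcN1
      exact hkvN1 hcN1.symm
    have hmem : c ∈ altPstab n Δ := by
      rw [mem_altPstab_iff]
      refine ⟨hsgn, ?_⟩
      intro t ht
      have htS : t ∈ (S₀ : Set (Finset (Fin n))) := hΔ.subset ht
      obtain ⟨j, rfl⟩ := (hmemS₀ t).mp (Finset.mem_coe.mp htS)
      have hj2 := j.2
      have hjk : j ≠ k := by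
        intro h; subst h; exact hsΔ ht
      have hjkval : (sp j).1 ≠ (sp k).1 := by
        rw [hspv, hspv]
        intro h
        exact hjk (Fin.ext (by omega))
      have hd1 : hub ≠ N2 := by
        intro h; have := congrArg Fin.val h; rw [hhubv, hN2v] at this; omega
      have hd2 : hub ≠ N1 := by
        intro h; have := congrArg Fin.val h; rw [hhubv, hN1v] at this; omega
      have hjN2 : sp j ≠ N2 := by
        intro h; have := congrArg Fin.val h; rw [hspv, hN2v] at this; omega
      have hjN1 : sp j ≠ N1 := by
        intro h; have := congrArg Fin.val h; rw [hspv, hN1v] at this; omega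
      have hjsp : sp j ≠ sp k := fun h => hjk (hspinj j k h)
      have hchub : c hub = hub := by
        rw [hcdef]
        simp only [Equiv.Perm.mul_apply]
        rw [Equiv.swap_apply_of_ne_of_ne hd1 hd2, Equiv.swap_apply_of_ne_of_ne (hspne k) hd1]
      have hcjv : c (sp j) = sp j := by
        rw [hcdef]
        simp only [Equiv.Perm.mul_apply]
        rw [Equiv.swap_apply_of_ne_of_ne hjN2 hjN1, Equiv.swap_apply_of_ne_of_ne hjsp hjN2]
      show c • f j = f j
      rw [hfdef, smul_pair, hchub, hcjv]
    rw [hbot] at hmem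
    exact hc1 (Subgroup.mem_bot.mp hmem)
  · rw [Set.ncard_coe_finset, hcardS₀]


end AnAux

/-- For `n ≥ 5`, `B(Aₙ, Ω₂) = H(Aₙ, Ω₂) = n - 3`: every minimal base and every
independent set of 2-subsets (for `Aₙ`) has size at most `n - 3`, and there exist a
minimal base and an independent set of size exactly `n - 3`. -/
theorem B_and_H_An_on_2sets {n : ℕ} (hn : 5 ≤ n) :
    (∀ Λ : Set (Finset (Fin n)), (∀ s ∈ Λ, s.card = 2) →
      altPstab n Λ = ⊥ →
      (∀ Δ : Set (Finset (Fin n)), Δ ⊂ Λ → altPstab n Δ ≠ ⊥) →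
      Λ.ncard ≤ n - 3) ∧
    (∃ Λ : Set (Finset (Fin n)), (∀ s ∈ Λ, s.card = 2) ∧
      altPstab n Λ = ⊥ ∧
      (∀ Δ : Set (Finset (Fin n)), Δ ⊂ Λ → altPstab n Δ ≠ ⊥) ∧
      Λ.ncard = n - 3) ∧
    (∀ Λ : Set (Finset (Fin n)), (∀ s ∈ Λ, s.card = 2) →
      (∀ Δ : Set (Finset (Fin n)), Δ ⊂ Λ → altPstab n Δ ≠ altPstab n Λ) →
      Λ.ncard ≤ n - 3) ∧
    (∃ Λ : Set (Finset (Fin n)), (∀ s ∈ Λ, s.card = 2) ∧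
      (∀ Δ : Set (Finset (Fin n)), Δ ⊂ Λ → altPstab n Δ ≠ altPstab n Λ) ∧
      Λ.ncard = n - 3) := by
  obtain ⟨Λ₀, hc2, hbot, hmin, hcard⟩ := AnAux.existence hn
  refine ⟨fun Λ h2 hb hm => AnAux.upper hn Λ h2 (fun Δ hΔ => by rw [hb]; exact hm Δ hΔ),
    ⟨Λ₀, hc2, hbot, hmin, hcard⟩,
    fun Λ h2 hind => AnAux.upper hn Λ h2 hind,
    ⟨Λ₀, hc2, fun Δ hΔ => by rw [hbot]; exact hmin Δ hΔ, hcard⟩⟩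
end
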